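/- arXiv:0710.0772 — 7 statements merged into one kernel-verified Lean document; each statement's English description precedes it below -/
import Mathlib

section
/- Let $2 \leq \gamma < 3$ and let $F : \mathbb{R}^n \to \mathbb{R}$ be twice differentiable with $|DF| \le M$, $|D^2F| \le M$, and $|D^2F(x) - D^2F(y)| \le M|x-y|^{\gamma-2}$ for all $x,y$. Suppose $a,b,c,d \in \mathbb{R}^n$ with $\lambda \le 1$ satisfy $|a-b| < \lambda$, $|c-d| < \lambda$, $|a-c| < \epsilon$ and $|a-b-c+d| < \sigma$. Then $|F(b)-F(a)-DF(a)(b-a)-F(d)+F(c)+DF(c)(d-c)| \le C\lambda(\lambda^{\gamma-2}\epsilon + \sigma)$, where $C$ is a constant depending only on $M$, $n$, and $\gamma$. -/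
/-!
With `h = b - a` and `k = d - c` the four-point expression is `[G a - G c] + [H h - H k]`, where
`G y = F (y + h) - F y - DF y h` and `H u = F (c + u) - DF c u`. By symmetry of `D²F`,
`DG y = DF (y + h) - DF y - D²F y h`, which the Hölder bound on `D²F` makes `O(‖h‖ ^ (γ - 1))`,
while `DH u = DF (c + u) - DF c` is `O(λ)` on the ball of radius `λ`. Two applications of the
mean value inequality finish the proof.
-/

open Metric

section FourPoint

variable {E G : Type*} [NormedAddCommGroup E] [NormedSpace ℝ E]
  [NormedAddCommGroup G] [NormedSpace ℝ G]

theorem norm_sub_sub_fderiv_le_of_holder {g : E → G} (hg : Differentiable ℝ g) {M α : ℝ}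
    (hM : 0 ≤ M) (hα : 0 ≤ α)
    (hHol : ∀ x y, ‖fderiv ℝ g x - fderiv ℝ g y‖ ≤ M * ‖x - y‖ ^ α) (x h : E) :
    ‖g (x + h) - g x - fderiv ℝ g x h‖ ≤ M * ‖h‖ ^ α * ‖h‖ := by
  have bound : ∀ y ∈ closedBall x ‖h‖, ‖fderiv ℝ g y - fderiv ℝ g x‖ ≤ M * ‖h‖ ^ α :=
    fun y hy => (hHol y x).trans <| by
      gcongr
      exact mem_closedBall_iff_norm.mp hy
  have hxh : x + h ∈ closedBall x ‖h‖ := mem_closedBall_iff_norm.mpr (by rw [add_sub_cancel_left])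
  simpa only [add_sub_cancel_left] using
    (convex_closedBall x ‖h‖).norm_image_sub_le_of_norm_fderiv_le' (fun y _ => hg y) bound
      (mem_closedBall_self (norm_nonneg h)) hxh

theorem norm_sub_sub_fderiv_le_of_norm_le {f : E → G} (hf : Differentiable ℝ f)
    {M : ℝ} (hM : 0 ≤ M) (hLip : ∀ x y, ‖fderiv ℝ f x - fderiv ℝ f y‖ ≤ M * ‖x - y‖)
    (c : E) {h k : E} {r : ℝ} (hh : ‖h‖ ≤ r) (hk : ‖k‖ ≤ r) :
    ‖f (c + h) - f (c + k) - fderiv ℝ f c (h - k)‖ ≤ M * r * ‖h - k‖ := by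
  have bound : ∀ x ∈ closedBall c r, ‖fderiv ℝ f x - fderiv ℝ f c‖ ≤ M * r :=
    fun x hx => (hLip x c).trans <| by
      gcongr
      exact mem_closedBall_iff_norm.mp hx
  have hmem : ∀ {u : E}, ‖u‖ ≤ r → c + u ∈ closedBall c r := fun hu =>
    mem_closedBall_iff_norm.mpr (by rwa [add_sub_cancel_left])
  simpa only [add_sub_add_left_eq_sub] using
    (convex_closedBall c r).norm_image_sub_le_of_norm_fderiv_le' (fun x _ => hf x) bound
      (hmem hk) (hmem hh)

theorem hasFDerivAt_sub_sub_fderiv_apply {f : E → G} (hf : Differentiable ℝ f)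
    (hf' : Differentiable ℝ (fderiv ℝ f)) (h y : E) :
    HasFDerivAt (fun x => f (x + h) - f x - fderiv ℝ f x h)
      (fderiv ℝ f (y + h) - fderiv ℝ f y - fderiv ℝ (fderiv ℝ f) y h) y := by
  have hsymm : (ContinuousLinearMap.apply ℝ G h).comp (fderiv ℝ (fderiv ℝ f) y) =
      fderiv ℝ (fderiv ℝ f) y h := by
    ext v
    exact second_derivative_symmetric (fun x => (hf x).hasFDerivAt) (hf' y).hasFDerivAt v h
  have happly := (ContinuousLinearMap.apply ℝ G h).hasFDerivAt.comp y (hf' y).hasFDerivAt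
  rw [hsymm] at happly
  have hshift : HasFDerivAt (fun x => f (x + h)) (fderiv ℝ f (y + h)) y :=
    (hasFDerivAt_comp_add_right h).mpr (hf (y + h)).hasFDerivAt
  exact (hshift.sub (hf y).hasFDerivAt).sub happly

theorem norm_sub_sub_fderiv_apply_sub_le {f : E → G} (hf : Differentiable ℝ f)
    (hf' : Differentiable ℝ (fderiv ℝ f)) {M α : ℝ} (hM : 0 ≤ M) (hα : 0 ≤ α)
    (hHol : ∀ x y, ‖fderiv ℝ (fderiv ℝ f) x - fderiv ℝ (fderiv ℝ f) y‖ ≤ M * ‖x - y‖ ^ α)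
    (h a c : E) :
    ‖(f (a + h) - f a - fderiv ℝ f a h) - (f (c + h) - f c - fderiv ℝ f c h)‖
      ≤ M * ‖h‖ ^ α * ‖h‖ * ‖a - c‖ :=
  convex_univ.norm_image_sub_le_of_norm_hasFDerivWithin_le
    (fun y _ => (hasFDerivAt_sub_sub_fderiv_apply hf hf' h y).hasFDerivWithinAt)
    (fun y _ => norm_sub_sub_fderiv_le_of_holder hf' hM hα hHol y h) (Set.mem_univ c)
    (Set.mem_univ a)

theorem norm_four_point_le {f : E → G} (hf : Differentiable ℝ f)
    (hf' : Differentiable ℝ (fderiv ℝ f)) {M α r : ℝ} (hM : 0 ≤ M) (hα : 0 ≤ α)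
    (hD2 : ∀ x, ‖fderiv ℝ (fderiv ℝ f) x‖ ≤ M)
    (hHol : ∀ x y, ‖fderiv ℝ (fderiv ℝ f) x - fderiv ℝ (fderiv ℝ f) y‖ ≤ M * ‖x - y‖ ^ α)
    {a b c d : E} (hab : ‖b - a‖ ≤ r) (hcd : ‖d - c‖ ≤ r) :
    ‖f b - f a - fderiv ℝ f a (b - a) - f d + f c + fderiv ℝ f c (d - c)‖
      ≤ M * ‖b - a‖ ^ α * ‖b - a‖ * ‖a - c‖ + M * r * ‖a - b - c + d‖ := by
  have hLip : ∀ x y, ‖fderiv ℝ f x - fderiv ℝ f y‖ ≤ M * ‖x - y‖ := fun x y =>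
    convex_univ.norm_image_sub_le_of_norm_fderiv_le (fun z _ => hf' z) (fun z _ => hD2 z)
      (Set.mem_univ y) (Set.mem_univ x)
  have hbase := norm_sub_sub_fderiv_apply_sub_le hf hf' hM hα hHol (b - a) a c
  have hball := norm_sub_sub_fderiv_le_of_norm_le hf hM hLip c hab hcd
  have hcross : ‖b - a - (d - c)‖ = ‖a - b - c + d‖ := by
    rw [← norm_neg]
    congr 1
    abel
  rw [add_sub_cancel] at hbase hball
  rw [hcross] at hball
  refine Eq.trans_le ?_ ((norm_add_le _ _).trans (add_le_add hbase hball))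
  rw [map_sub (fderiv ℝ f c) (b - a) (d - c)]
  congr 1
  abel

end FourPoint

theorem four_point_estimate_C_gamma_lt_three_general (n : ℕ) (γ M : ℝ)
    (hγ₁ : 2 ≤ γ) (hM : 0 < M) :
    ∃ C > 0, ∀ F : EuclideanSpace ℝ (Fin n) → ℝ,
      Differentiable ℝ F →
      Differentiable ℝ (fderiv ℝ F) →
      (∀ x, ‖fderiv ℝ F x‖ ≤ M) →
      (∀ x, ‖fderiv ℝ (fderiv ℝ F) x‖ ≤ M) →
      (∀ x y, ‖fderiv ℝ (fderiv ℝ F) x - fderiv ℝ (fderiv ℝ F) y‖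
        ≤ M * ‖x - y‖ ^ (γ - 2)) →
      ∀ (a b c d : EuclideanSpace ℝ (Fin n)) (lam ε σ : ℝ),
        lam ≤ 1 →
        ‖a - b‖ < lam → ‖c - d‖ < lam → ‖a - c‖ < ε → ‖a - b - c + d‖ < σ →
        |F b - F a - fderiv ℝ F a (b - a) - F d + F c + fderiv ℝ F c (d - c)|
          ≤ C * lam * (lam ^ (γ - 2) * ε + σ) := by
  refine ⟨M, hM, fun F hF hF' _ hD2 hHol a b c d lam ε σ _ hab hcd hac hσ => ?_⟩
  have hα : 0 ≤ γ - 2 := by linarith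
  have hba : ‖b - a‖ ≤ lam := norm_sub_rev a b ▸ hab.le
  have hdc : ‖d - c‖ ≤ lam := norm_sub_rev c d ▸ hcd.le
  rw [← Real.norm_eq_abs]
  refine (norm_four_point_le hF hF' hM.le hα hD2 hHol hba hdc).trans ?_
  have hlam : 0 ≤ lam := (norm_nonneg _).trans hba
  have hpow : ‖b - a‖ ^ (γ - 2) ≤ lam ^ (γ - 2) := by gcongr
  have hpow_nonneg : 0 ≤ lam ^ (γ - 2) := Real.rpow_nonneg hlam _
  calc _ ≤ M * lam ^ (γ - 2) * lam * ε + M * lam * σ := by gcongr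
    _ = M * lam * (lam ^ (γ - 2) * ε + σ) := by ring

/-- Lemma 3(b) of the paper: four-point difference estimate for `C^γ` functions,
`2 ≤ γ < 3`.  If `F` is twice differentiable with `|DF| ≤ M`, `|D²F| ≤ M` and `D²F`
globally Hölder of exponent `γ-2` with constant `M`, `λ ≤ 1`, and `|a-b| < λ`,
`|c-d| < λ`, `|a-c| < ε`, `|a-b-c+d| < σ`, then
`|F(b)-F(a)-DF(a)(b-a)-F(d)+F(c)+DF(c)(d-c)| ≤ Cλ(λ^{γ-2}ε + σ)` with `C` depending
only on `n`, `γ` and `M`. -/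
theorem four_point_estimate_C_gamma_lt_three (n : ℕ) (γ M : ℝ)
    (hγ₁ : 2 ≤ γ) (hγ₂ : γ < 3) (hM : 0 < M) :
    ∃ C > 0, ∀ F : EuclideanSpace ℝ (Fin n) → ℝ,
      Differentiable ℝ F →
      Differentiable ℝ (fderiv ℝ F) →
      (∀ x, ‖fderiv ℝ F x‖ ≤ M) →
      (∀ x, ‖fderiv ℝ (fderiv ℝ F) x‖ ≤ M) →
      (∀ x y, ‖fderiv ℝ (fderiv ℝ F) x - fderiv ℝ (fderiv ℝ F) y‖
        ≤ M * ‖x - y‖ ^ (γ - 2)) →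
      ∀ (a b c d : EuclideanSpace ℝ (Fin n)) (lam ε σ : ℝ),
        lam ≤ 1 →
        ‖a - b‖ < lam → ‖c - d‖ < lam → ‖a - c‖ < ε → ‖a - b - c + d‖ < σ →
        |F b - F a - fderiv ℝ F a (b - a) - F d + F c + fderiv ℝ F c (d - c)|
          ≤ C * lam * (lam ^ (γ - 2) * ε + σ) :=
  four_point_estimate_C_gamma_lt_three_general n γ M hγ₁ hM
end

section
/- Suppose $\frac{1}{2} < \alpha < 1$. Then there exist positive constants $c_1$ and $c_2$ and a function $u : [0,1] \to \mathbb{R}^2$ such that $c_1|s-t|^\alpha \leq |u(s)-u(t)| \leq c_2|s-t|^\alpha$ for all $s, t \in [0,1]$. -/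
/-!
Take `a = 1/2 + y i` with `‖a‖ = 2^(-α)`, i.e. `y² = 4^(-α) - 1/4 ∈ (0, 1/4)`, and let `u` be the
Koch–Peano curve of de Rham, the solution of `u t = d₀ (u (2t))` on `[0, 1/2]` and
`u t = d₁ (u (2t - 1))` on `(1/2, 1]` for the similarities `d₀ z = a · conj z` and
`d₁ z = a + conj (a · z)` of ratio `2^(-α)`, which map the triangle with vertices `0`, `1`, `a` into
itself. Because of the ratio, a bound `c₁ x^α ≤ ‖u t - u s‖ ≤ c₂ x^α` (with `x = t - s`) for a pair
in one half follows from the same bound for the doubled pair, so induction on the dyadic scale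
leaves only pairs `s ≤ 1/2 < t`. The images of the two halves lie in cones with vertex `a`, opening
to the left and to the right, of slope `1/2 - 2y² > 0` (this is where `α > 1/2` enters); hence
`‖u t - u s‖` is comparable to `‖u t - a‖ + ‖a - u s‖`, and these two distances are bounds of the
same kind for pairs with an endpoint at `0` or `1`, proved by the same induction.
-/

open Complex ComplexConjugate Filter Set Topology

noncomputable section

theorem dyadic_pair_induction {P : ℝ → ℝ → Prop}
    (cross : ∀ s t, 0 ≤ s → s ≤ 1 / 2 → 1 / 2 < t → t ≤ 1 → P s t)
    (left : ∀ s t, 0 ≤ s → s < t → t ≤ 1 / 2 → P (2 * s) (2 * t) → P s t)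
    (right : ∀ s t, 1 / 2 < s → s < t → t ≤ 1 → P (2 * s - 1) (2 * t - 1) → P s t)
    {s t : ℝ} (hs : 0 ≤ s) (hst : s < t) (ht : t ≤ 1) : P s t := by
  obtain ⟨n, hn⟩ := exists_pow_lt_of_lt_one (sub_pos.2 hst) (by norm_num : (1 / 2 : ℝ) < 1)
  induction n generalizing s t with
  | zero => rw [pow_zero] at hn; linarith
  | succ n ih =>
    rw [pow_succ] at hn
    rcases le_or_gt t (1 / 2) with ht' | ht'
    · exact left s t hs hst ht' (ih (by linarith) (by linarith) (by linarith) (by linarith))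
    rcases le_or_gt s (1 / 2) with hs' | hs'
    · exact cross s t hs hs' ht' ht
    · exact right s t hs' hst ht (ih (by linarith) (by linarith) (by linarith) (by linarith))

def HolderBounds (α c₁ c₂ d x : ℝ) : Prop := c₁ * x ^ α ≤ d ∧ d ≤ c₂ * x ^ α

namespace HolderBounds

variable {α c₁ c₂ d x : ℝ}

lemma zero (hα : α ≠ 0) : HolderBounds α c₁ c₂ 0 0 := by
  simp [HolderBounds, Real.zero_rpow hα]

lemma of_mem_Icc (hα₀ : 0 < α) (hα₁ : α ≤ 1) (hx : x ∈ Icc (1 / 2) 1) (hd : d ∈ Icc (1 / 2) 1) :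
    HolderBounds α (1 / 2) 2 d x := by
  have hle : x ^ α ≤ 1 := Real.rpow_le_one (by linarith [hx.1]) hx.2 hα₀.le
  have hge : x ≤ x ^ α := Real.self_le_rpow_of_le_one (by linarith [hx.1]) hx.2 hα₁
  exact ⟨by linarith [hd.1], by linarith [hd.2, hx.1]⟩

lemma of_double (hx : 0 ≤ x) (h : HolderBounds α c₁ c₂ d (2 * x)) :
    HolderBounds α c₁ c₂ (2 ^ (-α) * d) x := by
  have key : (2 : ℝ) ^ (-α) * (2 * x) ^ α = x ^ α := by
    rw [Real.mul_rpow zero_le_two hx, ← mul_assoc, ← Real.rpow_add zero_lt_two, neg_add_cancel,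
      Real.rpow_zero, one_mul]
  have h2 : (0 : ℝ) ≤ 2 ^ (-α) := by positivity
  constructor
  · calc c₁ * x ^ α = 2 ^ (-α) * (c₁ * (2 * x) ^ α) := by rw [← key]; ring
      _ ≤ 2 ^ (-α) * d := mul_le_mul_of_nonneg_left h.1 h2
  · calc 2 ^ (-α) * d ≤ 2 ^ (-α) * (c₂ * (2 * x) ^ α) := mul_le_mul_of_nonneg_left h.2 h2
      _ = c₂ * x ^ α := by rw [← key]; ring

end HolderBounds

namespace KochPeano

def apex (y : ℝ) : ℂ := ⟨1 / 2, y⟩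

def d₀ (y : ℝ) (z : ℂ) : ℂ := apex y * conj z

def d₁ (y : ℝ) (z : ℂ) : ℂ := apex y + conj (apex y * z)

def triangle (y : ℝ) : Set ℂ := {z | 0 ≤ z.im ∧ z.im ≤ 2 * y * z.re ∧ z.im ≤ 2 * y * (1 - z.re)}

def leftCone (y : ℝ) : Set ℂ := {z | (1 / 2 - 2 * y ^ 2) * ‖z - apex y‖ ≤ 1 / 2 - z.re}

def rightCone (y : ℝ) : Set ℂ := {z | (1 / 2 - 2 * y ^ 2) * ‖z - apex y‖ ≤ z.re - 1 / 2}

lemma norm_apex_sq (y : ℝ) : ‖apex y‖ ^ 2 = 1 / 4 + y ^ 2 := by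
  rw [Complex.sq_norm, Complex.normSq_apply]; simp only [apex]; ring

lemma norm_d₀_sub (y : ℝ) (z w : ℂ) : ‖d₀ y z - d₀ y w‖ = ‖apex y‖ * ‖z - w‖ := by
  rw [d₀, d₀, ← mul_sub, ← map_sub, norm_mul, RCLike.norm_conj]

lemma norm_d₁_sub (y : ℝ) (z w : ℂ) : ‖d₁ y z - d₁ y w‖ = ‖apex y‖ * ‖z - w‖ := by
  rw [d₁, d₁, add_sub_add_left_eq_sub, ← map_sub, ← mul_sub, RCLike.norm_conj, norm_mul]

lemma continuous_d₀ (y : ℝ) : Continuous (d₀ y) := by unfold d₀; fun_prop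

lemma continuous_d₁ (y : ℝ) : Continuous (d₁ y) := by unfold d₁; fun_prop

lemma d₀_re (y : ℝ) (z : ℂ) : (d₀ y z).re = z.re / 2 + y * z.im := by
  simp only [d₀, apex, mul_re, conj_re, conj_im]; ring

lemma d₀_im (y : ℝ) (z : ℂ) : (d₀ y z).im = y * z.re - z.im / 2 := by
  simp only [d₀, apex, mul_im, conj_re, conj_im]; ring

lemma d₁_re (y : ℝ) (z : ℂ) : (d₁ y z).re = 1 / 2 + z.re / 2 - y * z.im := by
  simp only [d₁, apex, add_re, conj_re, mul_re]; ring

lemma d₁_im (y : ℝ) (z : ℂ) : (d₁ y z).im = y - y * z.re - z.im / 2 := by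
  simp only [d₁, apex, add_im, conj_im, mul_im]; ring

@[simp] lemma d₀_zero (y : ℝ) : d₀ y 0 = 0 := by simp [d₀]

@[simp] lemma d₀_one (y : ℝ) : d₀ y 1 = apex y := by simp [d₀]

@[simp] lemma d₁_zero (y : ℝ) : d₁ y 0 = apex y := by simp [d₁]

@[simp] lemma d₁_one (y : ℝ) : d₁ y 1 = 1 := by
  apply Complex.ext <;> simp [d₁_re, d₁_im]
  norm_num

section Triangle

variable {y : ℝ} {z : ℂ}

lemma isClosed_triangle (y : ℝ) : IsClosed (triangle y) :=
  (isClosed_le continuous_const continuous_im).inter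
    ((isClosed_le continuous_im (by fun_prop)).inter (isClosed_le continuous_im (by fun_prop)))

lemma ofReal_mem_triangle (hy₀ : 0 < y) {t : ℝ} (ht : t ∈ Icc (0 : ℝ) 1) :
    (t : ℂ) ∈ triangle y := by
  simp only [triangle, mem_ofPred_eq, ofReal_re, ofReal_im]
  exact ⟨le_rfl, by nlinarith [ht.1], by nlinarith [ht.2]⟩

lemma re_mem_Icc_of_mem_triangle (hy₀ : 0 < y) (hz : z ∈ triangle y) : z.re ∈ Icc (0 : ℝ) 1 := by
  obtain ⟨h₁, h₂, h₃⟩ := hz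
  constructor <;> nlinarith

lemma d₀_mem_triangle (hy₀ : 0 < y) (hy₁ : y < 1 / 2) (hz : z ∈ triangle y) :
    d₀ y z ∈ triangle y := by
  have hx := re_mem_Icc_of_mem_triangle hy₀ hz
  obtain ⟨h₁, h₂, h₃⟩ := hz
  have hy : y ^ 2 < 1 / 4 := by nlinarith
  simp only [triangle, mem_ofPred_eq, d₀_re, d₀_im]
  refine ⟨?_, ?_, ?_⟩ <;> nlinarith [hx.1, hx.2, mul_nonneg h₁ (sub_nonneg.2 hy.le)]

lemma d₁_mem_triangle (hy₀ : 0 < y) (hy₁ : y < 1 / 2) (hz : z ∈ triangle y) :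
    d₁ y z ∈ triangle y := by
  have hx := re_mem_Icc_of_mem_triangle hy₀ hz
  obtain ⟨h₁, h₂, h₃⟩ := hz
  have hy : y ^ 2 < 1 / 4 := by nlinarith
  simp only [triangle, mem_ofPred_eq, d₁_re, d₁_im]
  refine ⟨?_, ?_, ?_⟩ <;> nlinarith [hx.1, hx.2, mul_nonneg h₁ (sub_nonneg.2 hy.le)]

lemma norm_le_one_of_mem_triangle (hy₀ : 0 < y) (hy₁ : y < 1 / 2) (hz : z ∈ triangle y) :
    ‖z‖ ≤ 1 := by
  have hx := re_mem_Icc_of_mem_triangle hy₀ hz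
  obtain ⟨h₁, h₂, h₃⟩ := hz
  rw [← sq_le_one_iff₀ (norm_nonneg z), Complex.sq_norm, Complex.normSq_apply]
  nlinarith [hx.1, hx.2]

lemma norm_sub_one_le_one_of_mem_triangle (hy₀ : 0 < y) (hy₁ : y < 1 / 2)
    (hz : z ∈ triangle y) : ‖z - 1‖ ≤ 1 := by
  have hx := re_mem_Icc_of_mem_triangle hy₀ hz
  obtain ⟨h₁, h₂, h₃⟩ := hz
  rw [← sq_le_one_iff₀ (norm_nonneg _), Complex.sq_norm, Complex.normSq_apply]
  simp only [sub_re, one_re, sub_im, one_im, sub_zero]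
  nlinarith [hx.1, hx.2]

lemma d₀_mem_leftCone (hy₀ : 0 < y) (hy₁ : y < 1 / 2) (hz : z ∈ triangle y) :
    d₀ y z ∈ leftCone y := by
  have hx := re_mem_Icc_of_mem_triangle hy₀ hz
  obtain ⟨h₁, h₂, h₃⟩ := hz
  have hσ : 0 < 1 - 4 * y ^ 2 := by nlinarith
  have hnorm : ‖d₀ y z - apex y‖ ≤ 1 - z.re := by
    rw [← d₀_one, norm_d₀_sub, ← sq_le_sq₀ (by positivity) (by linarith [hx.2]), mul_pow,
      norm_apex_sq, Complex.sq_norm, Complex.normSq_apply]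
    simp only [sub_re, one_re, sub_im, one_im, sub_zero]
    have hv : z.im ^ 2 ≤ (2 * y * (1 - z.re)) ^ 2 := pow_le_pow_left₀ h₁ h₃ 2
    nlinarith [mul_le_mul_of_nonneg_left hv (by positivity : (0 : ℝ) ≤ 1 / 4 + y ^ 2),
      mul_nonneg (mul_nonneg (sq_nonneg (1 - z.re)) hσ.le)
        (by positivity : (0 : ℝ) ≤ 3 + 4 * y ^ 2)]
  simp only [leftCone, mem_ofPred_eq, d₀_re]
  nlinarith [mul_le_mul_of_nonneg_left hnorm hσ.le, mul_le_mul_of_nonneg_left h₃ hy₀.le]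

lemma d₁_mem_rightCone (hy₀ : 0 < y) (hy₁ : y < 1 / 2) (hz : z ∈ triangle y) :
    d₁ y z ∈ rightCone y := by
  have hx := re_mem_Icc_of_mem_triangle hy₀ hz
  obtain ⟨h₁, h₂, h₃⟩ := hz
  have hσ : 0 < 1 - 4 * y ^ 2 := by nlinarith
  have hnorm : ‖d₁ y z - apex y‖ ≤ z.re := by
    rw [← d₁_zero, norm_d₁_sub, sub_zero, ← sq_le_sq₀ (by positivity) hx.1, mul_pow,
      norm_apex_sq, Complex.sq_norm, Complex.normSq_apply]
    have hv : z.im ^ 2 ≤ (2 * y * z.re) ^ 2 := pow_le_pow_left₀ h₁ h₂ 2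
    nlinarith [mul_le_mul_of_nonneg_left hv (by positivity : (0 : ℝ) ≤ 1 / 4 + y ^ 2),
      mul_nonneg (mul_nonneg (sq_nonneg z.re) hσ.le)
        (by positivity : (0 : ℝ) ≤ 3 + 4 * y ^ 2)]
  simp only [rightCone, mem_ofPred_eq, d₁_re]
  nlinarith [mul_le_mul_of_nonneg_left hnorm hσ.le, mul_le_mul_of_nonneg_left h₂ hy₀.le]

end Triangle

def approx (y : ℝ) : ℕ → ℝ → ℂ
  | 0, t => t
  | n + 1, t => if t ≤ 1 / 2 then d₀ y (approx y n (2 * t)) else d₁ y (approx y n (2 * t - 1))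

def curve (y t : ℝ) : ℂ := limUnder atTop fun n ↦ approx y n t

section Curve

variable {y : ℝ}

lemma approx_succ_of_le (y : ℝ) (n : ℕ) {t : ℝ} (ht : t ≤ 1 / 2) :
    approx y (n + 1) t = d₀ y (approx y n (2 * t)) := if_pos ht

lemma approx_succ_of_lt (y : ℝ) (n : ℕ) {t : ℝ} (ht : 1 / 2 < t) :
    approx y (n + 1) t = d₁ y (approx y n (2 * t - 1)) := if_neg ht.not_ge

lemma approx_apply_zero (y : ℝ) : ∀ n, approx y n 0 = 0
  | 0 => by simp [approx]
  | n + 1 => by rw [approx_succ_of_le y n (by norm_num), mul_zero, approx_apply_zero y n, d₀_zero]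

lemma approx_apply_one (y : ℝ) : ∀ n, approx y n 1 = 1
  | 0 => by simp [approx]
  | n + 1 => by
    rw [approx_succ_of_lt y n (by norm_num), show (2 : ℝ) * 1 - 1 = 1 by norm_num,
      approx_apply_one y n, d₁_one]

lemma approx_mem_triangle (hy₀ : 0 < y) (hy₁ : y < 1 / 2) :
    ∀ n, ∀ t ∈ Icc (0 : ℝ) 1, approx y n t ∈ triangle y
  | 0, t, ht => ofReal_mem_triangle hy₀ ht
  | n + 1, t, ht => by
    rcases le_or_gt t (1 / 2) with h | h
    · rw [approx_succ_of_le y n h]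
      exact d₀_mem_triangle hy₀ hy₁
        (approx_mem_triangle hy₀ hy₁ n _ ⟨by linarith [ht.1], by linarith⟩)
    · rw [approx_succ_of_lt y n h]
      exact d₁_mem_triangle hy₀ hy₁
        (approx_mem_triangle hy₀ hy₁ n _ ⟨by linarith, by linarith [ht.2]⟩)

lemma norm_approx_succ_sub_le (hy₀ : 0 < y) (hy₁ : y < 1 / 2) :
    ∀ n, ∀ t ∈ Icc (0 : ℝ) 1, ‖approx y (n + 1) t - approx y n t‖ ≤ 2 * ‖apex y‖ ^ n
  | 0, t, ht => by
    rw [pow_zero, mul_one]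
    refine (norm_sub_le _ _).trans ?_
    linarith [norm_le_one_of_mem_triangle hy₀ hy₁ (approx_mem_triangle hy₀ hy₁ 1 t ht),
      norm_le_one_of_mem_triangle hy₀ hy₁ (approx_mem_triangle hy₀ hy₁ 0 t ht)]
  | n + 1, t, ht => by
    rcases le_or_gt t (1 / 2) with h | h
    · rw [approx_succ_of_le y (n + 1) h, approx_succ_of_le y n h, norm_d₀_sub, pow_succ']
      rw [mul_left_comm]
      exact mul_le_mul_of_nonneg_left (norm_approx_succ_sub_le hy₀ hy₁ n (2 * t)
        ⟨by linarith [ht.1], by linarith⟩) (norm_nonneg _)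
    · rw [approx_succ_of_lt y (n + 1) h, approx_succ_of_lt y n h, norm_d₁_sub, pow_succ']
      rw [mul_left_comm]
      exact mul_le_mul_of_nonneg_left (norm_approx_succ_sub_le hy₀ hy₁ n (2 * t - 1)
        ⟨by linarith, by linarith [ht.2]⟩) (norm_nonneg _)

lemma tendsto_approx (hy₀ : 0 < y) (hy₁ : y < 1 / 2) {t : ℝ} (ht : t ∈ Icc (0 : ℝ) 1) :
    Tendsto (approx y · t) atTop (𝓝 (curve y t)) := by
  have hρ : ‖apex y‖ < 1 := by
    rw [← sq_lt_one_iff₀ (norm_nonneg _), norm_apex_sq]; nlinarith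
  refine (cauchySeq_of_le_geometric _ 2 hρ fun n ↦ ?_).tendsto_limUnder
  rw [dist_comm, dist_eq_norm]
  exact norm_approx_succ_sub_le hy₀ hy₁ n t ht

lemma curve_zero (y : ℝ) : curve y 0 = 0 :=
  (tendsto_const_nhds.congr fun n ↦ (approx_apply_zero y n).symm).limUnder_eq

lemma curve_one (y : ℝ) : curve y 1 = 1 :=
  (tendsto_const_nhds.congr fun n ↦ (approx_apply_one y n).symm).limUnder_eq

lemma curve_mem_triangle (hy₀ : 0 < y) (hy₁ : y < 1 / 2) {t : ℝ} (ht : t ∈ Icc (0 : ℝ) 1) :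
    curve y t ∈ triangle y :=
  (isClosed_triangle y).mem_of_tendsto (tendsto_approx hy₀ hy₁ ht)
    (Eventually.of_forall fun n ↦ approx_mem_triangle hy₀ hy₁ n t ht)

lemma curve_of_le_half (hy₀ : 0 < y) (hy₁ : y < 1 / 2) {t : ℝ} (ht : t ∈ Icc (0 : ℝ) (1 / 2)) :
    curve y t = d₀ y (curve y (2 * t)) := by
  have h2t : 2 * t ∈ Icc (0 : ℝ) 1 := ⟨by linarith [ht.1], by linarith [ht.2]⟩
  refine tendsto_nhds_unique ((tendsto_approx hy₀ hy₁ ⟨ht.1, by linarith [ht.2]⟩).comp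
    (tendsto_add_atTop_nat 1)) ?_
  simp only [Function.comp_def, approx_succ_of_le y _ ht.2]
  exact ((continuous_d₀ y).tendsto _).comp (tendsto_approx hy₀ hy₁ h2t)

lemma curve_of_half_lt (hy₀ : 0 < y) (hy₁ : y < 1 / 2) {t : ℝ} (ht : t ∈ Ioc (1 / 2 : ℝ) 1) :
    curve y t = d₁ y (curve y (2 * t - 1)) := by
  have h2t : 2 * t - 1 ∈ Icc (0 : ℝ) 1 := ⟨by linarith [ht.1], by linarith [ht.2]⟩
  refine tendsto_nhds_unique ((tendsto_approx hy₀ hy₁ ⟨by linarith [ht.1], ht.2⟩).comp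
    (tendsto_add_atTop_nat 1)) ?_
  simp only [Function.comp_def, approx_succ_of_lt y _ ht.1]
  exact ((continuous_d₁ y).tendsto _).comp (tendsto_approx hy₀ hy₁ h2t)

end Curve

section Estimates

variable {y α : ℝ}

lemma curve_mem_leftCone (hy₀ : 0 < y) (hy₁ : y < 1 / 2) {s : ℝ} (hs : s ∈ Icc (0 : ℝ) (1 / 2)) :
    curve y s ∈ leftCone y := by
  rw [curve_of_le_half hy₀ hy₁ hs]
  exact d₀_mem_leftCone hy₀ hy₁
    (curve_mem_triangle hy₀ hy₁ ⟨by linarith [hs.1], by linarith [hs.2]⟩)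

lemma curve_mem_rightCone (hy₀ : 0 < y) (hy₁ : y < 1 / 2) {t : ℝ} (ht : t ∈ Ioc (1 / 2 : ℝ) 1) :
    curve y t ∈ rightCone y := by
  rw [curve_of_half_lt hy₀ hy₁ ht]
  exact d₁_mem_rightCone hy₀ hy₁
    (curve_mem_triangle hy₀ hy₁ ⟨by linarith [ht.1], by linarith [ht.2]⟩)

lemma holderBounds_of_le_half (hy₀ : 0 < y) (hy₁ : y < 1 / 2) (hρ : ‖apex y‖ = 2 ^ (-α))
    {c₁ c₂ s t : ℝ} (hs : 0 ≤ s) (hst : s ≤ t) (ht : t ≤ 1 / 2)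
    (h : HolderBounds α c₁ c₂ ‖curve y (2 * t) - curve y (2 * s)‖ (2 * t - 2 * s)) :
    HolderBounds α c₁ c₂ ‖curve y t - curve y s‖ (t - s) := by
  rw [curve_of_le_half hy₀ hy₁ ⟨by linarith, ht⟩, curve_of_le_half hy₀ hy₁ ⟨hs, by linarith⟩,
    norm_d₀_sub, hρ]
  rw [← mul_sub] at h
  exact h.of_double (sub_nonneg.2 hst)

lemma holderBounds_of_half_lt (hy₀ : 0 < y) (hy₁ : y < 1 / 2) (hρ : ‖apex y‖ = 2 ^ (-α))
    {c₁ c₂ s t : ℝ} (hs : 1 / 2 < s) (hst : s ≤ t) (ht : t ≤ 1)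
    (h : HolderBounds α c₁ c₂ ‖curve y (2 * t - 1) - curve y (2 * s - 1)‖
      (2 * t - 1 - (2 * s - 1))) :
    HolderBounds α c₁ c₂ ‖curve y t - curve y s‖ (t - s) := by
  rw [curve_of_half_lt hy₀ hy₁ ⟨by linarith, ht⟩, curve_of_half_lt hy₀ hy₁ ⟨hs, by linarith⟩,
    norm_d₁_sub, hρ]
  rw [show 2 * t - 1 - (2 * s - 1) = 2 * (t - s) by ring] at h
  exact h.of_double (sub_nonneg.2 hst)

lemma holderBounds_of_endpoint (hy₀ : 0 < y) (hy₁ : y < 1 / 2) (hα₀ : 0 < α) (hα₁ : α ≤ 1)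
    (hρ : ‖apex y‖ = 2 ^ (-α)) {s t : ℝ} (hs : 0 ≤ s) (hst : s ≤ t) (ht : t ≤ 1)
    (hend : s = 0 ∨ t = 1) :
    HolderBounds α (1 / 2) 2 ‖curve y t - curve y s‖ (t - s) := by
  rcases hst.eq_or_lt with rfl | hst
  · simpa using HolderBounds.zero hα₀.ne'
  refine dyadic_pair_induction (P := fun s t ↦ s = 0 ∨ t = 1 →
    HolderBounds α (1 / 2) 2 ‖curve y t - curve y s‖ (t - s)) ?_ ?_ ?_ hs hst ht hend
  · intro s t hs hs' ht' ht hend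
    have hσ : 0 ≤ 1 / 2 - 2 * y ^ 2 := by nlinarith
    rcases hend with rfl | rfl
    · have hr := curve_mem_rightCone hy₀ hy₁ ⟨ht', ht⟩
      simp only [rightCone, mem_ofPred_eq] at hr
      rw [curve_zero, sub_zero, sub_zero]
      refine HolderBounds.of_mem_Icc hα₀ hα₁ ⟨ht'.le, ht⟩ ⟨?_, norm_le_one_of_mem_triangle hy₀ hy₁
        (curve_mem_triangle hy₀ hy₁ ⟨by linarith, ht⟩)⟩
      nlinarith [re_le_norm (curve y t), mul_nonneg hσ (norm_nonneg (curve y t - apex y))]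
    · have hl := curve_mem_leftCone hy₀ hy₁ ⟨hs, hs'⟩
      simp only [leftCone, mem_ofPred_eq] at hl
      rw [curve_one]
      refine HolderBounds.of_mem_Icc hα₀ hα₁ ⟨by linarith, by linarith⟩
        ⟨?_, (norm_sub_rev _ _).trans_le (norm_sub_one_le_one_of_mem_triangle hy₀ hy₁
          (curve_mem_triangle hy₀ hy₁ ⟨hs, by linarith⟩))⟩
      have := re_le_norm (1 - curve y s)
      rw [sub_re, one_re] at this
      nlinarith [mul_nonneg hσ (norm_nonneg (curve y s - apex y))]
  · intro s t _ hst ht' ih hend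
    obtain rfl : s = 0 := hend.resolve_right (by linarith)
    exact holderBounds_of_le_half hy₀ hy₁ hρ le_rfl hst.le ht' (ih (.inl (mul_zero 2)))
  · intro s t hs' hst _ ih hend
    obtain rfl : t = 1 := hend.resolve_left (by linarith)
    exact holderBounds_of_half_lt hy₀ hy₁ hρ hs' hst.le le_rfl (ih (.inr (by norm_num)))

lemma holderBounds_apex_sub_curve (hy₀ : 0 < y) (hy₁ : y < 1 / 2) (hα₀ : 0 < α) (hα₁ : α ≤ 1)
    (hρ : ‖apex y‖ = 2 ^ (-α)) {s : ℝ} (hs : s ∈ Icc (0 : ℝ) (1 / 2)) :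
    HolderBounds α (1 / 2) 2 ‖apex y - curve y s‖ (1 / 2 - s) := by
  have h := holderBounds_of_endpoint hy₀ hy₁ hα₀ hα₁ hρ (s := 2 * s) (t := 1)
    (by linarith [hs.1]) (by linarith [hs.2]) le_rfl (.inr rfl)
  rw [show (1 : ℝ) - 2 * s = 2 * (1 / 2 - s) by ring] at h
  have h' := h.of_double (by linarith [hs.2])
  rwa [← hρ, ← norm_d₀_sub, curve_one, d₀_one, ← curve_of_le_half hy₀ hy₁ hs] at h'

lemma holderBounds_curve_sub_apex (hy₀ : 0 < y) (hy₁ : y < 1 / 2) (hα₀ : 0 < α) (hα₁ : α ≤ 1)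
    (hρ : ‖apex y‖ = 2 ^ (-α)) {t : ℝ} (ht : t ∈ Ioc (1 / 2 : ℝ) 1) :
    HolderBounds α (1 / 2) 2 ‖curve y t - apex y‖ (t - 1 / 2) := by
  have h := holderBounds_of_endpoint hy₀ hy₁ hα₀ hα₁ hρ (s := 0) (t := 2 * t - 1)
    le_rfl (by linarith [ht.1]) (by linarith [ht.2]) (.inl rfl)
  rw [show 2 * t - 1 - 0 = 2 * (t - 1 / 2) by ring] at h
  have h' := h.of_double (by linarith [ht.1])
  rwa [← hρ, ← norm_d₁_sub, curve_zero, d₁_zero, ← curve_of_half_lt hy₀ hy₁ ht] at h'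

lemma holderBounds_across_half (hy₀ : 0 < y) (hy₁ : y < 1 / 2) (hα₀ : 0 < α) (hα₁ : α ≤ 1)
    (hρ : ‖apex y‖ = 2 ^ (-α)) {s t : ℝ} (hs : s ∈ Icc (0 : ℝ) (1 / 2))
    (ht : t ∈ Ioc (1 / 2 : ℝ) 1) :
    HolderBounds α ((1 / 2 - 2 * y ^ 2) / 2) 4 ‖curve y t - curve y s‖ (t - s) := by
  obtain ⟨hl₁, hl₂⟩ := holderBounds_apex_sub_curve hy₀ hy₁ hα₀ hα₁ hρ hs
  obtain ⟨hr₁, hr₂⟩ := holderBounds_curve_sub_apex hy₀ hy₁ hα₀ hα₁ hρ ht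
  have hl := curve_mem_leftCone hy₀ hy₁ hs
  have hr := curve_mem_rightCone hy₀ hy₁ ht
  simp only [leftCone, rightCone, mem_ofPred_eq] at hl hr
  rw [norm_sub_rev] at hl
  have hσ : 0 ≤ 1 / 2 - 2 * y ^ 2 := by nlinarith
  have hsub : (t - s) ^ α ≤ (t - 1 / 2) ^ α + (1 / 2 - s) ^ α := by
    rw [show t - s = (t - 1 / 2) + (1 / 2 - s) by ring]
    exact Real.rpow_add_le_add_rpow (by linarith [ht.1]) (by linarith [hs.2]) hα₀.le hα₁
  have hmono₁ : (t - 1 / 2) ^ α ≤ (t - s) ^ α :=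
    Real.rpow_le_rpow (by linarith [ht.1]) (by linarith [hs.2]) hα₀.le
  have hmono₂ : (1 / 2 - s) ^ α ≤ (t - s) ^ α :=
    Real.rpow_le_rpow (by linarith [hs.2]) (by linarith [ht.1]) hα₀.le
  constructor
  · calc (1 / 2 - 2 * y ^ 2) / 2 * (t - s) ^ α
        ≤ (1 / 2 - 2 * y ^ 2) * (1 / 2 * (t - 1 / 2) ^ α + 1 / 2 * (1 / 2 - s) ^ α) := by
          nlinarith
      _ ≤ (1 / 2 - 2 * y ^ 2) * (‖curve y t - apex y‖ + ‖apex y - curve y s‖) :=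
          mul_le_mul_of_nonneg_left (add_le_add hr₁ hl₁) hσ
      _ ≤ (curve y t - curve y s).re := by rw [sub_re]; linarith
      _ ≤ ‖curve y t - curve y s‖ := re_le_norm _
  · calc ‖curve y t - curve y s‖ ≤ ‖curve y t - apex y‖ + ‖apex y - curve y s‖ :=
          norm_sub_le_norm_sub_add_norm_sub _ _ _
      _ ≤ 2 * (t - 1 / 2) ^ α + 2 * (1 / 2 - s) ^ α := add_le_add hr₂ hl₂
      _ ≤ 4 * (t - s) ^ α := by linarith

lemma holderBounds_curve (hy₀ : 0 < y) (hy₁ : y < 1 / 2) (hα₀ : 0 < α) (hα₁ : α ≤ 1)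
    (hρ : ‖apex y‖ = 2 ^ (-α)) {s t : ℝ} (hs : 0 ≤ s) (hst : s ≤ t) (ht : t ≤ 1) :
    HolderBounds α ((1 / 2 - 2 * y ^ 2) / 2) 4 ‖curve y t - curve y s‖ (t - s) := by
  rcases hst.eq_or_lt with rfl | hst
  · simpa using HolderBounds.zero hα₀.ne'
  exact dyadic_pair_induction
    (fun s t hs hs' ht' ht ↦ holderBounds_across_half hy₀ hy₁ hα₀ hα₁ hρ ⟨hs, hs'⟩ ⟨ht', ht⟩)
    (fun s t hs hst ht ↦ holderBounds_of_le_half hy₀ hy₁ hρ hs hst.le ht)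
    (fun s t hs hst ht ↦ holderBounds_of_half_lt hy₀ hy₁ hρ hs hst.le ht) hs hst ht

end Estimates

lemma exists_norm_apex_eq {α : ℝ} (hα₁ : 1 / 2 < α) (hα₂ : α < 1) :
    ∃ y, 0 < y ∧ y < 1 / 2 ∧ ‖apex y‖ = 2 ^ (-α) := by
  set r : ℝ := 2 ^ (-α) with hr
  have hr_gt : 1 / 2 < r := by
    rw [hr, one_div, ← Real.rpow_neg_one]
    exact Real.rpow_lt_rpow_of_exponent_lt one_lt_two (by linarith)
  have hr_sq : r ^ 2 < 1 / 2 := by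
    rw [hr, ← Real.rpow_mul_natCast zero_le_two, one_div, ← Real.rpow_neg_one]
    exact Real.rpow_lt_rpow_of_exponent_lt one_lt_two (by push_cast; linarith)
  refine ⟨√(r ^ 2 - 1 / 4), Real.sqrt_pos.2 (by nlinarith), ?_, ?_⟩
  · rw [Real.sqrt_lt' (by norm_num)]; linarith
  · rw [← sq_eq_sq₀ (norm_nonneg _) (by positivity), norm_apex_sq, Real.sq_sqrt (by nlinarith)]
    ring

end KochPeano

open KochPeano in
/-- Lemma 7 of the paper: for `1/2 < α < 1` there is a curve `u : [0,1] → ℝ²` that is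
bi-Hölder of exponent `α`: `c₁|s-t|^α ≤ |u(s)-u(t)| ≤ c₂|s-t|^α`. -/
theorem exists_biHolder_curve (α : ℝ) (hα₁ : 1 / 2 < α) (hα₂ : α < 1) :
    ∃ (c₁ c₂ : ℝ) (u : ℝ → EuclideanSpace ℝ (Fin 2)), 0 < c₁ ∧ 0 < c₂ ∧
      ∀ s ∈ Set.Icc (0 : ℝ) 1, ∀ t ∈ Set.Icc (0 : ℝ) 1,
        c₁ * |s - t| ^ α ≤ ‖u s - u t‖ ∧ ‖u s - u t‖ ≤ c₂ * |s - t| ^ α := by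
  obtain ⟨y, hy₀, hy₁, hρ⟩ := exists_norm_apex_eq hα₁ hα₂
  have hα₀ : 0 < α := by linarith
  refine ⟨(1 / 2 - 2 * y ^ 2) / 2, 4, fun t ↦ orthonormalBasisOneI.repr (curve y t),
    by nlinarith, by norm_num, fun s hs t ht ↦ ?_⟩
  simp only [← map_sub, LinearIsometryEquiv.norm_map]
  rcases le_total s t with hst | hts
  · rw [abs_sub_comm, abs_of_nonneg (sub_nonneg.2 hst), norm_sub_rev]
    exact holderBounds_curve hy₀ hy₁ hα₀ hα₂.le hρ hs.1 hst ht.2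
  · rw [abs_of_nonneg (sub_nonneg.2 hts)]
    exact holderBounds_curve hy₀ hy₁ hα₀ hα₂.le hρ ht.1 hts hs.2
end
end

section
/- Let $1 \le p < \gamma \le 2$, and let $K$ be a positive integer. Suppose given $x_0, \ldots, x_K \in \mathbb{R}^d$ and nonnegative reals $\omega_{kl}$ for $0 \le k \le l \le K$ satisfying superadditivity $\omega_{km} \ge \omega_{kl} + \omega_{lm}$ for $k \le l \le m$, and $|x_l - x_k|^p \le \omega_{kl}$. Let $f = (f^i_j) : \mathbb{R}^n \to \mathbb{R}^{n \times d}$ be bounded with a global Hölder-$(\gamma-1)$ bound: $|f(y)| \le M_0$ and $|f(y)-f(z)| \le M_0 |y-z|^{\gamma-1}$ for all $y,z$. Given $y_0 \in \mathbb{R}^n$ define $y_k$ by the Euler scheme $y_{k+1}^i = y_k^i + \sum_j f^i_j(y_k)(x^j_{k+1} - x^j_k)$, and set $I^i_{kl} = y^i_l - y^i_k - \sum_j f^i_j(y_k)(x^j_l - x^j_k)$. Then there exist constants $C, M > 0$, depending only on $n, d, \gamma, p$, $\omega_{0K}$, and $M_0$, such that for all $0 \le k \le l \le K$: $|I_{kl}|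 \le M\,\omega_{kl}^{\gamma/p}$ and $|y_l - y_k| \le C\,\omega_{kl}^{1/p}$. -/
lemma my_rpow_add_le {a b c : ℝ} (ha : 0 ≤ a) (hb : 0 ≤ b)
    (hc0 : 0 ≤ c) (hc1 : c ≤ 1) : (a + b) ^ c ≤ a ^ c + b ^ c := by
  lift a to NNReal using ha
  lift b to NNReal using hb
  exact_mod_cast NNReal.rpow_add_le_add_rpow a b hc0 hc1

set_option maxHeartbeats 2000000 in
/-- Lemma 1(a) of the paper: a priori estimates for the Euler scheme driven by a
discrete rough path of finite `p`-variation, `1 ≤ p < γ ≤ 2`.  There exist constants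
`C, M`, depending only on `n, d, γ, p`, a bound `Ω ≥ ω₀ₖ` and the `C^{γ-1}` bound
`M₀` of `f`, such that `|I_{kl}| ≤ M ω_{kl}^{γ/p}` and `|y_l - y_k| ≤ C ω_{kl}^{1/p}`. -/
theorem euler_scheme_a_priori_estimate (n d : ℕ) (γ p Ω M₀ : ℝ)
    (hp : 1 ≤ p) (hpγ : p < γ) (hγ : γ ≤ 2) (hΩ : 0 ≤ Ω) (hM₀ : 0 < M₀) :
    ∃ C > 0, ∃ M > 0,
      ∀ (K : ℕ) (x : ℕ → Fin d → ℝ) (ω : ℕ → ℕ → ℝ)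
        (f : Fin n → Fin d → (Fin n → ℝ) → ℝ) (y : ℕ → Fin n → ℝ),
        (∀ k l, k ≤ l → l ≤ K → 0 ≤ ω k l) →
        (∀ k l m, k ≤ l → l ≤ m → m ≤ K → ω k l + ω l m ≤ ω k m) →
        ω 0 K ≤ Ω →
        (∀ k l, k ≤ l → l ≤ K → ∀ j, |x l j - x k j| ^ p ≤ ω k l) →
        (∀ i j y', |f i j y'| ≤ M₀) →
        (∀ i j y' z', |f i j y' - f i j z'| ≤ M₀ * ‖y' - z'‖ ^ (γ - 1)) →
        (∀ k i, y (k + 1) i = y k i + ∑ j, f i j (y k) * (x (k + 1) j - x k j)) →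
        ∀ k l, k ≤ l → l ≤ K →
          (∀ i, |y l i - y k i - ∑ j, f i j (y k) * (x l j - x k j)|
            ≤ M * ω k l ^ (γ / p)) ∧
          (∀ i, |y l i - y k i| ≤ C * ω k l ^ (1 / p)) := by
  classical
  have hp0 : (0:ℝ) < p := lt_of_lt_of_le one_pos hp
  have hpne : p ≠ 0 := ne_of_gt hp0
  have hγ1 : 1 < γ := lt_of_le_of_lt hp hpγ
  have hγ1' : (0:ℝ) ≤ γ - 1 := by linarith
  have hγ1'' : (0:ℝ) < γ - 1 := by linarith
  have hγ2 : γ - 1 ≤ 1 := by linarith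
  have hθ1 : 1 < γ / p := (one_lt_div hp0).2 hpγ
  have hθ0 : 0 < γ / p := lt_trans one_pos hθ1
  have hθne : γ / p ≠ 0 := ne_of_gt hθ0
  have h1p : (0:ℝ) < 1 / p := div_pos one_pos hp0
  have hgp0 : (0:ℝ) < (γ - 1) / p := div_pos hγ1'' hp0
  have hsplit : (γ - 1) / p + 1 / p = γ / p := by ring
  -- constants
  obtain ⟨D, hDdef⟩ : ∃ D : ℝ, D = (d : ℝ) * M₀ + 1 := ⟨_, rfl⟩
  have hdM0 : (0:ℝ) ≤ (d : ℝ) * M₀ := mul_nonneg (Nat.cast_nonneg d) hM₀.le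
  have hD0 : (0:ℝ) < D := by rw [hDdef]; linarith
  have hD1 : (1:ℝ) ≤ D := by rw [hDdef]; linarith
  have hdM : (d : ℝ) * M₀ ≤ D := by rw [hDdef]; linarith
  obtain ⟨ε, hεdef⟩ : ∃ ε : ℝ, ε = (1 - 2 ^ ((1:ℝ) - γ / p)) / 2 := ⟨_, rfl⟩
  have h2pow : (2:ℝ) ^ ((1:ℝ) - γ/p) < 1 :=
    Real.rpow_lt_one_of_one_lt_of_neg one_lt_two (by linarith)
  have h2pow0 : (0:ℝ) < 2 ^ ((1:ℝ) - γ/p) := Real.rpow_pos_of_pos two_pos _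
  have hε0 : 0 < ε := by rw [hεdef]; linarith
  have h2e : (2:ℝ) ^ ((1:ℝ) - γ/p) = 1 - 2*ε := by rw [hεdef]; ring
  obtain ⟨s, hsdef⟩ : ∃ s : ℝ, s = (γ - 1) * (γ - 1) / p := ⟨_, rfl⟩
  have hs0 : 0 < s := by rw [hsdef]; exact div_pos (mul_pos hγ1'' hγ1'') hp0
  obtain ⟨δ, hδdef⟩ : ∃ δ : ℝ, δ = min 1 ((ε / (2 * D)) ^ (1 / s)) := ⟨_, rfl⟩
  have hq0 : 0 < ε / (2*D) := div_pos hε0 (by linarith)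
  have hδ0 : 0 < δ := by rw [hδdef]; exact lt_min one_pos (Real.rpow_pos_of_pos hq0 _)
  have hδs : D * δ ^ s ≤ ε / 2 := by
    have h1 : δ ^ s ≤ ((ε / (2*D)) ^ (1/s)) ^ s :=
      Real.rpow_le_rpow hδ0.le (by rw [hδdef]; exact min_le_right _ _) hs0.le
    rw [← Real.rpow_mul hq0.le, one_div_mul_cancel hs0.ne', Real.rpow_one] at h1
    have h2 : D * δ ^ s ≤ D * (ε / (2*D)) :=
      mul_le_mul_of_nonneg_left h1 hD0.le
    calc D * δ ^ s ≤ D * (ε / (2*D)) := h2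
      _ = ε / 2 := by field_simp
  have hDγ0 : 0 < D ^ γ := Real.rpow_pos_of_pos hD0 _
  obtain ⟨M₁, hM₁def⟩ : ∃ M₁ : ℝ, M₁ = 1 + 2 * D ^ γ / ε := ⟨_, rfl⟩
  have hM₁1 : 1 ≤ M₁ := by
    rw [hM₁def]
    have : 0 ≤ 2 * D ^ γ / ε := div_nonneg (by linarith) hε0.le
    linarith
  have hM₁0 : 0 < M₁ := lt_of_lt_of_le one_pos hM₁1
  have hM₁ε : 2 * D ^ γ ≤ ε * M₁ := by
    rw [hM₁def, mul_add, mul_one, mul_div_assoc', mul_comm ε, mul_div_assoc,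
      div_self hε0.ne', mul_one]
    linarith
  obtain ⟨C₁, hC₁def⟩ : ∃ C₁ : ℝ, C₁ = M₁ * δ ^ ((γ-1)/p) + D := ⟨_, rfl⟩
  have hδgp0 : 0 < δ ^ ((γ-1)/p) := Real.rpow_pos_of_pos hδ0 _
  have hC₁0 : 0 < C₁ := by
    rw [hC₁def]; have := mul_pos hM₁0 hδgp0; linarith
  obtain ⟨R, hRdef⟩ : ∃ R : ℝ, R = 2 * D * δ ^ ((1:ℝ)/p - γ/p) := ⟨_, rfl⟩
  have hR0 : 0 < R := by
    rw [hRdef]; exact mul_pos (by linarith) (Real.rpow_pos_of_pos hδ0 _)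
  obtain ⟨M₂, hM₂def⟩ : ∃ M₂ : ℝ, M₂ = M₁ + 2 * R := ⟨_, rfl⟩
  have hM₂0 : 0 < M₂ := by rw [hM₂def]; linarith
  have hM₁M₂ : M₁ ≤ M₂ := by rw [hM₂def]; linarith
  obtain ⟨M, hMdef⟩ : ∃ M : ℝ, M = M₂ * (1 + Ω / δ) := ⟨_, rfl⟩
  have hΩδ0 : 0 ≤ Ω / δ := div_nonneg hΩ hδ0.le
  have hM0 : 0 < M := by rw [hMdef]; exact mul_pos hM₂0 (by linarith)
  obtain ⟨C, hCdef⟩ : ∃ C : ℝ, C = M * Ω ^ ((γ-1)/p) + D := ⟨_, rfl⟩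
  have hΩγ0 : 0 ≤ Ω ^ ((γ-1)/p) := Real.rpow_nonneg hΩ _
  have hC0 : 0 < C := by
    rw [hCdef]; have := mul_nonneg hM0.le hΩγ0; linarith
  refine ⟨C, hC0, M, hM0, ?_⟩
  intro K x ω f y hωnn hsuper hΩK hxp hfb hfh heuler
  -- basic facts about ω
  have hdiag : ∀ k, k ≤ K → ω k k = 0 := fun k hk =>
    le_antisymm (by have := hsuper k k k le_rfl le_rfl hk; linarith)
      (hωnn k k le_rfl hk)
  have hmono : ∀ a b c e : ℕ, a ≤ b → b ≤ c → c ≤ e → e ≤ K → ω b c ≤ ω a e := by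
    intro a b c e hab hbc hce heK
    have h1 := hsuper a b c hab hbc (le_trans hce heK)
    have h2 := hsuper a c e (le_trans hab hbc) hce heK
    have h3 := hωnn a b hab (le_trans hbc (le_trans hce heK))
    have h4 := hωnn c e hce heK
    linarith
  have hωΩ : ∀ k l, k ≤ l → l ≤ K → ω k l ≤ Ω := fun k l hkl hlK =>
    le_trans (hmono 0 k l K (Nat.zero_le _) hkl hlK le_rfl) hΩK
  have hxb : ∀ k l, k ≤ l → l ≤ K → ∀ j, |x l j - x k j| ≤ ω k l ^ ((1:ℝ)/p) := by
    intro k l hkl hlK j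
    have h := hxp k l hkl hlK j
    have ha : (0:ℝ) ≤ |x l j - x k j| := abs_nonneg _
    have h2 : (|x l j - x k j| ^ p) ^ ((1:ℝ)/p) ≤ ω k l ^ ((1:ℝ)/p) :=
      Real.rpow_le_rpow (Real.rpow_nonneg ha p) h h1p.le
    rwa [← Real.rpow_mul ha, mul_one_div, div_self hpne, Real.rpow_one] at h2
  have hfsum : ∀ k l, k ≤ l → l ≤ K → ∀ z : Fin n → ℝ, ∀ i : Fin n,
      |∑ j, f i j z * (x l j - x k j)| ≤ (d:ℝ) * M₀ * ω k l ^ ((1:ℝ)/p) := by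
    intro k l hkl hlK z i
    calc |∑ j, f i j z * (x l j - x k j)| ≤ ∑ j, |f i j z * (x l j - x k j)| :=
          Finset.abs_sum_le_sum_abs _ _
      _ ≤ ∑ _j : Fin d, M₀ * ω k l ^ ((1:ℝ)/p) := Finset.sum_le_sum fun j _ => by
          rw [abs_mul]
          exact mul_le_mul (hfb i j z) (hxb k l hkl hlK j) (abs_nonneg _) hM₀.le
      _ = (d:ℝ) * M₀ * ω k l ^ ((1:ℝ)/p) := by
          rw [Finset.sum_const, Finset.card_univ, Fintype.card_fin, nsmul_eq_mul]; ring
  -- the Euler defect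
  obtain ⟨I, hIdef⟩ : ∃ I : ℕ → ℕ → Fin n → ℝ,
      I = fun k l i => y l i - y k i - ∑ j, f i j (y k) * (x l j - x k j) := ⟨_, rfl⟩
  have hIkk : ∀ k i, I k k i = 0 := by intro k i; simp [hIdef]
  have hIstep : ∀ k i, I k (k+1) i = 0 := by
    intro k i; simp only [hIdef]; rw [heuler k i]; ring
  have hyI : ∀ k l i, y l i - y k i = I k l i + ∑ j, f i j (y k) * (x l j - x k j) := by
    intro k l i; simp only [hIdef]; ring
  have chen : ∀ k l m : ℕ, ∀ i, I k m i = I k l i + I l m i +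
      ∑ j, (f i j (y l) - f i j (y k)) * (x m j - x l j) := by
    intro k l m i
    simp only [hIdef]
    rw [show (∑ j, (f i j (y l) - f i j (y k)) * (x m j - x l j)) =
        (∑ j, f i j (y l) * (x m j - x l j)) - ∑ j, f i j (y k) * (x m j - x l j) by
      rw [← Finset.sum_sub_distrib]; exact Finset.sum_congr rfl fun j _ => by ring]
    rw [show (∑ j, f i j (y k) * (x m j - x k j)) =
        (∑ j, f i j (y k) * (x l j - x k j)) + ∑ j, f i j (y k) * (x m j - x l j) by
      rw [← Finset.sum_add_distrib]; exact Finset.sum_congr rfl fun j _ => by ring]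
    ring
  -- bound on y-increment given a bound on I
  have hEbound : ∀ k l, k ≤ l → l ≤ K → ∀ (c : ℝ), 0 ≤ c →
      (∀ i, |I k l i| ≤ c) →
      ‖y l - y k‖ ≤ c + (d:ℝ) * M₀ * ω k l ^ ((1:ℝ)/p) := by
    intro k l hkl hlK c hc hIc
    have hωnn' := hωnn k l hkl hlK
    have hrp : (0:ℝ) ≤ ω k l ^ ((1:ℝ)/p) := Real.rpow_nonneg hωnn' _
    rw [pi_norm_le_iff_of_nonneg (by have := mul_nonneg hdM0 hrp; linarith)]
    intro i
    rw [Pi.sub_apply, Real.norm_eq_abs, hyI k l i]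
    exact le_trans (abs_add_le _ _) (add_le_add (hIc i) (hfsum k l hkl hlK (y k) i))
  -- Hölder cross-term bound
  have hcross : ∀ a b c : ℕ, b ≤ c → c ≤ K → ∀ i : Fin n,
      |∑ j, (f i j (y b) - f i j (y a)) * (x c j - x b j)|
        ≤ (d:ℝ) * (M₀ * ‖y b - y a‖ ^ (γ-1)) * ω b c ^ ((1:ℝ)/p) := by
    intro a b c hbc hcK i
    calc |∑ j, (f i j (y b) - f i j (y a)) * (x c j - x b j)|
        ≤ ∑ j, |(f i j (y b) - f i j (y a)) * (x c j - x b j)| :=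
          Finset.abs_sum_le_sum_abs _ _
      _ ≤ ∑ _j : Fin d, (M₀ * ‖y b - y a‖ ^ (γ-1)) * ω b c ^ ((1:ℝ)/p) :=
          Finset.sum_le_sum fun j _ => by
            rw [abs_mul]
            exact mul_le_mul (hfh i j (y b) (y a)) (hxb b c hbc hcK j) (abs_nonneg _)
              (mul_nonneg hM₀.le (Real.rpow_nonneg (norm_nonneg _) _))
      _ = _ := by
          rw [Finset.sum_const, Finset.card_univ, Fintype.card_fin, nsmul_eq_mul]; ring
  -- crude cross-term bound
  have hcross2 : ∀ a b c : ℕ, b ≤ c → c ≤ K → ∀ i : Fin n,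
      |∑ j, (f i j (y b) - f i j (y a)) * (x c j - x b j)|
        ≤ 2 * D * ω b c ^ ((1:ℝ)/p) := by
    intro a b c hbc hcK i
    have hrp : (0:ℝ) ≤ ω b c ^ ((1:ℝ)/p) := Real.rpow_nonneg (hωnn b c hbc hcK) _
    calc |∑ j, (f i j (y b) - f i j (y a)) * (x c j - x b j)|
        ≤ ∑ j, |(f i j (y b) - f i j (y a)) * (x c j - x b j)| :=
          Finset.abs_sum_le_sum_abs _ _
      _ ≤ ∑ _j : Fin d, (2 * M₀) * ω b c ^ ((1:ℝ)/p) :=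
          Finset.sum_le_sum fun j _ => by
            rw [abs_mul]
            refine mul_le_mul ?_ (hxb b c hbc hcK j) (abs_nonneg _) (by linarith)
            have h1 : |f i j (y b) - f i j (y a)| ≤ |f i j (y b)| + |f i j (y a)| :=
              abs_sub _ _
            have h2 := hfb i j (y b); have h3 := hfb i j (y a)
            linarith
      _ = (d:ℝ) * (2 * M₀) * ω b c ^ ((1:ℝ)/p) := by
          rw [Finset.sum_const, Finset.card_univ, Fintype.card_fin, nsmul_eq_mul]; ring
      _ ≤ 2 * D * ω b c ^ ((1:ℝ)/p) := by
          have := mul_le_mul_of_nonneg_right hdM hrp; linarith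
  -- step y-increment bound
  have hystep : ∀ k, k + 1 ≤ K → ‖y (k+1) - y k‖ ≤ D * ω k (k+1) ^ ((1:ℝ)/p) := by
    intro k hk
    have hrp : (0:ℝ) ≤ ω k (k+1) ^ ((1:ℝ)/p) :=
      Real.rpow_nonneg (hωnn k (k+1) (Nat.le_succ k) hk) _
    have h := hEbound k (k+1) (Nat.le_succ k) hk 0 le_rfl
      (fun i => by rw [hIstep k i, abs_zero])
    refine le_trans h ?_
    rw [zero_add]
    exact mul_le_mul_of_nonneg_right hdM hrp
  -- Claim 1 : small blocks
  have claim1 : ∀ r k m, m ≤ k + r → k ≤ m → m ≤ K → ω k m ≤ δ →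
      ∀ i, |I k m i| ≤ M₁ * ω k m ^ (γ/p) := by
    intro r
    induction r with
    | zero =>
      intro k m hmk hkm hmK _ i
      have hkm' : m = k := le_antisymm (by omega) hkm
      have h0 : I k m i = 0 := by rw [hkm', hIkk]
      rw [h0, abs_zero]
      exact mul_nonneg hM₁0.le (Real.rpow_nonneg (hωnn k m hkm hmK) _)
    | succ r ih =>
      intro k m hmk hkm hmK hωδ i
      rcases eq_or_lt_of_le hkm with heq | hlt
      · have h0 : I k m i = 0 := by rw [← heq, hIkk]
        rw [h0, abs_zero]
        exact mul_nonneg hM₁0.le (Real.rpow_nonneg (hωnn k m hkm hmK) _)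
      have hkK : k ≤ K := le_trans hkm hmK
      have hW0 : 0 ≤ ω k m := hωnn k m hkm hmK
      -- choose the splitting point
      set S := (Finset.Ico k m).filter (fun l => ω k l ≤ ω k m / 2) with hS
      have hkS : k ∈ S := by
        rw [hS, Finset.mem_filter, Finset.mem_Ico]
        exact ⟨⟨le_rfl, hlt⟩, by rw [hdiag k hkK]; linarith⟩
      have hSne : S.Nonempty := ⟨k, hkS⟩
      set l := S.max' hSne with hldef
      have hlS : l ∈ S := S.max'_mem hSne
      rw [hS, Finset.mem_filter, Finset.mem_Ico] at hlS
      obtain ⟨⟨hkl, hlm⟩, hωkl⟩ := hlS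
      have hl1m : l + 1 ≤ m := hlm
      have hlK : l ≤ K := le_trans (le_of_lt hlm) hmK
      have hl1K : l + 1 ≤ K := le_trans hl1m hmK
      have hω2 : ω (l+1) m ≤ ω k m / 2 := by
        rcases eq_or_lt_of_le hl1m with he | hlt2
        · rw [he, hdiag m hmK]; linarith
        · by_contra hcon
          push_neg at hcon
          have h1 := hsuper k (l+1) m (by omega) (le_of_lt hlt2) hmK
          have hmem : l + 1 ∈ S := by
            rw [hS, Finset.mem_filter, Finset.mem_Ico]
            exact ⟨⟨by omega, hlt2⟩, by linarith⟩
          have := S.le_max' (l+1) hmem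
          rw [← hldef] at this
          omega
      have hω1nn : 0 ≤ ω k l := hωnn k l hkl hlK
      have hω2nn : 0 ≤ ω (l+1) m := hωnn _ _ hl1m hmK
      have hωklW : ω k l ≤ ω k m := by linarith
      have hωklδ : ω k l ≤ δ := le_trans hωklW hωδ
      have hω2W : ω (l+1) m ≤ ω k m := by linarith
      have hω2δ : ω (l+1) m ≤ δ := le_trans hω2W hωδ
      have hωmidW : ω l (l+1) ≤ ω k m := hmono k l (l+1) m hkl (Nat.le_succ l) hl1m hmK
      have hωmidnn : 0 ≤ ω l (l+1) := hωnn l (l+1) (Nat.le_succ l) hl1K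
      have hωlmW : ω l m ≤ ω k m := hmono k l m m hkl (le_of_lt hlm) le_rfl hmK
      have hωlmnn : 0 ≤ ω l m := hωnn l m (le_of_lt hlm) hmK
      -- induction hypotheses
      have hI1 : ∀ i, |I k l i| ≤ M₁ * ω k l ^ (γ/p) :=
        fun i => ih k l (by omega) hkl hlK hωklδ i
      have hI2 : ∀ i, |I (l+1) m i| ≤ M₁ * ω (l+1) m ^ (γ/p) :=
        fun i => ih (l+1) m (by omega) hl1m hmK hω2δ i
      -- abbreviations
      have hWrp : (0:ℝ) ≤ ω k m ^ (γ/p) := Real.rpow_nonneg hW0 _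
      have hWgp : (0:ℝ) ≤ ω k m ^ ((γ-1)/p) := Real.rpow_nonneg hW0 _
      have hWadd : ω k m ^ (γ/p) = ω k m ^ ((γ-1)/p) * ω k m ^ ((1:ℝ)/p) := by
        rw [← hsplit, Real.rpow_add' hW0 (by rw [hsplit]; exact hθne)]
      -- y-increment over [k,l]
      have hEkl : ‖y l - y k‖ ≤ C₁ * ω k l ^ ((1:ℝ)/p) := by
        have hδpow : 0 ≤ M₁ * δ ^ ((γ-1)/p) := mul_nonneg hM₁0.le hδgp0.le
        have hrp1 : (0:ℝ) ≤ ω k l ^ ((1:ℝ)/p) := Real.rpow_nonneg hω1nn _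
        have h1 : ∀ i, |I k l i| ≤ M₁ * δ ^ ((γ-1)/p) * ω k l ^ ((1:ℝ)/p) := by
          intro i
          refine le_trans (hI1 i) ?_
          have hadd : ω k l ^ (γ/p) = ω k l ^ ((γ-1)/p) * ω k l ^ ((1:ℝ)/p) := by
            rw [← hsplit, Real.rpow_add' hω1nn (by rw [hsplit]; exact hθne)]
          rw [hadd, ← mul_assoc]
          refine mul_le_mul_of_nonneg_right ?_ hrp1
          exact mul_le_mul_of_nonneg_left
            (Real.rpow_le_rpow hω1nn hωklδ hgp0.le) hM₁0.le
        have h2 := hEbound k l hkl hlK _ (mul_nonneg hδpow hrp1) h1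
        refine le_trans h2 ?_
        rw [hC₁def, add_mul]
        have := mul_le_mul_of_nonneg_right hdM hrp1
        linarith
      -- C₁ ^ (γ-1) bound
      have hδs0 : (0:ℝ) ≤ δ ^ s := (Real.rpow_pos_of_pos hδ0 s).le
      have hDγ10 : (0:ℝ) ≤ D ^ (γ-1) := (Real.rpow_pos_of_pos hD0 _).le
      have hC₁γ : C₁ ^ (γ-1) ≤ M₁ * δ ^ s + D ^ (γ-1) := by
        have h1 : C₁ ^ (γ-1) ≤ (M₁ * δ ^ ((γ-1)/p)) ^ (γ-1) + D ^ (γ-1) := by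
          rw [hC₁def]
          exact my_rpow_add_le (mul_nonneg hM₁0.le hδgp0.le) hD0.le hγ1' hγ2
        have h2 : (M₁ * δ ^ ((γ-1)/p)) ^ (γ-1) = M₁ ^ (γ-1) * δ ^ s := by
          rw [Real.mul_rpow hM₁0.le hδgp0.le, ← Real.rpow_mul hδ0.le,
            show (γ-1)/p * (γ-1) = s from by rw [hsdef]; ring]
        have h3 : M₁ ^ (γ-1) ≤ M₁ := by
          calc M₁ ^ (γ-1) ≤ M₁ ^ (1:ℝ) := Real.rpow_le_rpow_of_exponent_le hM₁1 hγ2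
            _ = M₁ := Real.rpow_one _
        have h4 := mul_le_mul_of_nonneg_right h3 hδs0
        rw [h2] at h1
        linarith
      have hMδD : (0:ℝ) ≤ M₁ * δ ^ s + D ^ (γ-1) := by
        have := mul_nonneg hM₁0.le hδs0; linarith
      -- cross term A
      have hA : |∑ j, (f i j (y l) - f i j (y k)) * (x m j - x l j)|
          ≤ D * (M₁ * δ ^ s + D ^ (γ-1)) * ω k m ^ (γ/p) := by
        have h0 := hcross k l m (le_of_lt hlm) hmK i
        have hrp1 : (0:ℝ) ≤ ω k l ^ ((1:ℝ)/p) := Real.rpow_nonneg hω1nn _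
        have h1 : ‖y l - y k‖ ^ (γ-1) ≤ (C₁ * ω k l ^ ((1:ℝ)/p)) ^ (γ-1) :=
          Real.rpow_le_rpow (norm_nonneg _) hEkl hγ1'
        have h2 : (C₁ * ω k l ^ ((1:ℝ)/p)) ^ (γ-1) = C₁ ^ (γ-1) * ω k l ^ ((γ-1)/p) := by
          rw [Real.mul_rpow hC₁0.le hrp1, ← Real.rpow_mul hω1nn,
            show 1/p * (γ-1) = (γ-1)/p from by ring]
        have h3 : ω k l ^ ((γ-1)/p) ≤ ω k m ^ ((γ-1)/p) :=
          Real.rpow_le_rpow hω1nn hωklW hgp0.le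
        have hC₁γ0 : 0 ≤ C₁ ^ (γ-1) := (Real.rpow_pos_of_pos hC₁0 _).le
        have hnrm : ‖y l - y k‖ ^ (γ-1) ≤ (M₁ * δ ^ s + D ^ (γ-1)) * ω k m ^ ((γ-1)/p) :=
          calc ‖y l - y k‖ ^ (γ-1) ≤ C₁ ^ (γ-1) * ω k l ^ ((γ-1)/p) := by
                rw [← h2]; exact h1
            _ ≤ C₁ ^ (γ-1) * ω k m ^ ((γ-1)/p) := mul_le_mul_of_nonneg_left h3 hC₁γ0
            _ ≤ (M₁ * δ ^ s + D ^ (γ-1)) * ω k m ^ ((γ-1)/p) :=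
                mul_le_mul_of_nonneg_right hC₁γ hWgp
        have hxlm : ω l m ^ ((1:ℝ)/p) ≤ ω k m ^ ((1:ℝ)/p) :=
          Real.rpow_le_rpow hωlmnn hωlmW h1p.le
        have hN0 : 0 ≤ ‖y l - y k‖ ^ (γ-1) := Real.rpow_nonneg (norm_nonneg _) _
        have s1 : (d:ℝ) * (M₀ * ‖y l - y k‖ ^ (γ-1))
            ≤ D * ((M₁ * δ ^ s + D ^ (γ-1)) * ω k m ^ ((γ-1)/p)) := by
          have a1 : (d:ℝ) * M₀ * ‖y l - y k‖ ^ (γ-1) ≤ D * ‖y l - y k‖ ^ (γ-1) :=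
            mul_le_mul_of_nonneg_right hdM hN0
          have a2 := mul_le_mul_of_nonneg_left hnrm hD0.le
          calc (d:ℝ) * (M₀ * ‖y l - y k‖ ^ (γ-1))
              = (d:ℝ) * M₀ * ‖y l - y k‖ ^ (γ-1) := by ring
            _ ≤ D * ‖y l - y k‖ ^ (γ-1) := a1
            _ ≤ _ := a2
        calc |∑ j, (f i j (y l) - f i j (y k)) * (x m j - x l j)|
            ≤ (d:ℝ) * (M₀ * ‖y l - y k‖ ^ (γ-1)) * ω l m ^ ((1:ℝ)/p) := h0
          _ ≤ D * ((M₁ * δ ^ s + D ^ (γ-1)) * ω k m ^ ((γ-1)/p)) * ω k m ^ ((1:ℝ)/p) :=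
              mul_le_mul s1 hxlm (Real.rpow_nonneg hωlmnn _)
                (mul_nonneg hD0.le (mul_nonneg hMδD hWgp))
          _ = D * (M₁ * δ ^ s + D ^ (γ-1)) * ω k m ^ (γ/p) := by rw [hWadd]; ring
      -- cross term B
      have hB : |∑ j, (f i j (y (l+1)) - f i j (y l)) * (x m j - x (l+1) j)|
          ≤ D * D ^ (γ-1) * ω k m ^ (γ/p) := by
        have h0 := hcross l (l+1) m hl1m hmK i
        have hEstep := hystep l hl1K
        have hrpmid : (0:ℝ) ≤ ω l (l+1) ^ ((1:ℝ)/p) := Real.rpow_nonneg hωmidnn _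
        have h1 : ‖y (l+1) - y l‖ ^ (γ-1) ≤ (D * ω l (l+1) ^ ((1:ℝ)/p)) ^ (γ-1) :=
          Real.rpow_le_rpow (norm_nonneg _) hEstep hγ1'
        have h2 : (D * ω l (l+1) ^ ((1:ℝ)/p)) ^ (γ-1)
            = D ^ (γ-1) * ω l (l+1) ^ ((γ-1)/p) := by
          rw [Real.mul_rpow hD0.le hrpmid, ← Real.rpow_mul hωmidnn,
            show 1/p * (γ-1) = (γ-1)/p from by ring]
        have h3 : ω l (l+1) ^ ((γ-1)/p) ≤ ω k m ^ ((γ-1)/p) :=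
          Real.rpow_le_rpow hωmidnn hωmidW hgp0.le
        have hnrm : ‖y (l+1) - y l‖ ^ (γ-1) ≤ D ^ (γ-1) * ω k m ^ ((γ-1)/p) :=
          calc ‖y (l+1) - y l‖ ^ (γ-1) ≤ D ^ (γ-1) * ω l (l+1) ^ ((γ-1)/p) := by
                rw [← h2]; exact h1
            _ ≤ D ^ (γ-1) * ω k m ^ ((γ-1)/p) := mul_le_mul_of_nonneg_left h3 hDγ10
        have hx3 : ω (l+1) m ^ ((1:ℝ)/p) ≤ ω k m ^ ((1:ℝ)/p) :=
          Real.rpow_le_rpow hω2nn hω2W h1p.le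
        have hN0 : 0 ≤ ‖y (l+1) - y l‖ ^ (γ-1) := Real.rpow_nonneg (norm_nonneg _) _
        have s1 : (d:ℝ) * (M₀ * ‖y (l+1) - y l‖ ^ (γ-1))
            ≤ D * (D ^ (γ-1) * ω k m ^ ((γ-1)/p)) := by
          have a1 : (d:ℝ) * M₀ * ‖y (l+1) - y l‖ ^ (γ-1) ≤ D * ‖y (l+1) - y l‖ ^ (γ-1) :=
            mul_le_mul_of_nonneg_right hdM hN0
          have a2 := mul_le_mul_of_nonneg_left hnrm hD0.le
          calc (d:ℝ) * (M₀ * ‖y (l+1) - y l‖ ^ (γ-1))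
              = (d:ℝ) * M₀ * ‖y (l+1) - y l‖ ^ (γ-1) := by ring
            _ ≤ D * ‖y (l+1) - y l‖ ^ (γ-1) := a1
            _ ≤ _ := a2
        calc |∑ j, (f i j (y (l+1)) - f i j (y l)) * (x m j - x (l+1) j)|
            ≤ (d:ℝ) * (M₀ * ‖y (l+1) - y l‖ ^ (γ-1)) * ω (l+1) m ^ ((1:ℝ)/p) := h0
          _ ≤ D * (D ^ (γ-1) * ω k m ^ ((γ-1)/p)) * ω k m ^ ((1:ℝ)/p) :=
              mul_le_mul s1 hx3 (Real.rpow_nonneg hω2nn _)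
                (mul_nonneg hD0.le (mul_nonneg hDγ10 hWgp))
          _ = D * D ^ (γ-1) * ω k m ^ (γ/p) := by rw [hWadd]; ring
      -- halving bounds
      have hIkl' : |I k l i| ≤ M₁ * (ω k m / 2) ^ (γ/p) :=
        le_trans (hI1 i) (mul_le_mul_of_nonneg_left
          (Real.rpow_le_rpow hω1nn hωkl hθ0.le) hM₁0.le)
      have hI2' : |I (l+1) m i| ≤ M₁ * (ω k m / 2) ^ (γ/p) :=
        le_trans (hI2 i) (mul_le_mul_of_nonneg_left
          (Real.rpow_le_rpow hω2nn hω2 hθ0.le) hM₁0.le)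
      have h2sum : 2 * (ω k m / 2) ^ (γ/p) = (1 - 2*ε) * ω k m ^ (γ/p) := by
        rw [Real.div_rpow hW0 (by norm_num : (0:ℝ) ≤ 2), ← h2e,
          Real.rpow_sub two_pos, Real.rpow_one]
        ring
      have h2sum' : M₁ * (2 * (ω k m / 2) ^ (γ/p)) = M₁ * ((1 - 2*ε) * ω k m ^ (γ/p)) := by
        rw [h2sum]
      -- decomposition
      have hdec : I k m i = I k l i + I (l+1) m i
          + (∑ j, (f i j (y (l+1)) - f i j (y l)) * (x m j - x (l+1) j))
          + (∑ j, (f i j (y l) - f i j (y k)) * (x m j - x l j)) := by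
        rw [chen k l m i, chen l (l+1) m i, hIstep l i]; ring
      have habs : |I k m i| ≤ |I k l i| + |I (l+1) m i|
          + |∑ j, (f i j (y (l+1)) - f i j (y l)) * (x m j - x (l+1) j)|
          + |∑ j, (f i j (y l) - f i j (y k)) * (x m j - x l j)| := by
        rw [hdec]
        exact le_trans (abs_add_le _ _) (add_le_add (le_trans (abs_add_le _ _)
          (add_le_add (abs_add_le _ _) le_rfl)) le_rfl)
      -- final arithmetic
      have key1 : D * δ ^ s * (M₁ * ω k m ^ (γ/p)) ≤ ε / 2 * (M₁ * ω k m ^ (γ/p)) :=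
        mul_le_mul_of_nonneg_right hδs (mul_nonneg hM₁0.le hWrp)
      have key2 : 2 * D ^ γ * ω k m ^ (γ/p) ≤ ε * M₁ * ω k m ^ (γ/p) :=
        mul_le_mul_of_nonneg_right hM₁ε hWrp
      have hDD : D * D ^ (γ-1) * ω k m ^ (γ/p) = D ^ γ * ω k m ^ (γ/p) := by
        nth_rewrite 1 [← Real.rpow_one D]
        rw [← Real.rpow_add hD0, show (1:ℝ) + (γ-1) = γ from by ring]
      have hεMT : 0 ≤ ε * (M₁ * ω k m ^ (γ/p)) :=
        mul_nonneg hε0.le (mul_nonneg hM₁0.le hWrp)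
      linarith [habs, hIkl', hI2', hA, hB, h2sum', key1, key2, hDD, hεMT]
  -- Claim 2 : all blocks, by chaining
  have claim2 : ∀ r k m, m ≤ k + r → k ≤ m → m ≤ K →
      ∀ i, |I k m i| ≤ M₂ * (1 + ω k m / δ) * ω k m ^ (γ/p) := by
    intro r
    induction r with
    | zero =>
      intro k m hmk hkm hmK i
      have hkm' : m = k := le_antisymm (by omega) hkm
      have h0 : I k m i = 0 := by rw [hkm', hIkk]
      rw [h0, abs_zero]
      have hW0 : 0 ≤ ω k m := hωnn k m hkm hmK
      exact mul_nonneg (mul_nonneg hM₂0.le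
        (by have := div_nonneg hW0 hδ0.le; linarith)) (Real.rpow_nonneg hW0 _)
    | succ r ih =>
      intro k m hmk hkm hmK i
      have hkK : k ≤ K := le_trans hkm hmK
      have hW0 : 0 ≤ ω k m := hωnn k m hkm hmK
      have hWrp : (0:ℝ) ≤ ω k m ^ (γ/p) := Real.rpow_nonneg hW0 _
      have hq0' : 0 ≤ ω k m / δ := div_nonneg hW0 hδ0.le
      by_cases hωδ : ω k m ≤ δ
      · have h1 := claim1 m k m (by omega) hkm hmK hωδ i
        have e1 := mul_le_mul_of_nonneg_right hM₁M₂ hWrp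
        have e2 : 0 ≤ M₂ * (ω k m / δ) * ω k m ^ (γ/p) :=
          mul_nonneg (mul_nonneg hM₂0.le hq0') hWrp
        have e3 : M₂ * (1 + ω k m / δ) * ω k m ^ (γ/p)
            = M₂ * ω k m ^ (γ/p) + M₂ * (ω k m / δ) * ω k m ^ (γ/p) := by ring
        linarith [h1, e1, e2, e3]
      · push_neg at hωδ
        have hklt : k < m := by
          rcases eq_or_lt_of_le hkm with he | h
          · exfalso; rw [← he, hdiag k hkK] at hωδ; linarith
          · exact h
        -- choose the splitting point
        set S := (Finset.Ico k m).filter (fun l => ω k l ≤ δ) with hS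
        have hkS : k ∈ S := by
          rw [hS, Finset.mem_filter, Finset.mem_Ico]
          exact ⟨⟨le_rfl, hklt⟩, by rw [hdiag k hkK]; exact hδ0.le⟩
        have hSne : S.Nonempty := ⟨k, hkS⟩
        set l := S.max' hSne with hldef
        have hlS : l ∈ S := S.max'_mem hSne
        rw [hS, Finset.mem_filter, Finset.mem_Ico] at hlS
        obtain ⟨⟨hkl, hlm⟩, hωklδ⟩ := hlS
        have hl1m : l + 1 ≤ m := hlm
        have hlK : l ≤ K := le_trans (le_of_lt hlm) hmK
        have hl1K : l + 1 ≤ K := le_trans hl1m hmK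
        have hω1nn : 0 ≤ ω k l := hωnn k l hkl hlK
        have hωklW : ω k l ≤ ω k m := hmono k k l m le_rfl hkl (le_of_lt hlm) hmK
        have hωlmW : ω l m ≤ ω k m := hmono k l m m hkl (le_of_lt hlm) le_rfl hmK
        have hωlmnn : 0 ≤ ω l m := hωnn l m (le_of_lt hlm) hmK
        have hω2W : ω (l+1) m ≤ ω k m := hmono k (l+1) m m (by omega) hl1m le_rfl hmK
        have hω2nn : 0 ≤ ω (l+1) m := hωnn _ _ hl1m hmK
        -- key power inequality : ω^(1/p) ≤ δ^(1/p-γ/p) * ω^(γ/p)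
        have keyW : 2 * D * ω k m ^ ((1:ℝ)/p) ≤ R * ω k m ^ (γ/p) := by
          have e1 : δ ^ ((γ-1)/p) ≤ ω k m ^ ((γ-1)/p) :=
            Real.rpow_le_rpow hδ0.le hωδ.le hgp0.le
          have hrp1 : (0:ℝ) ≤ ω k m ^ ((1:ℝ)/p) := Real.rpow_nonneg hW0 _
          have e2 : ω k m ^ ((1:ℝ)/p) * δ ^ ((γ-1)/p) ≤ ω k m ^ (γ/p) := by
            have := mul_le_mul_of_nonneg_left e1 hrp1
            refine le_trans this ?_
            rw [show (γ:ℝ)/p = 1/p + (γ-1)/p from by ring,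
              Real.rpow_add' hW0 (by rw [show (1:ℝ)/p + (γ-1)/p = γ/p from by ring]; exact hθne)]
          have e3 : ω k m ^ ((1:ℝ)/p) ≤ ω k m ^ (γ/p) * (δ ^ ((γ-1)/p))⁻¹ := by
            rw [← div_eq_mul_inv, le_div_iff₀ hδgp0]
            exact e2
          have e4 : δ ^ ((1:ℝ)/p - γ/p) = (δ ^ ((γ-1)/p))⁻¹ := by
            rw [show (1:ℝ)/p - γ/p = -((γ-1)/p) from by ring, Real.rpow_neg hδ0.le]
          have e5 := mul_le_mul_of_nonneg_left e3 (by linarith : (0:ℝ) ≤ 2 * D)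
          calc 2 * D * ω k m ^ ((1:ℝ)/p)
              ≤ 2 * D * (ω k m ^ (γ/p) * (δ ^ ((γ-1)/p))⁻¹) := e5
            _ = R * ω k m ^ (γ/p) := by rw [hRdef, e4]; ring
        -- piece bounds
        have hIklb : |I k l i| ≤ M₁ * ω k m ^ (γ/p) :=
          le_trans (claim1 l k l (by omega) hkl hlK hωklδ i)
            (mul_le_mul_of_nonneg_left (Real.rpow_le_rpow hω1nn hωklW hθ0.le) hM₁0.le)
        have hcA : |∑ j, (f i j (y l) - f i j (y k)) * (x m j - x l j)|
            ≤ R * ω k m ^ (γ/p) := by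
          refine le_trans (hcross2 k l m (le_of_lt hlm) hmK i) (le_trans ?_ keyW)
          exact mul_le_mul_of_nonneg_left
            (Real.rpow_le_rpow hωlmnn hωlmW h1p.le) (by linarith)
        have hcB : |∑ j, (f i j (y (l+1)) - f i j (y l)) * (x m j - x (l+1) j)|
            ≤ R * ω k m ^ (γ/p) := by
          refine le_trans (hcross2 l (l+1) m hl1m hmK i) (le_trans ?_ keyW)
          exact mul_le_mul_of_nonneg_left
            (Real.rpow_le_rpow hω2nn hω2W h1p.le) (by linarith)
        have hI2b : |I (l+1) m i| ≤ M₂ * (ω k m / δ) * ω k m ^ (γ/p) := by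
          rcases eq_or_lt_of_le hl1m with he | hlt2
          · have h0 : I (l+1) m i = 0 := by rw [he, hIkk]
            rw [h0, abs_zero]
            have : (1:ℝ) ≤ ω k m / δ := (one_le_div hδ0).2 hωδ.le
            exact mul_nonneg (mul_nonneg hM₂0.le (by linarith)) hWrp
          · have hmax : δ < ω k (l+1) := by
              by_contra hcon
              push_neg at hcon
              have hmem : l + 1 ∈ S := by
                rw [hS, Finset.mem_filter, Finset.mem_Ico]
                exact ⟨⟨by omega, hlt2⟩, hcon⟩
              have := S.le_max' (l+1) hmem
              rw [← hldef] at this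
              omega
            have hsub := hsuper k (l+1) m (by omega) (le_of_lt hlt2) hmK
            have hω' : ω (l+1) m ≤ ω k m - δ := by linarith
            have h1 := ih (l+1) m (by omega) hl1m hmK i
            refine le_trans h1 ?_
            have e1 : ω (l+1) m / δ ≤ (ω k m - δ) / δ := (div_le_div_iff_of_pos_right hδ0).2 hω'
            have e2 : (ω k m - δ) / δ = ω k m / δ - 1 := by
              rw [sub_div, div_self hδ0.ne']
            have e3 : 1 + ω (l+1) m / δ ≤ ω k m / δ := by rw [e2] at e1; linarith
            have e4 : ω (l+1) m ^ (γ/p) ≤ ω k m ^ (γ/p) :=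
              Real.rpow_le_rpow hω2nn hω2W hθ0.le
            have e5 : 0 ≤ 1 + ω (l+1) m / δ := by
              have := div_nonneg hω2nn hδ0.le; linarith
            refine mul_le_mul (mul_le_mul_of_nonneg_left e3 hM₂0.le) e4
              (Real.rpow_nonneg hω2nn _) ?_
            exact mul_nonneg hM₂0.le (div_nonneg hW0 hδ0.le)
        -- decomposition
        have hdec : I k m i = I k l i + I (l+1) m i
            + (∑ j, (f i j (y (l+1)) - f i j (y l)) * (x m j - x (l+1) j))
            + (∑ j, (f i j (y l) - f i j (y k)) * (x m j - x l j)) := by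
          rw [chen k l m i, chen l (l+1) m i, hIstep l i]; ring
        have habs : |I k m i| ≤ |I k l i| + |I (l+1) m i|
            + |∑ j, (f i j (y (l+1)) - f i j (y l)) * (x m j - x (l+1) j)|
            + |∑ j, (f i j (y l) - f i j (y k)) * (x m j - x l j)| := by
          rw [hdec]
          exact le_trans (abs_add_le _ _) (add_le_add (le_trans (abs_add_le _ _)
            (add_le_add (abs_add_le _ _) le_rfl)) le_rfl)
        have hM₂T : M₂ * ω k m ^ (γ/p)
            = M₁ * ω k m ^ (γ/p) + 2 * R * ω k m ^ (γ/p) := by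
          rw [hM₂def]; ring
        linarith [habs, hIklb, hI2b, hcA, hcB, hM₂T]
  -- conclusion
  intro k l hkl hlK
  have hW0 : 0 ≤ ω k l := hωnn k l hkl hlK
  have hWrp : (0:ℝ) ≤ ω k l ^ (γ/p) := Real.rpow_nonneg hW0 _
  have hrp1 : (0:ℝ) ≤ ω k l ^ ((1:ℝ)/p) := Real.rpow_nonneg hW0 _
  have hIb : ∀ i, |I k l i| ≤ M * ω k l ^ (γ/p) := by
    intro i
    refine le_trans (claim2 l k l (by omega) hkl hlK i) ?_
    have hq : ω k l / δ ≤ Ω / δ := (div_le_div_iff_of_pos_right hδ0).2 (hωΩ k l hkl hlK)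
    rw [hMdef]
    exact mul_le_mul_of_nonneg_right
      (mul_le_mul_of_nonneg_left (by linarith) hM₂0.le) hWrp
  constructor
  · intro i
    have h := hIb i
    rw [hIdef] at h
    exact h
  · intro i
    have h1 := hIb i
    have h2 := hfsum k l hkl hlK (y k) i
    have h3 : |y l i - y k i| ≤ M * ω k l ^ (γ/p) + (d:ℝ) * M₀ * ω k l ^ ((1:ℝ)/p) := by
      rw [hyI k l i]
      exact le_trans (abs_add_le _ _) (add_le_add h1 h2)
    refine le_trans h3 ?_
    rw [hCdef, add_mul]
    have hWadd : ω k l ^ (γ/p) = ω k l ^ ((γ-1)/p) * ω k l ^ ((1:ℝ)/p) := by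
      rw [← hsplit, Real.rpow_add' hW0 (by rw [hsplit]; exact hθne)]
    have e1 : ω k l ^ ((γ-1)/p) ≤ Ω ^ ((γ-1)/p) :=
      Real.rpow_le_rpow hW0 (hωΩ k l hkl hlK) hgp0.le
    have e2 : M * ω k l ^ (γ/p) ≤ M * Ω ^ ((γ-1)/p) * ω k l ^ ((1:ℝ)/p) := by
      rw [hWadd, ← mul_assoc]
      exact mul_le_mul_of_nonneg_right (mul_le_mul_of_nonneg_left e1 hM0.le) hrp1
    have e3 : (d:ℝ) * M₀ * ω k l ^ ((1:ℝ)/p) ≤ D * ω k l ^ ((1:ℝ)/p) :=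
      mul_le_mul_of_nonneg_right hdM hrp1
    linarith
end

section
/- In the setting of the discrete Euler scheme with $1 \le p < \gamma \le 2$ (superadditive control $\omega_{kl}$, points $x_k$ with $|x_l - x_k|^p \le \omega_{kl}$, coefficients $f$ bounded by $M_0$ with Hölder-$(\gamma-1)$ constant $M_0$, and in addition $f$ differentiable with $|Df| \le M_0$ and $|Df(y)-Df(z)| \le M_0|y-z|^{\gamma-1}$), let $y_k$ and $\tilde{y}_k$ be the Euler iterates $y_{k+1} = y_k + f(y_k)(x_{k+1}-x_k)$ starting from initial values $y_0$ and $\tilde{y}_0$ respectively. Then there exists $M' > 0$, depending only on $n, d, \gamma, p, \omega_{0K}$ and $M_0$, such that $|\tilde{y}_k - y_k| \le M' \max_i |\tilde{y}^i_0 - y^i_0|$ for all $0 \le k \le K$. -/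
/-!
Write `J_{kl} = w_l - w_k - c_k (x_l - x_k)` for the local error of an Euler sequence
`w_{k+1} = w_k + c_k (x_{k+1} - x_k)`. It vanishes on single steps and
`J_{kl} = J_{km} + J_{ml} + (c_m - c_k)(x_l - x_m)`. Splitting `[k, l]` where the control `ω` is
halved on both sides and inducting on `l - k` gives `‖J_{kl}‖ ≤ C ω_{kl}^{γ/p}` whenever `ω_{kl}`
is small: the two halves contribute at most `2^{1 - γ/p} < 1` times the bound, which leaves room
for the cross terms. This works for `y` (`c_k = f(y_k)`, with `f` `(γ-1)`-Hölder) and then for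
`z = ỹ - y` (`c_k = f(ỹ_k) - f(y_k)`), where the Hölder continuity of `Df` makes `‖c_m - c_k‖` of
order `ω_{km}^{(γ-1)/p} ‖z_k‖`, so that `‖J_{kl}‖ ≤ D ω_{kl}^{γ/p} ‖z_k‖`. Hence `‖z_l‖ ≤ F ‖z_k‖`
when `ω_{kl}` is small, and `[0, K]` is a chain of at most `⌈ω_{0K} / L⌉` such intervals joined by
single steps, each of which also multiplies `‖z‖` by at most `F`.
-/

open Filter Topology

namespace EulerScheme

structure IsControl (ω : ℕ → ℕ → ℝ) (K : ℕ) : Prop where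
  nonneg : ∀ k l, k ≤ l → l ≤ K → 0 ≤ ω k l
  superadd : ∀ k l m, k ≤ l → l ≤ m → m ≤ K → ω k l + ω l m ≤ ω k m

namespace IsControl

variable {ω : ℕ → ℕ → ℝ} {K : ℕ}

theorem self_eq_zero (hω : IsControl ω K) {k : ℕ} (hk : k ≤ K) : ω k k = 0 :=
  le_antisymm (by linarith [hω.superadd k k k le_rfl le_rfl hk]) (hω.nonneg k k le_rfl hk)

theorem mono (hω : IsControl ω K) {k k' l' l : ℕ} (hk : k ≤ k') (hkl : k' ≤ l') (hl : l' ≤ l)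
    (hlK : l ≤ K) : ω k' l' ≤ ω k l := by
  linarith [hω.superadd k k' l' hk hkl (hl.trans hlK), hω.superadd k l' l (hk.trans hkl) hl hlK,
    hω.nonneg k k' hk (hkl.trans (hl.trans hlK)), hω.nonneg l' l hl hlK]

theorem rpow_nonneg (hω : IsControl ω K) {k l : ℕ} (hkl : k ≤ l) (hlK : l ≤ K) (s : ℝ) :
    0 ≤ ω k l ^ s :=
  Real.rpow_nonneg (hω.nonneg k l hkl hlK) s

theorem rpow_inv_mono (hω : IsControl ω K) {p : ℝ} (hp : 0 ≤ p) {k k' l' l : ℕ} (hk : k ≤ k')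
    (hkl : k' ≤ l') (hl : l' ≤ l) (hlK : l ≤ K) : ω k' l' ^ p⁻¹ ≤ ω k l ^ p⁻¹ :=
  Real.rpow_le_rpow (hω.nonneg k' l' hkl (hl.trans hlK)) (hω.mono hk hkl hl hlK) (inv_nonneg.2 hp)

theorem rpow_inv_rpow_mono (hω : IsControl ω K) {p γ : ℝ} (hp : 0 ≤ p) (hγ : 0 ≤ γ)
    {k k' l' l : ℕ} (hk : k ≤ k') (hkl : k' ≤ l') (hl : l' ≤ l) (hlK : l ≤ K) :
    (ω k' l' ^ p⁻¹) ^ γ ≤ (ω k l ^ p⁻¹) ^ γ :=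
  Real.rpow_le_rpow (hω.rpow_nonneg hkl (hl.trans hlK) _) (hω.rpow_inv_mono hp hk hkl hl hlK) hγ

theorem exists_split (hω : IsControl ω K) {k l : ℕ} {t : ℝ} (hkl : k < l) (hlK : l ≤ K)
    (ht : 0 ≤ t) (htl : t ≤ ω k l) :
    ∃ m, k ≤ m ∧ m < l ∧ ω k m ≤ t ∧ ω (m + 1) l ≤ ω k l - t := by
  classical
  have hPk : ω k k ≤ t := by rwa [hω.self_eq_zero (by omega)]
  set m := Nat.findGreatest (fun m => ω k m ≤ t) (l - 1)
  have hml : m < l := by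
    have := Nat.findGreatest_le (P := fun m => ω k m ≤ t) (l - 1); omega
  have hkm : k ≤ m := Nat.le_findGreatest (by omega) hPk
  refine ⟨m, hkm, hml, Nat.findGreatest_spec (P := fun m => ω k m ≤ t) (by omega) hPk, ?_⟩
  rcases (show m + 1 ≤ l from hml).eq_or_lt with hl | hl
  · rw [hl, hω.self_eq_zero hlK]; linarith
  · have : ¬ ω k (m + 1) ≤ t := Nat.findGreatest_is_greatest (Nat.lt_succ_self m) (by omega)
    linarith [hω.superadd k (m + 1) l (by omega) hl.le hlK]

theorem bisection_induction (hω : IsControl ω K) {P : ℕ → ℕ → Prop} (hP : ∀ k, k ≤ K → P k k)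
    (hsplit : ∀ k m l, k ≤ m → m < l → l ≤ K → ω k m ≤ ω k l / 2 → ω (m + 1) l ≤ ω k l / 2 →
      P k m → P (m + 1) l → P k l)
    {k l : ℕ} (hkl : k ≤ l) (hlK : l ≤ K) : P k l := by
  induction hn : l - k using Nat.strong_induction_on generalizing k l with
  | _ n ih =>
    rcases hkl.eq_or_lt with rfl | hlt
    · exact hP k hlK
    have hW := hω.nonneg k l hkl hlK
    obtain ⟨m, hkm, hml, hm, hml'⟩ :=
      hω.exists_split (t := ω k l / 2) hlt hlK (by positivity) (by linarith)
    exact hsplit k m l hkm hml hlK hm (by linarith) (ih _ (by omega) hkm (by omega) rfl)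
      (ih _ (by omega) hml hlK rfl)

theorem le_pow_mul_of_local_bound (hω : IsControl ω K) {a : ℕ → ℝ} {F L : ℝ}
    (ha : ∀ k, 0 ≤ a k) (hF : 1 ≤ F) (hL : 0 ≤ L)
    (hlocal : ∀ k l, k ≤ l → l ≤ K → ω k l ≤ L → a l ≤ F * a k)
    (hstep : ∀ m, m < K → a (m + 1) ≤ F * a m) (j : ℕ) :
    ∀ k l, k ≤ l → l ≤ K → ω k l ≤ j * L → a l ≤ F ^ (2 * j + 1) * a k := by
  induction j with
  | zero =>
    intro k l hkl hlK h
    simpa using hlocal k l hkl hlK (by simp at h; linarith)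
  | succ j ih =>
    intro k l hkl hlK h
    by_cases hsmall : ω k l ≤ L
    · exact (hlocal k l hkl hlK hsmall).trans
        (mul_le_mul_of_nonneg_right (le_self_pow₀ hF (by omega)) (ha k))
    have hlt : k < l := hkl.lt_of_ne (by rintro rfl; exact hsmall (by rwa [hω.self_eq_zero hlK]))
    obtain ⟨m, hkm, hml, hm, hml'⟩ := hω.exists_split hlt hlK hL (not_le.1 hsmall).le
    have hF0 : 0 ≤ F ^ (2 * j + 1) := by positivity
    calc a l ≤ F ^ (2 * j + 1) * a (m + 1) := ih (m + 1) l hml hlK (by push_cast at h; linarith)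
      _ ≤ F ^ (2 * j + 1) * (F * (F * a k)) :=
          mul_le_mul_of_nonneg_left ((hstep m (by omega)).trans
            (mul_le_mul_of_nonneg_left (hlocal k m hkm (by omega) hm) (by linarith))) hF0
      _ = F ^ (2 * (j + 1) + 1) * a k := by ring

end IsControl

theorem rpow_eq_rpow_sub_one_mul {ρ γ : ℝ} (hρ : 0 ≤ ρ) (hγ : 1 ≤ γ) :
    ρ ^ γ = ρ ^ (γ - 1) * ρ := by
  rw [← Real.rpow_add_one' hρ (by linarith), sub_add_cancel]

theorem mul_rpow_le_self {C ρ γ : ℝ} (hρ : 0 ≤ ρ) (hγ : 1 ≤ γ) (h : C * ρ ^ (γ - 1) ≤ 1) :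
    C * ρ ^ γ ≤ ρ := by
  rw [rpow_eq_rpow_sub_one_mul hρ hγ, ← mul_assoc]
  exact mul_le_of_le_one_left hρ h

theorem rpow_sub_one_mul_le {s t a ρ γ : ℝ} (hs : 0 ≤ s) (ht : 0 ≤ t) (ha : 0 ≤ a)
    (hsa : s ≤ a * ρ) (htρ : t ≤ ρ) (hγ : 1 ≤ γ) : s ^ (γ - 1) * t ≤ a ^ (γ - 1) * ρ ^ γ := by
  have hρ : 0 ≤ ρ := ht.trans htρ
  calc s ^ (γ - 1) * t ≤ (a * ρ) ^ (γ - 1) * ρ :=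
        mul_le_mul (Real.rpow_le_rpow hs hsa (by linarith)) htρ ht (by positivity)
    _ = a ^ (γ - 1) * ρ ^ γ := by
        rw [Real.mul_rpow ha hρ, rpow_eq_rpow_sub_one_mul hρ hγ]; ring

theorem rpow_add_rpow_le_of_le_half {a b W p γ : ℝ} (hp : 0 < p) (hγ : 0 ≤ γ) (ha : 0 ≤ a)
    (hb : 0 ≤ b) (haW : a ≤ W / 2) (hbW : b ≤ W / 2) :
    (a ^ p⁻¹) ^ γ + (b ^ p⁻¹) ^ γ ≤ 2 ^ (1 - γ / p) * (W ^ p⁻¹) ^ γ := by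
  have hW : 0 ≤ W := by linarith
  have hθ : 0 ≤ γ / p := by positivity
  simp only [← Real.rpow_mul ha, ← Real.rpow_mul hb, ← Real.rpow_mul hW, inv_mul_eq_div]
  have half : ∀ c, 0 ≤ c → c ≤ W / 2 → c ^ (γ / p) ≤ W ^ (γ / p) / 2 ^ (γ / p) := by
    intro c hc hcW
    rw [← Real.div_rpow hW zero_le_two]
    exact Real.rpow_le_rpow hc hcW hθ
  rw [Real.rpow_sub two_pos, Real.rpow_one, div_mul_eq_mul_div, mul_div_assoc]
  linarith [half a ha haW, half b hb hbW]

theorem two_rpow_one_sub_div_lt_one {p γ : ℝ} (hp : 0 < p) (hpγ : p < γ) :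
    (2 : ℝ) ^ (1 - γ / p) < 1 :=
  Real.rpow_lt_one_of_one_lt_of_neg one_lt_two (by rw [sub_neg, one_lt_div hp]; exact hpγ)

theorem nonneg_of_le_one_sub_two_rpow_mul {p γ a C : ℝ} (hp : 0 < p) (hpγ : p < γ) (ha : 0 ≤ a)
    (hC : a ≤ (1 - 2 ^ (1 - γ / p)) * C) : 0 ≤ C :=
  (mul_nonneg_iff_of_pos_left (sub_pos.2 (two_rpow_one_sub_div_lt_one hp hpγ))).1 (ha.trans hC)

theorem eventually_mul_rpow_le (a : ℝ) {α c : ℝ} (hα : 0 < α) (hc : 0 < c) :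
    ∀ᶠ r in 𝓝[>] (0 : ℝ), a * r ^ α ≤ c := by
  have h : Tendsto (fun r : ℝ => a * r ^ α) (𝓝 0) (𝓝 (a * 0 ^ α)) :=
    (continuous_const.mul (Real.continuous_rpow_const hα.le)).tendsto 0
  rw [Real.zero_rpow hα.ne', mul_zero] at h
  exact nhdsWithin_le_nhds (h.eventually (eventually_le_nhds hc))

section Euler

variable {E V : Type*} [NormedAddCommGroup E] [NormedAddCommGroup V]

def IsControlledBy (x : ℕ → V) (ω : ℕ → ℕ → ℝ) (p : ℝ) (K : ℕ) : Prop :=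
  ∀ k l, k ≤ l → l ≤ K → ‖x l - x k‖ ≤ ω k l ^ p⁻¹

def HasSecondDiffBound (A : E → V) (B α : ℝ) : Prop :=
  ∀ a a' b b', ‖A b' - A a' - (A b - A a)‖ ≤ B * ‖b' - a' - (b - a)‖ + B * ‖a' - a‖ ^ α * ‖b - a‖

theorem IsControlledBy.norm_sub_le {x : ℕ → V} {ω : ℕ → ℕ → ℝ} {p : ℝ} {K : ℕ}
    (hx : IsControlledBy x ω p K) (hω : IsControl ω K) (hp : 0 ≤ p) {k k' l' l : ℕ}
    (hk : k ≤ k') (hkl : k' ≤ l') (hl : l' ≤ l) (hlK : l ≤ K) : ‖x l' - x k'‖ ≤ ω k l ^ p⁻¹ :=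
  (hx k' l' hkl (hl.trans hlK)).trans (hω.rpow_inv_mono hp hk hkl hl hlK)

theorem HasSecondDiffBound.norm_sub_le {A : E → V} {B α : ℝ} (hA : HasSecondDiffBound A B α)
    (u v : E) : ‖A u - A v‖ ≤ B * ‖u - v‖ := by
  simpa using hA v v v u

theorem norm_sub_le_of_two_steps {u v w : E} {B ρ : ℝ} (hB : 0 ≤ B)
    (hρ : 0 ≤ ρ) (hρ1 : ρ ≤ 1) (hvu : ‖v - u‖ ≤ (1 + B) * ρ * ‖u‖) (hwv : ‖w - v‖ ≤ B * ρ * ‖v‖) :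
    ‖w - u‖ ≤ (1 + 2 * B) ^ 2 * ρ * ‖u‖ := by
  have hv : ‖v‖ ≤ (2 + B) * ‖u‖ := by
    nlinarith [norm_le_norm_add_norm_sub' v u, mul_le_of_le_one_right (norm_nonneg u) hρ1]
  have hwv' : ‖w - v‖ ≤ B * (2 + B) * ρ * ‖u‖ :=
    hwv.trans (by nlinarith [mul_le_mul_of_nonneg_left hv (mul_nonneg hB hρ)])
  nlinarith [norm_sub_le_norm_sub_add_norm_sub w v u, mul_nonneg hρ (norm_nonneg u),
    mul_nonneg (mul_nonneg hB hB) (mul_nonneg hρ (norm_nonneg u))]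

variable [NormedSpace ℝ E] [NormedSpace ℝ V]

theorem HasSecondDiffBound.of_fderiv {G : Type*} [NormedAddCommGroup G] [NormedSpace ℝ G]
    {g : E → G} {M α : ℝ} (hg : Differentiable ℝ g) (hD : ∀ v, ‖fderiv ℝ g v‖ ≤ M)
    (hDh : ∀ v w, ‖fderiv ℝ g v - fderiv ℝ g w‖ ≤ M * ‖v - w‖ ^ α) :
    HasSecondDiffBound g M α := by
  intro a a' b b'
  have hlip : ‖g b' - g (a' + (b - a))‖ ≤ M * ‖b' - a' - (b - a)‖ := by
    rw [sub_sub b' a' (b - a)]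
    exact convex_univ.norm_image_sub_le_of_norm_fderiv_le (fun v _ => hg v) (fun v _ => hD v)
      (Set.mem_univ _) (Set.mem_univ _)
  have hderiv : ∀ v, HasFDerivAt (fun v => g (a' + v) - g (a + v))
      (fderiv ℝ g (a' + v) - fderiv ℝ g (a + v)) v := fun v =>
    ((hasFDerivAt_comp_add_left a').2 (hg _).hasFDerivAt).sub
      ((hasFDerivAt_comp_add_left a).2 (hg _).hasFDerivAt)
  have hshift : ‖g (a' + (b - a)) - g (a + (b - a)) - (g (a' + 0) - g (a + 0))‖ ≤
      M * ‖a' - a‖ ^ α * ‖b - a - 0‖ :=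
    convex_univ.norm_image_sub_le_of_norm_hasFDerivWithin_le
      (fun v _ => (hderiv v).hasFDerivWithinAt)
      (fun v _ => by simpa using hDh (a' + v) (a + v)) (Set.mem_univ 0) (Set.mem_univ (b - a))
  rw [add_sub_cancel, add_zero, add_zero, sub_zero] at hshift
  calc ‖g b' - g a' - (g b - g a)‖
      = ‖(g b' - g (a' + (b - a))) + (g (a' + (b - a)) - g b - (g a' - g a))‖ := by
        congr 1; abel
    _ ≤ _ := (norm_add_le _ _).trans (add_le_add hlip hshift)

def IsEulerSeq (c : ℕ → V →L[ℝ] E) (x : ℕ → V) (w : ℕ → E) : Prop :=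
  ∀ k, w (k + 1) = w k + c k (x (k + 1) - x k)

def eulerRemainder (c : ℕ → V →L[ℝ] E) (x : ℕ → V) (w : ℕ → E) (k l : ℕ) : E :=
  w l - w k - c k (x l - x k)

variable {c : ℕ → V →L[ℝ] E} {x : ℕ → V} {w : ℕ → E}

theorem eulerRemainder_add (c : ℕ → V →L[ℝ] E) (x : ℕ → V) (w : ℕ → E) (k m l : ℕ) :
    eulerRemainder c x w k l =
      eulerRemainder c x w k m + eulerRemainder c x w m l + (c m - c k) (x l - x m) := by
  simp only [eulerRemainder, sub_apply, map_sub]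
  abel

theorem norm_sub_le_norm_eulerRemainder_add (c : ℕ → V →L[ℝ] E) (x : ℕ → V) (w : ℕ → E)
    (k l : ℕ) : ‖w l - w k‖ ≤ ‖eulerRemainder c x w k l‖ + ‖c k‖ * ‖x l - x k‖ := by
  calc ‖w l - w k‖ = ‖eulerRemainder c x w k l + c k (x l - x k)‖ := by
        rw [eulerRemainder, sub_add_cancel]
    _ ≤ _ := (norm_add_le _ _).trans (by gcongr; exact (c k).le_opNorm _)

theorem norm_sub_le_of_norm_eulerRemainder_le {k l : ℕ} {B C ρ s γ : ℝ} (hB : 0 ≤ B)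
    (hs : 0 ≤ s) (hρ : 0 ≤ ρ) (hγ : 1 ≤ γ) (hJ : ‖eulerRemainder c x w k l‖ ≤ C * ρ ^ γ * s)
    (hc : ‖c k‖ ≤ B * s) (hx : ‖x l - x k‖ ≤ ρ) (hCρ : C * ρ ^ (γ - 1) ≤ 1) :
    ‖w l - w k‖ ≤ (1 + B) * ρ * s := by
  have hcx : ‖c k‖ * ‖x l - x k‖ ≤ B * s * ρ := mul_le_mul hc hx (norm_nonneg _) (by positivity)
  have hCs : C * ρ ^ γ * s ≤ ρ * s :=
    mul_le_mul_of_nonneg_right (mul_rpow_le_self hρ hγ hCρ) hs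
  linarith [norm_sub_le_norm_eulerRemainder_add c x w k l]

namespace IsEulerSeq

theorem eulerRemainder_succ (hw : IsEulerSeq c x w) (k : ℕ) :
    eulerRemainder c x w k (k + 1) = 0 := by
  simp [eulerRemainder, hw k]

theorem norm_sub_succ_le (hw : IsEulerSeq c x w) (k : ℕ) :
    ‖w (k + 1) - w k‖ ≤ ‖c k‖ * ‖x (k + 1) - x k‖ := by
  rw [hw k, add_sub_cancel_left]
  exact (c k).le_opNorm _

theorem norm_succ_le (hw : IsEulerSeq c x w) {k : ℕ} {B : ℝ} (hc : ‖c k‖ ≤ B * ‖w k‖) :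
    ‖w (k + 1)‖ ≤ (1 + B * ‖x (k + 1) - x k‖) * ‖w k‖ := by
  have := mul_le_mul_of_nonneg_right hc (norm_nonneg (x (k + 1) - x k))
  linarith [norm_le_norm_add_norm_sub' (w (k + 1)) (w k), hw.norm_sub_succ_le k]

theorem norm_eulerRemainder_le (hw : IsEulerSeq c x w) (k m l : ℕ) :
    ‖eulerRemainder c x w k l‖ ≤ ‖eulerRemainder c x w k m‖ + ‖eulerRemainder c x w (m + 1) l‖
      + ‖c m - c k‖ * ‖x (m + 1) - x m‖ + ‖c (m + 1) - c k‖ * ‖x l - x (m + 1)‖ := by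
  rw [eulerRemainder_add c x w k (m + 1) l, eulerRemainder_add c x w k m (m + 1),
    hw.eulerRemainder_succ, add_zero]
  linarith [norm_add₄_le (a := eulerRemainder c x w k m) (b := (c m - c k) (x (m + 1) - x m))
      (c := eulerRemainder c x w (m + 1) l) (d := (c (m + 1) - c k) (x l - x (m + 1))),
    (c m - c k).le_opNorm (x (m + 1) - x m), (c (m + 1) - c k).le_opNorm (x l - x (m + 1))]

theorem norm_sub_le_and_norm_succ_sub_le (hw : IsEulerSeq c x w) {k m : ℕ} {B D ρ γ : ℝ}
    (hB : 0 ≤ B) (hρ : 0 ≤ ρ) (hρ1 : ρ ≤ 1) (hγ : 1 ≤ γ) (hc : ∀ j, ‖c j‖ ≤ B * ‖w j‖)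
    (hJ : ‖eulerRemainder c x w k m‖ ≤ D * ρ ^ γ * ‖w k‖) (hDρ : D * ρ ^ (γ - 1) ≤ 1)
    (hxm : ‖x m - x k‖ ≤ ρ) (hxm1 : ‖x (m + 1) - x m‖ ≤ ρ) :
    ‖w m - w k‖ ≤ (1 + B) * ρ * ‖w k‖ ∧ ‖w (m + 1) - w k‖ ≤ (1 + 2 * B) ^ 2 * ρ * ‖w k‖ := by
  have hm := norm_sub_le_of_norm_eulerRemainder_le hB (norm_nonneg _) hρ hγ hJ (hc k) hxm hDρ
  refine ⟨hm, norm_sub_le_of_two_steps hB hρ hρ1 hm ?_⟩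
  have := mul_le_mul (hc m) hxm1 (norm_nonneg _) (by positivity)
  linarith [hw.norm_sub_succ_le m]

theorem sub {c' : ℕ → V →L[ℝ] E} {w' : ℕ → E} (hw' : IsEulerSeq c' x w')
    (hw : IsEulerSeq c x w) : IsEulerSeq (fun k => c' k - c k) x (w' - w) := by
  intro k
  simp only [Pi.sub_apply, hw' k, hw k, sub_apply]
  abel

end IsEulerSeq

section Coefficient

variable {A : E → V →L[ℝ] E} {B γ : ℝ}

theorem norm_sub_mul_le_of_holder (hAh : ∀ u v, ‖A u - A v‖ ≤ B * ‖u - v‖ ^ (γ - 1))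
    (hB : 0 ≤ B) (hγ : 1 ≤ γ) {u v : E} {a ρ t : ℝ} (ha : 0 ≤ a) (huv : ‖u - v‖ ≤ a * ρ)
    (ht : 0 ≤ t) (htρ : t ≤ ρ) : ‖A u - A v‖ * t ≤ B * a ^ (γ - 1) * ρ ^ γ := by
  calc ‖A u - A v‖ * t ≤ B * (‖u - v‖ ^ (γ - 1) * t) := by
        rw [← mul_assoc]; exact mul_le_mul_of_nonneg_right (hAh u v) ht
    _ ≤ B * (a ^ (γ - 1) * ρ ^ γ) :=
        mul_le_mul_of_nonneg_left (rpow_sub_one_mul_le (norm_nonneg _) ht ha huv htρ hγ) hB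
    _ = B * a ^ (γ - 1) * ρ ^ γ := by ring

theorem norm_eulerRemainder_le_of_holder {y : ℕ → E} {ω : ℕ → ℕ → ℝ} {K : ℕ} {p C r : ℝ}
    (hω : IsControl ω K) (hp : 0 < p) (hpγ : p < γ) (hγ : 1 ≤ γ) (hx : IsControlledBy x ω p K)
    (hAb : ∀ u, ‖A u‖ ≤ B) (hAh : ∀ u v, ‖A u - A v‖ ≤ B * ‖u - v‖ ^ (γ - 1))
    (hy : IsEulerSeq (fun k => A (y k)) x y)
    (hC : 2 * B * (1 + 2 * B) ^ (γ - 1) ≤ (1 - 2 ^ (1 - γ / p)) * C)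
    (hr : C * r ^ (γ - 1) ≤ 1) {k l : ℕ} (hkl : k ≤ l) (hlK : l ≤ K) (hρ : ω k l ^ p⁻¹ ≤ r) :
    ‖eulerRemainder (fun k => A (y k)) x y k l‖ ≤ C * (ω k l ^ p⁻¹) ^ γ := by
  have hB : 0 ≤ B := (norm_nonneg _).trans (hAb 0)
  have hC0 : 0 ≤ C := nonneg_of_le_one_sub_two_rpow_mul hp hpγ (by positivity) hC
  revert hρ
  refine hω.bisection_induction
    (P := fun k l => ω k l ^ p⁻¹ ≤ r → ‖eulerRemainder (fun k => A (y k)) x y k l‖ ≤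
      C * (ω k l ^ p⁻¹) ^ γ) (fun k hk _ => ?_) ?_ hkl hlK
  · simp only [eulerRemainder, sub_self, map_zero, norm_zero]
    exact mul_nonneg hC0 (Real.rpow_nonneg (hω.rpow_nonneg le_rfl hk _) _)
  intro k m l hkm hml hlK hm hml' IHkm IHml hρr
  set ρ := ω k l ^ p⁻¹
  have hρ0 : 0 ≤ ρ := hω.rpow_nonneg (by omega) hlK _
  have hCρ : C * ρ ^ (γ - 1) ≤ 1 :=
    (mul_le_mul_of_nonneg_left (Real.rpow_le_rpow hρ0 hρr (by linarith)) hC0).trans hr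
  have hJkm := IHkm ((hω.rpow_inv_mono hp.le le_rfl hkm hml.le hlK).trans hρr)
  have hJml := IHml ((hω.rpow_inv_mono hp.le (by omega) hml le_rfl hlK).trans hρr)
  have hym : ‖y m - y k‖ ≤ (1 + B) * ρ * 1 :=
    norm_sub_le_of_norm_eulerRemainder_le (c := fun k => A (y k)) hB zero_le_one hρ0 hγ
      (by simpa using hJkm.trans (mul_le_mul_of_nonneg_left
        (hω.rpow_inv_rpow_mono hp.le (by linarith) le_rfl hkm hml.le hlK) hC0))
      (by simpa using hAb _) (hx.norm_sub_le hω hp.le le_rfl hkm hml.le hlK) hCρ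
  have hym1 : ‖y (m + 1) - y k‖ ≤ (1 + 2 * B) * ρ := by
    have hstep : ‖y (m + 1) - y m‖ ≤ B * ρ := (hy.norm_sub_succ_le m).trans
      (mul_le_mul (hAb _) (hx.norm_sub_le hω hp.le hkm (by omega) hml hlK) (norm_nonneg _) hB)
    linarith [norm_sub_le_norm_sub_add_norm_sub (y (m + 1)) (y m) (y k)]
  have hcross₁ := norm_sub_mul_le_of_holder (a := 1 + 2 * B) hAh hB hγ (by positivity)
    (hym.trans (by nlinarith)) (norm_nonneg _) (hx.norm_sub_le hω hp.le hkm (by omega) hml hlK)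
  have hcross₂ := norm_sub_mul_le_of_holder hAh hB hγ (by positivity) hym1 (norm_nonneg _)
    (hx.norm_sub_le hω hp.le (by omega) hml le_rfl hlK)
  have hsplit := rpow_add_rpow_le_of_le_half (γ := γ) hp (by linarith)
    (hω.nonneg k m hkm (by omega)) (hω.nonneg (m + 1) l hml hlK) hm hml'
  -- the halves give `2^{1-γ/p} C ρ^γ`, each cross term `B (1 + 2B)^{γ-1} ρ^γ`
  linarith [hy.norm_eulerRemainder_le k m l, mul_le_mul_of_nonneg_left hsplit hC0,
    mul_le_mul_of_nonneg_right hC (Real.rpow_nonneg hρ0 γ)]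

theorem norm_sub_le_of_holder {y : ℕ → E} {ω : ℕ → ℕ → ℝ} {K : ℕ} {p C r : ℝ}
    (hω : IsControl ω K) (hp : 0 < p) (hpγ : p < γ) (hγ : 1 ≤ γ) (hx : IsControlledBy x ω p K)
    (hAb : ∀ u, ‖A u‖ ≤ B) (hAh : ∀ u v, ‖A u - A v‖ ≤ B * ‖u - v‖ ^ (γ - 1))
    (hy : IsEulerSeq (fun k => A (y k)) x y)
    (hC : 2 * B * (1 + 2 * B) ^ (γ - 1) ≤ (1 - 2 ^ (1 - γ / p)) * C)
    (hr : C * r ^ (γ - 1) ≤ 1) {k l : ℕ} (hkl : k ≤ l) (hlK : l ≤ K) (hρ : ω k l ^ p⁻¹ ≤ r) :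
    ‖y l - y k‖ ≤ (1 + B) * ω k l ^ p⁻¹ := by
  have hB : 0 ≤ B := (norm_nonneg _).trans (hAb 0)
  have hρ0 := hω.rpow_nonneg hkl hlK p⁻¹
  have hC0 : 0 ≤ C := nonneg_of_le_one_sub_two_rpow_mul hp hpγ (by positivity) hC
  simpa using norm_sub_le_of_norm_eulerRemainder_le (c := fun k => A (y k)) hB zero_le_one hρ0 hγ
    (by simpa using norm_eulerRemainder_le_of_holder hω hp hpγ hγ hx hAb hAh hy hC hr hkl hlK hρ)
    (by simpa using hAb _) (hx k l hkl hlK)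
    ((mul_le_mul_of_nonneg_left (Real.rpow_le_rpow hρ0 hρ (by linarith)) hC0).trans hr)

theorem norm_sub_sub_sub_mul_le (hA : HasSecondDiffBound A B (γ - 1)) (hB : 0 ≤ B)
    (hγ₁ : 1 ≤ γ) (hγ₂ : γ ≤ 2) {G ρ t : ℝ} (hG : 1 ≤ G) (hρ : ρ ≤ 1) (ht : 0 ≤ t)
    (htρ : t ≤ ρ) {a a' b b' : E} (ha : ‖a' - a‖ ≤ G * ρ)
    (hb : ‖b' - a' - (b - a)‖ ≤ G * ρ * ‖b - a‖) :
    ‖A b' - A a' - (A b - A a)‖ * t ≤ 2 * B * G * ρ ^ γ * ‖b - a‖ := by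
  have hρ0 : 0 ≤ ρ := ht.trans htρ
  -- the linear part of the bound is of order `ρ²`, which is `≤ ρ ^ γ` only because `γ ≤ 2`
  have hsq : ρ * t ≤ ρ ^ γ :=
    calc ρ * t ≤ ρ ^ (2 : ℝ) := by rw [Real.rpow_two, sq]; exact mul_le_mul_of_nonneg_left htρ hρ0
      _ ≤ ρ ^ γ := Real.rpow_le_rpow_of_exponent_ge' hρ0 hρ (by linarith) hγ₂
  have hGγ : G ^ (γ - 1) ≤ G := by
    simpa using Real.rpow_le_rpow_of_exponent_le hG (show γ - 1 ≤ 1 by linarith)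
  have hb' : ‖b' - a' - (b - a)‖ * t ≤ G * ‖b - a‖ * ρ ^ γ :=
    calc ‖b' - a' - (b - a)‖ * t ≤ G * ρ * ‖b - a‖ * t := mul_le_mul_of_nonneg_right hb ht
      _ = G * ‖b - a‖ * (ρ * t) := by ring
      _ ≤ G * ‖b - a‖ * ρ ^ γ := mul_le_mul_of_nonneg_left hsq (by positivity)
  have ha' : ‖a' - a‖ ^ (γ - 1) * t ≤ G * ρ ^ γ :=
    (rpow_sub_one_mul_le (norm_nonneg _) ht (by linarith) ha htρ hγ₁).trans
      (mul_le_mul_of_nonneg_right hGγ (Real.rpow_nonneg hρ0 γ))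
  calc ‖A b' - A a' - (A b - A a)‖ * t
      ≤ B * (‖b' - a' - (b - a)‖ * t) + B * ‖b - a‖ * (‖a' - a‖ ^ (γ - 1) * t) := by
        nlinarith [hA a a' b b']
    _ ≤ B * (G * ‖b - a‖ * ρ ^ γ) + B * ‖b - a‖ * (G * ρ ^ γ) := by gcongr
    _ = 2 * B * G * ρ ^ γ * ‖b - a‖ := by ring

theorem norm_eulerRemainder_sub_le_of_split {y y' : ℕ → E} {ω : ℕ → ℕ → ℝ} {K : ℕ} {p D r : ℝ}
    (hω : IsControl ω K) (hp : 0 < p) (hpγ : p < γ) (hγ₁ : 1 ≤ γ) (hγ₂ : γ ≤ 2)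
    (hx : IsControlledBy x ω p K) (hA : HasSecondDiffBound A B (γ - 1)) (hB : 0 ≤ B)
    (hy : ∀ k l, k ≤ l → l ≤ K → ω k l ^ p⁻¹ ≤ r → ‖y l - y k‖ ≤ (1 + B) * ω k l ^ p⁻¹)
    (hz : IsEulerSeq (fun k => A (y' k) - A (y k)) x (y' - y))
    (hD : 8 * B * (1 + 2 * B) ^ 2 ≤ (1 - 2 ^ (1 - γ / p)) * D) (hrD : D * r ^ (γ - 1) ≤ 1)
    (hrG : 2 * (1 + 2 * B) ^ 2 * r ≤ 1 - 2 ^ (1 - γ / p))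
    {k m l : ℕ} (hkm : k ≤ m) (hml : m < l) (hlK : l ≤ K) (hm : ω k m ≤ ω k l / 2)
    (hml' : ω (m + 1) l ≤ ω k l / 2) (hρr : ω k l ^ p⁻¹ ≤ r)
    (hJkm : ‖eulerRemainder (fun k => A (y' k) - A (y k)) x (y' - y) k m‖ ≤
      D * (ω k m ^ p⁻¹) ^ γ * ‖y' k - y k‖)
    (hJml : ‖eulerRemainder (fun k => A (y' k) - A (y k)) x (y' - y) (m + 1) l‖ ≤
      D * (ω (m + 1) l ^ p⁻¹) ^ γ * ‖y' (m + 1) - y (m + 1)‖) :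
    ‖eulerRemainder (fun k => A (y' k) - A (y k)) x (y' - y) k l‖ ≤
      D * (ω k l ^ p⁻¹) ^ γ * ‖y' k - y k‖ := by
  set c : ℕ → V →L[ℝ] E := fun k => A (y' k) - A (y k)
  set G := (1 + 2 * B) ^ 2
  set ρ := ω k l ^ p⁻¹
  set N := ‖y' k - y k‖
  have hG : 1 ≤ G := one_le_pow₀ (by linarith)
  have hD0 : 0 ≤ D := nonneg_of_le_one_sub_two_rpow_mul hp hpγ (by positivity) hD
  have hN : 0 ≤ N := norm_nonneg _
  have hρ0 : 0 ≤ ρ := hω.rpow_nonneg (by omega) hlK _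
  have hGρ : 2 * G * ρ ≤ 1 - 2 ^ (1 - γ / p) := hrG.trans' (by gcongr)
  have hρ1 : ρ ≤ 1 := by nlinarith [Real.rpow_pos_of_pos two_pos (1 - γ / p)]
  obtain ⟨hzm, hzm1⟩ : ‖(y' - y) m - (y' - y) k‖ ≤ (1 + B) * ρ * N ∧
      ‖(y' - y) (m + 1) - (y' - y) k‖ ≤ G * ρ * N := hz.norm_sub_le_and_norm_succ_sub_le hB hρ0 hρ1 hγ₁
    (fun j => hA.norm_sub_le _ _) (hJkm.trans (mul_le_mul_of_nonneg_right
      (mul_le_mul_of_nonneg_left (hω.rpow_inv_rpow_mono hp.le (by linarith) le_rfl hkm hml.le hlK)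
        hD0) hN))
    ((mul_le_mul_of_nonneg_left (Real.rpow_le_rpow hρ0 hρr (by linarith)) hD0).trans hrD)
    (hx.norm_sub_le hω hp.le le_rfl hkm hml.le hlK) (hx.norm_sub_le hω hp.le hkm (by omega) hml hlK)
  have hym : ∀ m', k ≤ m' → m' ≤ l → ‖y m' - y k‖ ≤ G * ρ := fun m' h₁ h₂ =>
    (hy k m' h₁ (h₂.trans hlK) ((hω.rpow_inv_mono hp.le le_rfl h₁ h₂ hlK).trans hρr)).trans
      (mul_le_mul (by nlinarith) (hω.rpow_inv_mono hp.le le_rfl h₁ h₂ hlK)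
        (hω.rpow_nonneg h₁ (h₂.trans hlK) _) (by positivity))
  have hcross₁ : ‖c m - c k‖ * ‖x (m + 1) - x m‖ ≤ 2 * B * G * ρ ^ γ * N :=
    norm_sub_sub_sub_mul_le hA hB hγ₁ hγ₂ hG hρ1 (norm_nonneg _)
      (hx.norm_sub_le hω hp.le hkm (by omega) hml hlK) (hym m hkm hml.le)
      (hzm.trans (by gcongr; nlinarith))
  have hcross₂ : ‖c (m + 1) - c k‖ * ‖x l - x (m + 1)‖ ≤ 2 * B * G * ρ ^ γ * N :=
    norm_sub_sub_sub_mul_le hA hB hγ₁ hγ₂ hG hρ1 (norm_nonneg _)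
      (hx.norm_sub_le hω hp.le (by omega) hml le_rfl hlK) (hym (m + 1) (by omega) hml) hzm1
  have hzm1' : ‖y' (m + 1) - y (m + 1)‖ ≤ N + G * ρ * N := by
    have := norm_le_norm_add_norm_sub' ((y' - y) (m + 1)) ((y' - y) k)
    simp only [Pi.sub_apply] at this hzm1
    linarith
  have hsplit := rpow_add_rpow_le_of_le_half (γ := γ) hp (by linarith)
    (hω.nonneg k m hkm (by omega)) (hω.nonneg (m + 1) l hml hlK) hm hml'
  have hρml : (ω (m + 1) l ^ p⁻¹) ^ γ ≤ ρ ^ γ :=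
    hω.rpow_inv_rpow_mono hp.le (by linarith) (by omega) hml le_rfl hlK
  have hDml : 0 ≤ D * (ω (m + 1) l ^ p⁻¹) ^ γ :=
    mul_nonneg hD0 (Real.rpow_nonneg (hω.rpow_nonneg hml hlK _) _)
  have hργ : 0 ≤ ρ ^ γ := Real.rpow_nonneg hρ0 γ
  -- halves: `2^{1-γ/p} D ρ^γ N`; growth of `‖z_{m+1}‖` over `N`: `≤ G ρ * D ρ^γ N`;
  -- cross terms: `4 B G ρ^γ N`. The last two are each at most `(1 - 2^{1-γ/p}) D ρ^γ N / 2`.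
  linarith [hz.norm_eulerRemainder_le k m l, hJml.trans (mul_le_mul_of_nonneg_left hzm1' hDml),
    mul_le_mul_of_nonneg_left hsplit (mul_nonneg hD0 hN),
    mul_le_mul_of_nonneg_right hρml (by positivity : 0 ≤ D * G * ρ * N),
    mul_le_mul_of_nonneg_right hGρ (by positivity : 0 ≤ D * ρ ^ γ * N),
    mul_le_mul_of_nonneg_right hD (by positivity : 0 ≤ ρ ^ γ * N)]

theorem norm_eulerRemainder_sub_le {y y' : ℕ → E} {ω : ℕ → ℕ → ℝ} {K : ℕ} {p D r : ℝ}
    (hω : IsControl ω K) (hp : 0 < p) (hpγ : p < γ) (hγ₁ : 1 ≤ γ) (hγ₂ : γ ≤ 2)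
    (hx : IsControlledBy x ω p K) (hA : HasSecondDiffBound A B (γ - 1)) (hB : 0 ≤ B)
    (hy : ∀ k l, k ≤ l → l ≤ K → ω k l ^ p⁻¹ ≤ r → ‖y l - y k‖ ≤ (1 + B) * ω k l ^ p⁻¹)
    (hz : IsEulerSeq (fun k => A (y' k) - A (y k)) x (y' - y))
    (hD : 8 * B * (1 + 2 * B) ^ 2 ≤ (1 - 2 ^ (1 - γ / p)) * D) (hrD : D * r ^ (γ - 1) ≤ 1)
    (hrG : 2 * (1 + 2 * B) ^ 2 * r ≤ 1 - 2 ^ (1 - γ / p))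
    {k l : ℕ} (hkl : k ≤ l) (hlK : l ≤ K) (hρ : ω k l ^ p⁻¹ ≤ r) :
    ‖eulerRemainder (fun k => A (y' k) - A (y k)) x (y' - y) k l‖ ≤
      D * (ω k l ^ p⁻¹) ^ γ * ‖y' k - y k‖ := by
  have hD0 : 0 ≤ D := nonneg_of_le_one_sub_two_rpow_mul hp hpγ (by positivity) hD
  revert hρ
  refine hω.bisection_induction (P := fun k l => ω k l ^ p⁻¹ ≤ r →
    ‖eulerRemainder (fun k => A (y' k) - A (y k)) x (y' - y) k l‖ ≤
      D * (ω k l ^ p⁻¹) ^ γ * ‖y' k - y k‖) (fun k hk _ => ?_) ?_ hkl hlK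
  · simp only [eulerRemainder, sub_self, map_zero, norm_zero]
    exact mul_nonneg (mul_nonneg hD0 (Real.rpow_nonneg (hω.rpow_nonneg le_rfl hk _) _))
      (norm_nonneg _)
  intro k m l hkm hml hlK hm hml' IHkm IHml hρ
  exact norm_eulerRemainder_sub_le_of_split hω hp hpγ hγ₁ hγ₂ hx hA hB hy hz hD hrD hrG hkm hml
    hlK hm hml' hρ (IHkm ((hω.rpow_inv_mono hp.le le_rfl hkm hml.le hlK).trans hρ))
    (IHml ((hω.rpow_inv_mono hp.le (by omega) hml le_rfl hlK).trans hρ))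

theorem norm_sub_le_two_add_mul {y y' : ℕ → E} {ω : ℕ → ℕ → ℝ} {K : ℕ} {p D r : ℝ}
    (hω : IsControl ω K) (hp : 0 < p) (hpγ : p < γ) (hγ₁ : 1 ≤ γ) (hγ₂ : γ ≤ 2)
    (hx : IsControlledBy x ω p K) (hA : HasSecondDiffBound A B (γ - 1)) (hB : 0 ≤ B)
    (hy : ∀ k l, k ≤ l → l ≤ K → ω k l ^ p⁻¹ ≤ r → ‖y l - y k‖ ≤ (1 + B) * ω k l ^ p⁻¹)
    (hz : IsEulerSeq (fun k => A (y' k) - A (y k)) x (y' - y))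
    (hD : 8 * B * (1 + 2 * B) ^ 2 ≤ (1 - 2 ^ (1 - γ / p)) * D) (hrD : D * r ^ (γ - 1) ≤ 1)
    (hrG : 2 * (1 + 2 * B) ^ 2 * r ≤ 1 - 2 ^ (1 - γ / p))
    {k l : ℕ} (hkl : k ≤ l) (hlK : l ≤ K) (hρ : ω k l ^ p⁻¹ ≤ r) :
    ‖y' l - y l‖ ≤ (2 + B) * ‖y' k - y k‖ := by
  have hρ0 := hω.rpow_nonneg hkl hlK p⁻¹
  have hD0 : 0 ≤ D := nonneg_of_le_one_sub_two_rpow_mul hp hpγ (by positivity) hD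
  have hr1 : r ≤ 1 := by
    nlinarith [Real.rpow_pos_of_pos two_pos (1 - γ / p),
      one_le_pow₀ (n := 2) (by linarith : (1 : ℝ) ≤ 1 + 2 * B)]
  have hinc := norm_sub_le_of_norm_eulerRemainder_le hB (norm_nonneg _) hρ0 hγ₁
    (norm_eulerRemainder_sub_le hω hp hpγ hγ₁ hγ₂ hx hA hB hy hz hD hrD hrG hkl hlK hρ)
    (hA.norm_sub_le _ _) (hx k l hkl hlK)
    ((mul_le_mul_of_nonneg_left (Real.rpow_le_rpow hρ0 hρ (by linarith)) hD0).trans hrD)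
  have hρN : (1 + B) * ω k l ^ p⁻¹ * ‖y' k - y k‖ ≤ (1 + B) * ‖y' k - y k‖ :=
    mul_le_mul_of_nonneg_right (mul_le_of_le_one_right (by positivity) (hρ.trans hr1))
      (norm_nonneg _)
  have := norm_le_norm_add_norm_sub' ((y' - y) l) ((y' - y) k)
  simp only [Pi.sub_apply] at this hinc
  linarith

end Coefficient

theorem exists_norm_sub_le_mul_norm_sub {p γ B Ω : ℝ} (hp : 0 < p) (hpγ : p < γ) (hγ₁ : 1 < γ)
    (hγ₂ : γ ≤ 2) (hB : 0 ≤ B) (hΩ : 0 ≤ Ω) :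
    ∃ M' > 0, ∀ (K : ℕ) (ω : ℕ → ℕ → ℝ) (x : ℕ → V) (A : E → V →L[ℝ] E) (y y' : ℕ → E),
      IsControl ω K → ω 0 K ≤ Ω → IsControlledBy x ω p K →
      (∀ u, ‖A u‖ ≤ B) → (∀ u v, ‖A u - A v‖ ≤ B * ‖u - v‖ ^ (γ - 1)) →
      HasSecondDiffBound A B (γ - 1) →
      IsEulerSeq (fun k => A (y k)) x y → IsEulerSeq (fun k => A (y' k)) x y' →
      ∀ k ≤ K, ‖y' k - y k‖ ≤ M' * ‖y' 0 - y 0‖ := by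
  set κ : ℝ := 1 - 2 ^ (1 - γ / p)
  have hκ : 0 < κ := sub_pos.2 (two_rpow_one_sub_div_lt_one hp hpγ)
  obtain ⟨r, ⟨⟨hrC, hrD⟩, hrG⟩, hr0⟩ :=
    (((eventually_mul_rpow_le (2 * B * (1 + 2 * B) ^ (γ - 1) / κ) (sub_pos.2 hγ₁) one_pos).and
      (eventually_mul_rpow_le (8 * B * (1 + 2 * B) ^ 2 / κ) (sub_pos.2 hγ₁) one_pos)).and
      (eventually_mul_rpow_le (2 * (1 + 2 * B) ^ 2) one_pos hκ)).and self_mem_nhdsWithin |>.exists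
  rw [Real.rpow_one] at hrG
  set F := 2 + B + B * Ω ^ p⁻¹
  have hF : 1 ≤ F := by nlinarith [Real.rpow_nonneg hΩ p⁻¹]
  refine ⟨F ^ (2 * ⌈Ω / r ^ p⌉₊ + 1), by positivity, ?_⟩
  intro K ω x A y y' hω hΩK hx hAb hAh hA hy hy' k hk
  have hlocal : ∀ k l, k ≤ l → l ≤ K → ω k l ≤ r ^ p → ‖y' l - y l‖ ≤ F * ‖y' k - y k‖ := by
    intro k l hkl hlK hωr
    have hρ : ω k l ^ p⁻¹ ≤ r :=
      (Real.rpow_inv_le_iff_of_pos (hω.nonneg k l hkl hlK) hr0.le hp).2 hωr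
    refine (norm_sub_le_two_add_mul hω hp hpγ hγ₁.le hγ₂ hx hA hB
      (fun k l hkl hlK hρ => norm_sub_le_of_holder hω hp hpγ hγ₁.le hx hAb hAh hy
        (mul_div_cancel₀ _ hκ.ne').ge hrC hkl hlK hρ)
      (hy'.sub hy) (mul_div_cancel₀ _ hκ.ne').ge hrD hrG hkl hlK hρ).trans ?_
    gcongr
    linarith [mul_nonneg hB (Real.rpow_nonneg hΩ p⁻¹)]
  have hstep : ∀ m < K, ‖y' (m + 1) - y (m + 1)‖ ≤ F * ‖y' m - y m‖ := fun m hm =>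
    ((hy'.sub hy).norm_succ_le (hA.norm_sub_le _ _)).trans <| by
      have hΔx : ‖x (m + 1) - x m‖ ≤ Ω ^ p⁻¹ :=
        (hx.norm_sub_le hω hp.le (Nat.zero_le m) m.le_succ hm le_rfl).trans
          (Real.rpow_le_rpow (hω.nonneg 0 K (Nat.zero_le K) le_rfl) hΩK (inv_nonneg.2 hp.le))
      exact mul_le_mul_of_nonneg_right (by linarith [mul_le_mul_of_nonneg_left hΔx hB])
        (norm_nonneg _)
  have hj : ω 0 k ≤ ⌈Ω / r ^ p⌉₊ * r ^ p :=
    (hω.mono le_rfl (Nat.zero_le k) hk le_rfl).trans (hΩK.trans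
      ((div_le_iff₀ (by positivity)).1 (Nat.le_ceil _)))
  exact hω.le_pow_mul_of_local_bound (a := fun k => ‖y' k - y k‖) (fun _ => norm_nonneg _) hF
    (by positivity) hlocal hstep _ 0 k (Nat.zero_le k) hk hj

end Euler

theorem norm_le_rpow_inv_of_abs_rpow_le {ι : Type*} [Fintype ι] {v : ι → ℝ} {s p : ℝ}
    (hp : 0 < p) (hs : 0 ≤ s) (hv : ∀ j, |v j| ^ p ≤ s) : ‖v‖ ≤ s ^ p⁻¹ :=
  (pi_norm_le_iff_of_nonneg (Real.rpow_nonneg hs _)).2 fun j => by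
    rw [Real.norm_eq_abs, Real.le_rpow_inv_iff_of_pos (abs_nonneg _) hs hp]
    exact hv j

section Matrix

variable {m n X : Type*} [Fintype m] [Fintype n] [DecidableEq n]

noncomputable def matrixToCLM : Matrix m n ℝ ≃ₗ[ℝ] ((n → ℝ) →L[ℝ] (m → ℝ)) :=
  Matrix.toLin'.trans LinearMap.toContinuousLinearMap

omit [Fintype m] in
theorem matrixToCLM_apply (M : Matrix m n ℝ) (v : n → ℝ) (i : m) :
    matrixToCLM M v i = ∑ j, M i j * v j :=
  rfl

theorem norm_matrixToCLM_le {M : Matrix m n ℝ} {b : ℝ} (hb : 0 ≤ b) (hM : ∀ i j, |M i j| ≤ b) :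
    ‖matrixToCLM M‖ ≤ Fintype.card n * b := by
  refine ContinuousLinearMap.opNorm_le_bound _ (by positivity) fun v =>
    (pi_norm_le_iff_of_nonneg (by positivity)).2 fun i => ?_
  rw [matrixToCLM_apply, Real.norm_eq_abs]
  calc |∑ j, M i j * v j| ≤ ∑ j, |M i j| * |v j| := by
        simpa only [abs_mul] using Finset.abs_sum_le_sum_abs (fun j => M i j * v j) Finset.univ
    _ ≤ ∑ _j : n, b * ‖v‖ := by
        gcongr with j
        · exact hM i j
        · simpa only [Real.norm_eq_abs] using norm_le_pi_norm v j
    _ = Fintype.card n * b * ‖v‖ := by simp [mul_assoc]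

noncomputable def coeffCLM (f : m → n → X → ℝ) (u : X) : (n → ℝ) →L[ℝ] (m → ℝ) :=
  matrixToCLM (Matrix.of fun i j => f i j u)

variable {f : m → n → X → ℝ} {M α : ℝ}

theorem norm_coeffCLM_le (hM : 0 ≤ M) (hf : ∀ i j u, |f i j u| ≤ M) (u : X) :
    ‖coeffCLM f u‖ ≤ Fintype.card n * M :=
  norm_matrixToCLM_le hM fun i j => hf i j u

theorem norm_coeffCLM_sub_le [NormedAddCommGroup X] (hM : 0 ≤ M)
    (hf : ∀ i j u v, |f i j u - f i j v| ≤ M * ‖u - v‖ ^ α) (u v : X) :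
    ‖coeffCLM f u - coeffCLM f v‖ ≤ Fintype.card n * M * ‖u - v‖ ^ α := by
  rw [coeffCLM, coeffCLM, ← map_sub, mul_assoc]
  exact norm_matrixToCLM_le (by positivity) fun i j => hf i j u v

theorem HasSecondDiffBound.coeffCLM [NormedAddCommGroup X] (hM : 0 ≤ M)
    (hf : ∀ i j, HasSecondDiffBound (f i j) M α) :
    HasSecondDiffBound (coeffCLM f) (Fintype.card n * M) α := by
  intro a a' b b'
  simp only [EulerScheme.coeffCLM, ← map_sub]
  refine (norm_matrixToCLM_le (b := M * ‖b' - a' - (b - a)‖ + M * ‖a' - a‖ ^ α * ‖b - a‖)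
    (by positivity) fun i j => ?_).trans_eq (by ring)
  simpa only [Matrix.sub_apply, Matrix.of_apply, Real.norm_eq_abs] using hf i j a a' b b'

theorem isEulerSeq_coeffCLM {f : m → n → (m → ℝ) → ℝ} {x : ℕ → n → ℝ} {w : ℕ → m → ℝ}
    (hw : ∀ k i, w (k + 1) i = w k i + ∑ j, f i j (w k) * (x (k + 1) j - x k j)) :
    IsEulerSeq (fun k => coeffCLM f (w k)) x w := fun k => funext fun i => by
  simp only [coeffCLM, hw k i, Pi.add_apply, matrixToCLM_apply, Matrix.of_apply, Pi.sub_apply]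

end Matrix

end EulerScheme

open EulerScheme in
/-- Lemma 1(b) of the paper: Lipschitz dependence of the Euler iterates on the initial
condition, uniformly in the partition, for `1 ≤ p < γ ≤ 2` and `C^γ` coefficients. -/
theorem euler_scheme_lipschitz_dependence (n d : ℕ) (γ p Ω M₀ : ℝ)
    (hp : 1 ≤ p) (hpγ : p < γ) (hγ : γ ≤ 2) (hΩ : 0 ≤ Ω) (hM₀ : 0 < M₀) :
    ∃ M' > 0,
      ∀ (K : ℕ) (x : ℕ → Fin d → ℝ) (ω : ℕ → ℕ → ℝ)
        (f : Fin n → Fin d → (Fin n → ℝ) → ℝ) (y ytilde : ℕ → Fin n → ℝ),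
        (∀ k l, k ≤ l → l ≤ K → 0 ≤ ω k l) →
        (∀ k l m, k ≤ l → l ≤ m → m ≤ K → ω k l + ω l m ≤ ω k m) →
        ω 0 K ≤ Ω →
        (∀ k l, k ≤ l → l ≤ K → ∀ j, |x l j - x k j| ^ p ≤ ω k l) →
        (∀ i j y', |f i j y'| ≤ M₀) →
        (∀ i j y' z', |f i j y' - f i j z'| ≤ M₀ * ‖y' - z'‖ ^ (γ - 1)) →
        (∀ i j, Differentiable ℝ (f i j)) →
        (∀ i j y', ‖fderiv ℝ (f i j) y'‖ ≤ M₀) →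
        (∀ i j y' z', ‖fderiv ℝ (f i j) y' - fderiv ℝ (f i j) z'‖
          ≤ M₀ * ‖y' - z'‖ ^ (γ - 1)) →
        (∀ k i, y (k + 1) i = y k i + ∑ j, f i j (y k) * (x (k + 1) j - x k j)) →
        (∀ k i, ytilde (k + 1) i
          = ytilde k i + ∑ j, f i j (ytilde k) * (x (k + 1) j - x k j)) →
        ∀ k, k ≤ K → ∀ i, |ytilde k i - y k i| ≤ M' * ‖ytilde 0 - y 0‖ := by
  obtain ⟨M', hM', hlip⟩ := exists_norm_sub_le_mul_norm_sub (E := Fin n → ℝ) (V := Fin d → ℝ)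
    (B := Fintype.card (Fin d) * M₀) (by linarith) hpγ (by linarith) hγ (by positivity) hΩ
  refine ⟨M', hM', fun K x ω f y ytilde hωnn hωadd hωΩ hxp hfb hfH hfd hfD hfDH hy hyt k hk i => ?_⟩
  have hcomp := norm_le_pi_norm (ytilde k - y k) i
  rw [Pi.sub_apply, Real.norm_eq_abs] at hcomp
  exact hcomp.trans (hlip K ω x (coeffCLM f) y ytilde ⟨hωnn, hωadd⟩ hωΩ
    (fun k l hkl hlK => norm_le_rpow_inv_of_abs_rpow_le (by linarith) (hωnn k l hkl hlK)
      (hxp k l hkl hlK))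
    (norm_coeffCLM_le hM₀.le hfb) (norm_coeffCLM_sub_le hM₀.le hfH)
    (HasSecondDiffBound.coeffCLM hM₀.le fun i j =>
      HasSecondDiffBound.of_fderiv (hfd i j) (hfD i j) (hfDH i j))
    (isEulerSeq_coeffCLM hy) (isEulerSeq_coeffCLM hyt) k hk)
end

section
/- Let $2 \le p < \gamma \le 3$, and let $K$ be a positive integer. Suppose given $x_0, \ldots, x_K \in \mathbb{R}^d$, reals $A^{rj}_{kl}$ for $0 \le k \le l \le K$ and $1 \le r,j \le d$ satisfying the consistency condition $A^{rj}_{km} = A^{rj}_{kl} + A^{rj}_{lm} + (x^r_l - x^r_k)(x^j_m - x^j_l)$ for $k \le l \le m$, and a superadditive control $\omega_{kl} \ge 0$ ($\omega_{km} \ge \omega_{kl} + \omega_{lm}$) with $|x_l - x_k|^p \le \omega_{kl}$ and $|A^{rj}_{kl}| \le \omega_{kl}^{2/p}$. Let $f = (f^i_j)$ be bounded, differentiable, with bounded derivative and with the derivative globally Hölder of exponent $\gamma - 2$, all with constant $M_0$. Given $y_0$, define $y_k$ by the Milstein-type scheme $y^i_{k+1} = y^i_k + f^i_j(y_k)(x^j_{k+1}-x^j_k)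 + f^h_r(y_k)\partial_h f^i_j(y_k) A^{rj}_{k,k+1}$ (summation over repeated indices), and set $J^i_{kl} = y^i_l - y^i_k - f^i_j(y_k)(x^j_l - x^j_k) - f^h_r(y_k)\partial_h f^i_j(y_k) A^{rj}_{kl}$. Then there exist constants $C, M > 0$, depending only on $n, d, \gamma, p, \omega_{0K}, M_0$, such that $|J_{kl}| \le M\,\omega_{kl}^{\gamma/p}$ and $|y_l - y_k| \le C\,\omega_{kl}^{1/p}$ for all $0 \le k \le l \le K$. -/
/-!
On intervals of small control `ω k l ≤ L` the remainder `J` is almost additive: Chen's relation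
and a Taylor expansion of `f` at `y_k` give `J_{km} - J_{kl} - J_{lm} = O(ω(k,m)^{γ/p})` as soon
as `J_{kl} = O(ω(k,l)^{γ/p})`. Since `γ/p > 1`, Davie's halving argument closes an induction on
the length of the interval, once `L` is so small that the contribution linear in `J` is absorbed.
Then `|y_l - y_k| = O(ω^{1/p})` on small intervals, and an arbitrary interval is chained from
at most `1 + 2 ω(k,l)/L` small intervals and single steps. On large intervals the crude bound
`|J| ≤ |y_l - y_k| + |increment| = O(ω^{1/p})` is `O(L^{(1-γ)/p} ω^{γ/p})`.
-/

open Filter Topology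

theorem Nat.exists_last_of_lt {P : ℕ → Prop} {k l : ℕ} (hkl : k < l) (hk : P k) :
    ∃ m, k ≤ m ∧ m < l ∧ P m ∧ (m + 1 < l → ¬P (m + 1)) := by
  induction l, hkl using Nat.le_induction with
  | base => exact ⟨k, le_rfl, k.lt_succ_self, hk, fun h => absurd h (lt_irrefl _)⟩
  | succ l hkl ih =>
    obtain ⟨m, hkm, hml, hPm, hlast⟩ := ih
    by_cases hl : P l
    · exact ⟨l, by omega, l.lt_succ_self, hl, fun h => absurd h (lt_irrefl _)⟩
    · refine ⟨m, hkm, by omega, hPm, fun h => ?_⟩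
      rcases (by omega : m + 1 < l ∨ m + 1 = l) with h' | h'
      · exact hlast h'
      · rwa [h']

theorem two_mul_half_rpow {w θ : ℝ} (hw : 0 ≤ w) : 2 * (w / 2) ^ θ = 2 ^ (1 - θ) * w ^ θ := by
  rw [Real.div_rpow hw zero_le_two, Real.rpow_sub zero_lt_two, Real.rpow_one]
  ring

structure IsControl (ω : ℕ → ℕ → ℝ) (K : ℕ) : Prop where
  nonneg : ∀ k l, k ≤ l → l ≤ K → 0 ≤ ω k l
  add_le : ∀ k l m, k ≤ l → l ≤ m → m ≤ K → ω k l + ω l m ≤ ω k m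

namespace IsControl

variable {ω : ℕ → ℕ → ℝ} {K : ℕ}

theorem self_eq_zero (hω : IsControl ω K) {k : ℕ} (hk : k ≤ K) : ω k k = 0 := by
  have := hω.add_le k k k le_rfl le_rfl hk
  have := hω.nonneg k k le_rfl hk
  linarith

theorem mono (hω : IsControl ω K) {k' k l l' : ℕ} (h₁ : k' ≤ k) (h₂ : k ≤ l) (h₃ : l ≤ l')
    (h₄ : l' ≤ K) : ω k l ≤ ω k' l' := by
  have := hω.add_le k' k l h₁ h₂ (h₃.trans h₄)
  have := hω.add_le k' l l' (h₁.trans h₂) h₃ h₄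
  have := hω.nonneg k' k h₁ (h₂.trans (h₃.trans h₄))
  have := hω.nonneg l l' h₃ h₄
  linarith

theorem rpow_mono (hω : IsControl ω K) {α : ℝ} (hα : 0 ≤ α) {k' k l l' : ℕ} (h₁ : k' ≤ k)
    (h₂ : k ≤ l) (h₃ : l ≤ l') (h₄ : l' ≤ K) : ω k l ^ α ≤ ω k' l' ^ α :=
  Real.rpow_le_rpow (hω.nonneg k l h₂ (h₃.trans h₄)) (hω.mono h₁ h₂ h₃ h₄) hα

theorem exists_split_half (hω : IsControl ω K) {k l : ℕ} (hkl : k < l) (hlK : l ≤ K) :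
    ∃ m, k ≤ m ∧ m < l ∧ ω k m ≤ ω k l / 2 ∧ ω (m + 1) l ≤ ω k l / 2 := by
  have hw := hω.nonneg k l hkl.le hlK
  obtain ⟨m, hkm, hml, hm, hlast⟩ :=
    Nat.exists_last_of_lt (P := fun t => ω k t ≤ ω k l / 2) hkl
      (by rw [hω.self_eq_zero (by omega)]; linarith)
  refine ⟨m, hkm, hml, hm, ?_⟩
  rcases (by omega : m + 1 < l ∨ m + 1 = l) with h | h
  · have := not_le.mp (hlast h)
    have := hω.add_le k (m + 1) l (by omega) h.le hlK
    linarith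
  · rw [h, hω.self_eq_zero hlK]
    linarith

variable {E : Type*} [SeminormedAddCommGroup E]

/-- Davie's discrete sewing argument: splitting `[k, l]` as `[k, m] ∪ [m, m + 1] ∪ [m + 1, l]`
with `ω k m, ω (m + 1) l ≤ ω k l / 2`, the bound on shorter intervals and the defect bound `hδ`
give `‖J k l‖ ≤ (M 2^{1-θ} + 2c) ω(k,l)^θ`. -/
theorem norm_le_of_sewing (hω : IsControl ω K) {J : ℕ → ℕ → E} {θ M c L : ℝ} (hθ : 1 < θ)
    (hc : 0 ≤ c) (hMc : M * 2 ^ (1 - θ) + 2 * c ≤ M) (hJ_self : ∀ k ≤ K, J k k = 0)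
    (hJ_succ : ∀ k, k + 1 ≤ K → J k (k + 1) = 0)
    (hδ : ∀ k l m, k ≤ l → l ≤ m → m ≤ K → ω k m ≤ L → ‖J k l‖ ≤ M * ω k l ^ θ →
      ‖J k m - J k l - J l m‖ ≤ c * ω k m ^ θ)
    {k l : ℕ} (hkl : k ≤ l) (hlK : l ≤ K) (hL : ω k l ≤ L) : ‖J k l‖ ≤ M * ω k l ^ θ := by
  have hM : 0 ≤ M := by
    have : (2 : ℝ) ^ (1 - θ) < 1 := Real.rpow_lt_one_of_one_lt_of_neg one_lt_two (by linarith)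
    nlinarith
  induction hN : l - k using Nat.strong_induction_on generalizing k l with
  | _ N ih =>
  set w := ω k l
  have hw : 0 ≤ w := hω.nonneg k l hkl hlK
  rcases hkl.eq_or_lt with rfl | hkl'
  · rw [hJ_self k hlK, norm_zero]; positivity
  obtain ⟨m, hkm, hml, hkm_half, hml_half⟩ := hω.exists_split_half hkl' hlK
  have hhalf : ∀ {u}, 0 ≤ u → u ≤ w / 2 → M * u ^ θ ≤ M * (w / 2) ^ θ := fun hu hu' =>
    mul_le_mul_of_nonneg_left (Real.rpow_le_rpow hu hu' (by linarith)) hM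
  have hsub : ∀ {a b}, k ≤ a → a ≤ b → b ≤ l → ω a b ≤ L :=
    fun h₁ h₂ h₃ => (hω.mono h₁ h₂ h₃ hlK).trans hL
  have hJkm : ‖J k m‖ ≤ M * ω k m ^ θ :=
    ih (m - k) (by omega) hkm (by omega) (hsub le_rfl hkm hml.le) rfl
  have hJkm₁ : ‖J k (m + 1)‖ ≤ M * (w / 2) ^ θ + c * w ^ θ := by
    have hδ₁ := hδ k m (m + 1) hkm (by omega) (by omega) (hsub le_rfl (by omega) hml) hJkm
    rw [hJ_succ m (by omega), sub_zero] at hδ₁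
    calc ‖J k (m + 1)‖ ≤ ‖J k (m + 1) - J k m‖ + ‖J k m‖ := norm_le_norm_sub_add _ _
      _ ≤ c * w ^ θ + M * (w / 2) ^ θ := by
        gcongr
        · exact hδ₁.trans (mul_le_mul_of_nonneg_left (hω.rpow_mono (by linarith) le_rfl
            (by omega) hml hlK) hc)
        · exact hJkm.trans (hhalf (hω.nonneg k m hkm (by omega)) hkm_half)
      _ = _ := add_comm _ _
  have hJml : ‖J (m + 1) l‖ ≤ M * (w / 2) ^ θ :=
    (ih (l - (m + 1)) (by omega) hml (by omega) (hsub (by omega) hml le_rfl) rfl).trans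
      (hhalf (hω.nonneg _ _ hml hlK) hml_half)
  have hδ₂ : ‖J k l - J k (m + 1) - J (m + 1) l‖ ≤ c * w ^ θ := by
    rcases (by omega : m + 1 = l ∨ m + 1 < l) with h | h
    · rw [h, hJ_self l hlK, sub_self, zero_sub, norm_neg, norm_zero]; positivity
    · exact hδ k (m + 1) l (by omega) h.le hlK hL
        (ih (m + 1 - k) (by omega) (by omega) (by omega) (hsub le_rfl (by omega) h.le) rfl)
  calc ‖J k l‖ = ‖(J k l - J k (m + 1) - J (m + 1) l) + J k (m + 1) + J (m + 1) l‖ := by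
        congr 1; abel
    _ ≤ ‖J k l - J k (m + 1) - J (m + 1) l‖ + ‖J k (m + 1)‖ + ‖J (m + 1) l‖ := norm_add₃_le
    _ ≤ c * w ^ θ + (M * (w / 2) ^ θ + c * w ^ θ) + M * (w / 2) ^ θ := by gcongr
    _ = (M * 2 ^ (1 - θ) + 2 * c) * w ^ θ := by
        rw [add_mul, mul_assoc, ← two_mul_half_rpow hw]; ring
    _ ≤ M * w ^ θ := mul_le_mul_of_nonneg_right hMc (by positivity)

/-- Greedy chaining: a maximal small interval followed by one step consumes control more than `L`,
so at most `ω(k,l) / L` rounds are needed. -/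
theorem norm_sub_le_of_chaining (hω : IsControl ω K) {z : ℕ → E} {α C L : ℝ} (hα : 0 ≤ α)
    (hC : 0 ≤ C) (hL : 0 < L)
    (hsmall : ∀ k l, k ≤ l → l ≤ K → ω k l ≤ L → ‖z l - z k‖ ≤ C * ω k l ^ α)
    (hstep : ∀ k, k + 1 ≤ K → ‖z (k + 1) - z k‖ ≤ C * ω k (k + 1) ^ α)
    {k l : ℕ} (hkl : k ≤ l) (hlK : l ≤ K) :
    ‖z l - z k‖ ≤ C * (1 + 2 * ω k l / L) * ω k l ^ α := by
  induction hN : l - k using Nat.strong_induction_on generalizing k l with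
  | _ N ih =>
  set w := ω k l
  have hw : 0 ≤ w := hω.nonneg k l hkl hlK
  by_cases hwL : w ≤ L
  · calc ‖z l - z k‖ ≤ C * w ^ α := hsmall k l hkl hlK hwL
      _ ≤ C * (1 + 2 * w / L) * w ^ α := by
        have : 0 ≤ 2 * w / L := by positivity
        gcongr
        exact le_mul_of_one_le_right hC (by linarith)
  push Not at hwL
  have hkl' : k < l := by
    refine hkl.lt_of_ne fun h => ?_
    subst h
    rw [show w = 0 from hω.self_eq_zero hlK] at hwL
    linarith
  obtain ⟨m, hkm, hml, hkmL, hlast⟩ :=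
    Nat.exists_last_of_lt (P := fun t => ω k t ≤ L) hkl'
      (by rw [hω.self_eq_zero (by omega)]; linarith)
  have hkm₁ : L < ω k (m + 1) := by
    rcases (by omega : m + 1 < l ∨ m + 1 = l) with h | h
    · exact not_le.mp (hlast h)
    · rwa [h]
  have hml_small : ω (m + 1) l ≤ w - L := by
    have := hω.add_le k (m + 1) l (by omega) hml hlK
    linarith
  have h₁ : ‖z m - z k‖ ≤ C * w ^ α :=
    (hsmall k m hkm (by omega) hkmL).trans
      (mul_le_mul_of_nonneg_left (hω.rpow_mono hα le_rfl hkm hml.le hlK) hC)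
  have h₂ : ‖z (m + 1) - z m‖ ≤ C * w ^ α :=
    (hstep m (by omega)).trans
      (mul_le_mul_of_nonneg_left (hω.rpow_mono hα hkm (by omega) hml hlK) hC)
  have h₃ : ‖z l - z (m + 1)‖ ≤ C * (1 + 2 * (w - L) / L) * w ^ α := by
    refine (ih (l - (m + 1)) (by omega) hml hlK rfl).trans ?_
    have := hω.nonneg _ _ hml hlK
    gcongr
    exact hω.mono (by omega) hml le_rfl hlK
  calc ‖z l - z k‖ = ‖(z m - z k) + (z (m + 1) - z m) + (z l - z (m + 1))‖ := by
        congr 1; abel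
    _ ≤ ‖z m - z k‖ + ‖z (m + 1) - z m‖ + ‖z l - z (m + 1)‖ := norm_add₃_le
    _ ≤ C * w ^ α + C * w ^ α + C * (1 + 2 * (w - L) / L) * w ^ α := by gcongr
    _ = C * (1 + 2 * w / L) * w ^ α := by field_simp; ring

end IsControl

theorem tendsto_const_mul_rpow_nhds_zero (c : ℝ) {q : ℝ} (hq : 0 < q) :
    Tendsto (fun t : ℝ => c * t ^ q) (𝓝 0) (𝓝 0) := by
  simpa [Real.zero_rpow hq.ne'] using
    ((Real.continuousAt_rpow_const 0 q (Or.inr hq.le)).tendsto.const_mul c)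

theorem exists_sewing_constants {a b θ q r : ℝ} (ha : 0 ≤ a) (hθ : 1 < θ) (hq : 0 < q)
    (hr : 0 < r) : ∃ M > 0, ∃ L > 0, L ≤ 1 ∧ M * L ^ q ≤ 1 ∧
      M * 2 ^ (1 - θ) + 2 * (a + b * M * L ^ r) ≤ M := by
  set ε := 1 - (2 : ℝ) ^ (1 - θ)
  have hε : 0 < ε := sub_pos.mpr (Real.rpow_lt_one_of_one_lt_of_neg one_lt_two (by linarith))
  set M := 4 * (a + 1) / ε
  have hM : 0 < M := by positivity
  have hsmall : ∀ᶠ t in 𝓝 (0 : ℝ), t < 1 ∧ M * t ^ q < 1 ∧ b * t ^ r < ε / 4 :=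
    (gt_mem_nhds one_pos).and (((tendsto_const_mul_rpow_nhds_zero M hq).eventually
      (gt_mem_nhds one_pos)).and ((tendsto_const_mul_rpow_nhds_zero b hr).eventually
      (gt_mem_nhds (by positivity))))
  obtain ⟨L, ⟨hL1, hLq, hLr⟩, hL0⟩ :=
    ((hsmall.filter_mono nhdsWithin_le_nhds).and (self_mem_nhdsWithin (s := Set.Ioi 0))).exists
  refine ⟨M, hM, L, hL0, hL1.le, hLq.le, ?_⟩
  have hMε : M * ε = 4 * (a + 1) := div_mul_cancel₀ _ hε.ne'
  have : b * M * L ^ r ≤ M * ε / 4 := by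
    rw [mul_right_comm, mul_comm M, mul_div_right_comm]
    exact mul_le_mul_of_nonneg_right hLr.le hM.le
  nlinarith

theorem mul_rpow_le_rpow_of_le {w L M a b : ℝ} (hw : 0 ≤ w) (hwL : w ≤ L) (hM : 0 ≤ M)
    (ha : 0 ≤ a) (hab : a ≤ b) (hML : M * L ^ (b - a) ≤ 1) : M * w ^ b ≤ w ^ a := by
  rw [show b = (b - a) + a by ring, Real.rpow_add_of_nonneg hw (by linarith) ha, ← mul_assoc]
  refine mul_le_of_le_one_left (Real.rpow_nonneg hw a) (le_trans ?_ hML)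
  exact mul_le_mul_of_nonneg_left (Real.rpow_le_rpow hw hwL (by linarith)) hM

theorem rpow_two_div_eq_sq {w : ℝ} (hw : 0 ≤ w) (p : ℝ) : w ^ (2 / p) = (w ^ (1 / p)) ^ 2 := by
  rw [← Real.rpow_natCast, ← Real.rpow_mul hw]
  ring_nf

theorem rpow_le_mul_rpow_of_le {Y C s β : ℝ} (hY : 0 ≤ Y) (hs : 0 ≤ s) (hC : 1 ≤ C)
    (hβ₀ : 0 ≤ β) (hβ₁ : β ≤ 1) (h : Y ≤ C * s) : Y ^ β ≤ C * s ^ β :=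
  calc Y ^ β ≤ (C * s) ^ β := Real.rpow_le_rpow hY h hβ₀
    _ = C ^ β * s ^ β := Real.mul_rpow (by linarith) hs
    _ ≤ C * s ^ β := by
        gcongr
        simpa using Real.rpow_le_rpow_of_exponent_le hC hβ₁

theorem rpow_le_rpow_sub_mul_rpow_of_le {w L a b : ℝ} (hL : 0 < L) (hLw : L ≤ w) (hab : a ≤ b) :
    w ^ a ≤ L ^ (a - b) * w ^ b := by
  rw [← sub_add_cancel a b, Real.rpow_add (hL.trans_le hLw), add_sub_cancel_right]
  exact mul_le_mul_of_nonneg_right (Real.rpow_le_rpow_of_nonpos hL hLw (by linarith))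
    (Real.rpow_nonneg (hL.le.trans hLw) b)

theorem abs_sum_le_card_mul {m : ℕ} {a : Fin m → ℝ} {c : ℝ} (h : ∀ j, |a j| ≤ c) :
    |∑ j, a j| ≤ m * c :=
  (Finset.abs_sum_le_sum_abs _ _).trans ((Finset.sum_le_sum fun j _ => h j).trans (by simp))

section Analysis

variable {E F : Type*} [NormedAddCommGroup E] [NormedSpace ℝ E] [NormedAddCommGroup F]
  [NormedSpace ℝ F]

theorem norm_image_sub_sub_fderiv_le {f : E → F} {C β : ℝ} (hC : 0 ≤ C) (hβ : 0 ≤ β)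
    (hf : Differentiable ℝ f) (hf' : ∀ u v, ‖fderiv ℝ f u - fderiv ℝ f v‖ ≤ C * ‖u - v‖ ^ β)
    (z w : E) : ‖f w - f z - fderiv ℝ f z (w - z)‖ ≤ C * ‖w - z‖ ^ β * ‖w - z‖ :=
  (convex_segment z w).norm_image_sub_le_of_norm_fderiv_le' (fun u _ => hf u)
    (fun u hu => (hf' u z).trans (mul_le_mul_of_nonneg_left
      (Real.rpow_le_rpow (norm_nonneg _) (norm_sub_le_of_mem_segment hu) hβ) hC))
    (left_mem_segment ℝ z w) (right_mem_segment ℝ z w)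

end Analysis

namespace Milstein

variable {n d : ℕ}

/-- The paper's `f^h_r ∂_h f^i_j`, the coefficient of `A^{rj}` in the scheme. -/
noncomputable def coeff (f : Fin n → Fin d → (Fin n → ℝ) → ℝ) (i : Fin n) (r j : Fin d)
    (z : Fin n → ℝ) : ℝ :=
  fderiv ℝ (f i j) z fun h => f h r z

noncomputable def area (A : Fin d → Fin d → ℕ → ℕ → ℝ) (f : Fin n → Fin d → (Fin n → ℝ) → ℝ)
    (z : Fin n → ℝ) (k l : ℕ) : Fin n → ℝ :=
  fun i => ∑ r, ∑ j, coeff f i r j z * A r j k l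

noncomputable def increment (x : ℕ → Fin d → ℝ) (A : Fin d → Fin d → ℕ → ℕ → ℝ)
    (f : Fin n → Fin d → (Fin n → ℝ) → ℝ) (z : Fin n → ℝ) (k l : ℕ) : Fin n → ℝ :=
  fun i => ∑ j, f i j z * (x l j - x k j) + area A f z k l i

noncomputable def remainder (x : ℕ → Fin d → ℝ) (A : Fin d → Fin d → ℕ → ℕ → ℝ)
    (f : Fin n → Fin d → (Fin n → ℝ) → ℝ) (y : ℕ → Fin n → ℝ) (k l : ℕ) : Fin n → ℝ :=
  y l - y k - increment x A f (y k) k l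

structure IsRoughPath (x : ℕ → Fin d → ℝ) (A : Fin d → Fin d → ℕ → ℕ → ℝ) (ω : ℕ → ℕ → ℝ)
    (K : ℕ) (p : ℝ) : Prop where
  control : IsControl ω K
  chen : ∀ r j k l m, k ≤ l → l ≤ m → m ≤ K →
    A r j k m = A r j k l + A r j l m + (x l r - x k r) * (x m j - x l j)
  abs_sub_le : ∀ k l, k ≤ l → l ≤ K → ∀ j, |x l j - x k j| ≤ ω k l ^ (1 / p)
  abs_area_le : ∀ k l, k ≤ l → l ≤ K → ∀ r j, |A r j k l| ≤ ω k l ^ (2 / p)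

structure IsBoundedC1Holder (f : Fin n → Fin d → (Fin n → ℝ) → ℝ) (M₀ β : ℝ) : Prop where
  nonneg : 0 ≤ M₀
  abs_le : ∀ i j z, |f i j z| ≤ M₀
  differentiable : ∀ i j, Differentiable ℝ (f i j)
  norm_fderiv_le : ∀ i j z, ‖fderiv ℝ (f i j) z‖ ≤ M₀
  norm_fderiv_sub_le : ∀ i j z w, ‖fderiv ℝ (f i j) z - fderiv ℝ (f i j) w‖ ≤ M₀ * ‖z - w‖ ^ β

theorem coeff_eq_sum (f : Fin n → Fin d → (Fin n → ℝ) → ℝ) (i : Fin n) (r j : Fin d)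
    (z : Fin n → ℝ) : coeff f i r j z = ∑ h, f h r z * fderiv ℝ (f i j) z (Pi.single h 1) := by
  classical
  conv_lhs => rw [coeff, pi_eq_sum_univ' (fun h => f h r z)]
  simp [map_sum, map_smul]

theorem remainder_apply_eq_sum (x : ℕ → Fin d → ℝ) (A : Fin d → Fin d → ℕ → ℕ → ℝ)
    (f : Fin n → Fin d → (Fin n → ℝ) → ℝ) (y : ℕ → Fin n → ℝ) (k l : ℕ) (i : Fin n) :
    remainder x A f y k l i = y l i - y k i - (∑ j, f i j (y k) * (x l j - x k j))
      - ∑ r, ∑ j, (∑ h, f h r (y k) * fderiv ℝ (f i j) (y k) (Pi.single h 1)) * A r j k l := by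
  simp only [remainder, increment, area, coeff_eq_sum, Pi.sub_apply]
  ring

namespace IsBoundedC1Holder

variable {f : Fin n → Fin d → (Fin n → ℝ) → ℝ} {M₀ β : ℝ}

theorem abs_sub_le (hf : IsBoundedC1Holder f M₀ β) (i : Fin n) (j : Fin d) (u v : Fin n → ℝ) :
    |f i j u - f i j v| ≤ M₀ * ‖u - v‖ := by
  simpa using convex_univ.norm_image_sub_le_of_norm_fderiv_le (fun z _ => hf.differentiable i j z)
    (fun z _ => hf.norm_fderiv_le i j z) (Set.mem_univ v) (Set.mem_univ u)

theorem abs_coeff_le (hf : IsBoundedC1Holder f M₀ β) (i : Fin n) (r j : Fin d)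
    (z : Fin n → ℝ) : |coeff f i r j z| ≤ M₀ ^ 2 := by
  have hcol : ‖fun h => f h r z‖ ≤ M₀ :=
    (pi_norm_le_iff_of_nonneg hf.nonneg).mpr fun h => hf.abs_le h r z
  calc |coeff f i r j z| ≤ ‖fderiv ℝ (f i j) z‖ * ‖fun h => f h r z‖ :=
        (fderiv ℝ (f i j) z).le_opNorm _
    _ ≤ M₀ * M₀ := mul_le_mul (hf.norm_fderiv_le i j z) hcol (norm_nonneg _) hf.nonneg
    _ = M₀ ^ 2 := (sq M₀).symm

theorem abs_coeff_sub_le (hf : IsBoundedC1Holder f M₀ β) (i : Fin n) (r j : Fin d)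
    (u v : Fin n → ℝ) :
    |coeff f i r j u - coeff f i r j v| ≤ M₀ ^ 2 * (‖u - v‖ + ‖u - v‖ ^ β) := by
  set Du := fderiv ℝ (f i j) u
  set Dv := fderiv ℝ (f i j) v
  have hcol : ‖fun h => f h r u‖ ≤ M₀ :=
    (pi_norm_le_iff_of_nonneg hf.nonneg).mpr fun h => hf.abs_le h r u
  have hcol_sub : ‖(fun h => f h r u) - fun h => f h r v‖ ≤ M₀ * ‖u - v‖ :=
    (pi_norm_le_iff_of_nonneg (mul_nonneg hf.nonneg (norm_nonneg _))).mpr fun h =>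
      hf.abs_sub_le h r u v
  calc |coeff f i r j u - coeff f i r j v|
        = ‖(Du - Dv) (fun h => f h r u) + Dv ((fun h => f h r u) - fun h => f h r v)‖ := by
          rw [sub_apply, map_sub, Real.norm_eq_abs]
          simp only [coeff, Du, Dv]
          ring_nf
    _ ≤ ‖Du - Dv‖ * ‖fun h => f h r u‖ + ‖Dv‖ * ‖(fun h => f h r u) - fun h => f h r v‖ :=
          norm_add_le_of_le ((Du - Dv).le_opNorm _) (Dv.le_opNorm _)
    _ ≤ M₀ * ‖u - v‖ ^ β * M₀ + M₀ * (M₀ * ‖u - v‖) := by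
          have := hf.nonneg
          gcongr
          exacts [hf.norm_fderiv_sub_le i j u v, hf.norm_fderiv_le i j v]
    _ = M₀ ^ 2 * (‖u - v‖ + ‖u - v‖ ^ β) := by ring

end IsBoundedC1Holder

section RoughPath

variable {x : ℕ → Fin d → ℝ} {A : Fin d → Fin d → ℕ → ℕ → ℝ} {ω : ℕ → ℕ → ℝ} {K : ℕ} {p : ℝ}
  {f : Fin n → Fin d → (Fin n → ℝ) → ℝ} {M₀ β γ : ℝ} {y : ℕ → Fin n → ℝ} {k l m : ℕ}

theorem IsRoughPath.area_self (hx : IsRoughPath x A ω K p) (hk : k ≤ K) (r j : Fin d) :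
    A r j k k = 0 := by
  simpa using hx.chen r j k k k le_rfl le_rfl hk

theorem remainder_self (hx : IsRoughPath x A ω K p) (hk : k ≤ K) : remainder x A f y k k = 0 := by
  ext i
  simp [remainder, increment, area, hx.area_self hk]

theorem norm_area_le (hx : IsRoughPath x A ω K p) (hf : IsBoundedC1Holder f M₀ β) (hkl : k ≤ l)
    (hlK : l ≤ K) (z : Fin n → ℝ) : ‖area A f z k l‖ ≤ d ^ 2 * M₀ ^ 2 * ω k l ^ (2 / p) := by
  have hω := hx.control.nonneg k l hkl hlK
  refine (pi_norm_le_iff_of_nonneg (by positivity)).mpr fun i => ?_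
  refine (abs_sum_le_card_mul (c := d * (M₀ ^ 2 * ω k l ^ (2 / p))) fun r =>
    abs_sum_le_card_mul fun j => ?_).trans_eq (by ring)
  rw [abs_mul]
  exact mul_le_mul (hf.abs_coeff_le i r j z) (hx.abs_area_le k l hkl hlK r j) (abs_nonneg _)
    (by positivity)

theorem norm_increment_le (hx : IsRoughPath x A ω K p) (hf : IsBoundedC1Holder f M₀ β)
    (hp : 0 ≤ p) {Ω : ℝ} (hkl : k ≤ l) (hlK : l ≤ K) (hΩ : ω k l ≤ Ω) (z : Fin n → ℝ) :
    ‖increment x A f z k l‖ ≤ (d * M₀ + d ^ 2 * M₀ ^ 2 * Ω ^ (1 / p)) * ω k l ^ (1 / p) := by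
  have hω := hx.control.nonneg k l hkl hlK
  have hΩ₀ := hω.trans hΩ
  have hM₀ := hf.nonneg
  have h2p : ω k l ^ (2 / p) ≤ Ω ^ (1 / p) * ω k l ^ (1 / p) := by
    rw [show 2 / p = 1 / p + 1 / p by ring, Real.rpow_add_of_nonneg hω (by positivity)
      (by positivity)]
    exact mul_le_mul_of_nonneg_right (Real.rpow_le_rpow hω hΩ (by positivity)) (by positivity)
  have hfirst : ∀ i, |∑ j, f i j z * (x l j - x k j)| ≤ d * (M₀ * ω k l ^ (1 / p)) :=
    fun i => abs_sum_le_card_mul fun j => by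
      rw [abs_mul]
      exact mul_le_mul (hf.abs_le i j z) (hx.abs_sub_le k l hkl hlK j) (abs_nonneg _) hM₀
  refine (pi_norm_le_iff_of_nonneg (by positivity)).mpr fun i => ?_
  have hsecond := (norm_le_pi_norm (area A f z k l) i).trans (norm_area_le hx hf hkl hlK z)
  rw [Real.norm_eq_abs] at hsecond ⊢
  calc |increment x A f z k l i| ≤ d * (M₀ * ω k l ^ (1 / p)) + d ^ 2 * M₀ ^ 2 * ω k l ^ (2 / p) :=
        (abs_add_le _ _).trans (add_le_add (hfirst i) hsecond)
    _ ≤ d * (M₀ * ω k l ^ (1 / p)) + d ^ 2 * M₀ ^ 2 * (Ω ^ (1 / p) * ω k l ^ (1 / p)) := by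
        gcongr
    _ = _ := by ring

theorem fderiv_apply_sub (i : Fin n) (j : Fin d) :
    fderiv ℝ (f i j) (y k) (y l - y k)
      = fderiv ℝ (f i j) (y k) (remainder x A f y k l + area A f (y k) k l)
        + ∑ r, coeff f i r j (y k) * (x l r - x k r) := by
  have hΔy : y l - y k = (remainder x A f y k l + area A f (y k) k l)
      + ∑ r, (x l r - x k r) • fun h => f h r (y k) := by
    ext h
    simp only [remainder, increment, Pi.add_apply, Pi.sub_apply, Finset.sum_apply,
      Pi.smul_apply, smul_eq_mul, mul_comm]
    ring
  rw [hΔy, map_add, map_sum]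
  simp [coeff, mul_comm]

/-- Chen's relation cancels the cross term `∑ coeff Δx_{kl} Δx_{lm}` against the linearisation of
`f` at `y_k` along the first-order part of `y_l - y_k`. -/
theorem remainder_delta_apply (hA : ∀ r j, A r j k m = A r j k l + A r j l m
      + (x l r - x k r) * (x m j - x l j)) (i : Fin n) :
    (remainder x A f y k m - remainder x A f y k l - remainder x A f y l m) i =
      ∑ j, (f i j (y l) - f i j (y k) - fderiv ℝ (f i j) (y k) (y l - y k)) * (x m j - x l j)
      + ∑ j, fderiv ℝ (f i j) (y k) (remainder x A f y k l + area A f (y k) k l)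
          * (x m j - x l j)
      + ∑ r, ∑ j, (coeff f i r j (y l) - coeff f i r j (y k)) * A r j l m := by
  have hlin :
      ∑ j, (f i j (y l) - f i j (y k) - fderiv ℝ (f i j) (y k) (y l - y k)) * (x m j - x l j)
        + ∑ j, fderiv ℝ (f i j) (y k) (remainder x A f y k l + area A f (y k) k l)
          * (x m j - x l j)
      = ∑ j, f i j (y l) * (x m j - x l j) - ∑ j, f i j (y k) * (x m j - x l j)
        - ∑ r, ∑ j, coeff f i r j (y k) * ((x l r - x k r) * (x m j - x l j)) := by
    rw [Finset.sum_comm, ← Finset.sum_add_distrib, ← Finset.sum_sub_distrib,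
      ← Finset.sum_sub_distrib]
    refine Finset.sum_congr rfl fun j _ => ?_
    rw [fderiv_apply_sub]
    simp only [← mul_assoc, ← Finset.sum_mul]
    ring
  have hchen : area A f (y k) k m i = area A f (y k) k l i + area A f (y k) l m i
      + ∑ r, ∑ j, coeff f i r j (y k) * ((x l r - x k r) * (x m j - x l j)) := by
    simp only [area, hA, mul_add, Finset.sum_add_distrib]
  have hfirst : ∑ j, f i j (y k) * (x m j - x k j)
      = ∑ j, f i j (y k) * (x l j - x k j) + ∑ j, f i j (y k) * (x m j - x l j) := by
    rw [← Finset.sum_add_distrib]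
    exact Finset.sum_congr rfl fun j _ => by ring
  have hcoeff : ∑ r, ∑ j, (coeff f i r j (y l) - coeff f i r j (y k)) * A r j l m
      = area A f (y l) l m i - area A f (y k) l m i := by
    simp only [area, sub_mul, Finset.sum_sub_distrib]
  set V := remainder x A f y k l + area A f (y k) k l
  simp only [Pi.sub_apply, remainder, increment]
  linear_combination -hlin - hcoeff - hchen - hfirst

theorem norm_remainder_delta_le (hx : IsRoughPath x A ω K p) (hf : IsBoundedC1Holder f M₀ β)
    (hβ : 0 ≤ β) (hkl : k ≤ l) (hlm : l ≤ m) (hmK : m ≤ K) :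
    ‖remainder x A f y k m - remainder x A f y k l - remainder x A f y l m‖ ≤
      d * M₀ * (‖y l - y k‖ ^ β * ‖y l - y k‖ + ‖remainder x A f y k l‖
          + d ^ 2 * M₀ ^ 2 * ω k l ^ (2 / p)) * ω l m ^ (1 / p)
        + d ^ 2 * M₀ ^ 2 * (‖y l - y k‖ + ‖y l - y k‖ ^ β) * ω l m ^ (2 / p) := by
  have hM₀ := hf.nonneg
  have hω := hx.control.nonneg l m hlm hmK
  have hωkl := hx.control.nonneg k l hkl (hlm.trans hmK)
  set Y := ‖y l - y k‖
  have hV : ‖remainder x A f y k l + area A f (y k) k l‖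
      ≤ ‖remainder x A f y k l‖ + d ^ 2 * M₀ ^ 2 * ω k l ^ (2 / p) :=
    norm_add_le_of_le le_rfl (norm_area_le hx hf hkl (hlm.trans hmK) _)
  have hΔx : ∀ j, |x m j - x l j| ≤ ω l m ^ (1 / p) := hx.abs_sub_le l m hlm hmK
  refine (pi_norm_le_iff_of_nonneg (by positivity)).mpr fun i => ?_
  rw [Real.norm_eq_abs, remainder_delta_apply fun r j => hx.chen r j k l m hkl hlm hmK]
  have h₁ : |∑ j, (f i j (y l) - f i j (y k) - fderiv ℝ (f i j) (y k) (y l - y k))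
      * (x m j - x l j)| ≤ d * (M₀ * Y ^ β * Y * ω l m ^ (1 / p)) :=
    abs_sum_le_card_mul fun j => by
      rw [abs_mul]
      refine mul_le_mul ?_ (hΔx j) (abs_nonneg _) (by positivity)
      simpa using norm_image_sub_sub_fderiv_le hM₀ hβ (hf.differentiable i j)
        (hf.norm_fderiv_sub_le i j) (y k) (y l)
  have h₂ : |∑ j, fderiv ℝ (f i j) (y k) (remainder x A f y k l + area A f (y k) k l)
      * (x m j - x l j)| ≤ d * (M₀ * (‖remainder x A f y k l‖
        + d ^ 2 * M₀ ^ 2 * ω k l ^ (2 / p)) * ω l m ^ (1 / p)) :=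
    abs_sum_le_card_mul fun j => by
      rw [abs_mul]
      refine mul_le_mul ?_ (hΔx j) (abs_nonneg _) (by positivity)
      exact ((fderiv ℝ (f i j) (y k)).le_opNorm _).trans
        (mul_le_mul (hf.norm_fderiv_le i j _) hV (norm_nonneg _) hM₀)
  have h₃ : |∑ r, ∑ j, (coeff f i r j (y l) - coeff f i r j (y k)) * A r j l m|
      ≤ d * (d * (M₀ ^ 2 * (Y + Y ^ β) * ω l m ^ (2 / p))) :=
    abs_sum_le_card_mul fun r => abs_sum_le_card_mul fun j => by
      rw [abs_mul]
      exact mul_le_mul (hf.abs_coeff_sub_le i r j _ _) (hx.abs_area_le l m hlm hmK r j)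
        (abs_nonneg _) (by positivity)
  calc _ ≤ _ := (abs_add_le _ _).trans (add_le_add_left (abs_add_le _ _) _)
    _ ≤ _ := add_le_add (add_le_add h₁ h₂) h₃
    _ = _ := by ring

theorem norm_remainder_delta_le_of_small (hx : IsRoughPath x A ω K p)
    (hf : IsBoundedC1Holder f M₀ (γ - 2)) (hp : 0 < p) (hγ : 2 ≤ γ) (hγ3 : γ ≤ 3)
    {C₀ R L : ℝ} (hC₀ : 1 ≤ C₀) (hR : 0 ≤ R) (hkl : k ≤ l) (hlm : l ≤ m) (hmK : m ≤ K)
    (hkm : ω k m ≤ 1) (hlmL : ω l m ≤ L)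
    (hΔy : ‖y l - y k‖ ≤ C₀ * ω k m ^ (1 / p))
    (hJ : ‖remainder x A f y k l‖ ≤ R * ω k m ^ (γ / p)) :
    ‖remainder x A f y k m - remainder x A f y k l - remainder x A f y l m‖ ≤
      (d * M₀ * (C₀ ^ 2 + R * L ^ (1 / p) + d ^ 2 * M₀ ^ 2) + 2 * d ^ 2 * M₀ ^ 2 * C₀)
        * ω k m ^ (γ / p) := by
  have hM₀ := hf.nonneg
  have hω := hx.control
  have hw := hω.nonneg k m (hkl.trans hlm) hmK
  have hwkl := hω.nonneg k l hkl (hlm.trans hmK)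
  have hwlm := hω.nonneg l m hlm hmK
  set s := ω k m ^ (1 / p)
  have hs0 : 0 ≤ s := by positivity
  have hs1 : s ≤ 1 := Real.rpow_le_one hw hkm (by positivity)
  have hsγ : ω k m ^ (γ / p) = s ^ γ := by
    rw [← Real.rpow_mul hw, one_div_mul_eq_div]
  have hlm₁ : ω l m ^ (1 / p) ≤ s := hω.rpow_mono (by positivity) hkl hlm le_rfl hmK
  have hlmL' : ω l m ^ (1 / p) ≤ L ^ (1 / p) := Real.rpow_le_rpow hwlm hlmL (by positivity)
  have hkl₂ : ω k l ^ (2 / p) ≤ s ^ 2 := by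
    rw [rpow_two_div_eq_sq hwkl]
    gcongr
    exact hω.rpow_mono (by positivity) le_rfl hkl hlm hmK
  have hlm₂ : ω l m ^ (2 / p) ≤ s ^ 2 := by
    rw [rpow_two_div_eq_sq hwlm]
    gcongr
  have hYβ : ‖y l - y k‖ ^ (γ - 2) ≤ C₀ * s ^ (γ - 2) :=
    rpow_le_mul_rpow_of_le (norm_nonneg _) hs0 hC₀ (by linarith) (by linarith) hΔy
  have hpow : s ^ (γ - 2) * s ^ 2 = s ^ γ := by
    rw [← Real.rpow_add_natCast' hs0 (by norm_num; linarith)]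
    norm_num
  have hcube : s ^ 3 ≤ s ^ γ := by
    simpa using Real.rpow_le_rpow_of_exponent_ge' hs0 hs1 (by linarith) hγ3
  have := Real.rpow_nonneg hwlm (1 / p)
  have := Real.rpow_nonneg hwlm (2 / p)
  calc _ ≤ _ := norm_remainder_delta_le hx hf (by linarith) hkl hlm hmK
    _ = d * M₀ * (‖y l - y k‖ ^ (γ - 2) * ‖y l - y k‖ + d ^ 2 * M₀ ^ 2 * ω k l ^ (2 / p))
            * ω l m ^ (1 / p) + d * M₀ * ‖remainder x A f y k l‖ * ω l m ^ (1 / p)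
          + d ^ 2 * M₀ ^ 2 * (‖y l - y k‖ + ‖y l - y k‖ ^ (γ - 2)) * ω l m ^ (2 / p) := by ring
    _ ≤ d * M₀ * ((C₀ * s ^ (γ - 2)) * (C₀ * s) + d ^ 2 * M₀ ^ 2 * s ^ 2) * s
          + d * M₀ * (R * s ^ γ) * L ^ (1 / p)
          + d ^ 2 * M₀ ^ 2 * (C₀ * s + C₀ * s ^ (γ - 2)) * s ^ 2 := by
        rw [← hsγ]
        gcongr
    _ = d * M₀ * (C₀ ^ 2 * (s ^ (γ - 2) * s ^ 2) + d ^ 2 * M₀ ^ 2 * s ^ 3)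
          + d * M₀ * R * L ^ (1 / p) * s ^ γ
          + d ^ 2 * M₀ ^ 2 * C₀ * (s ^ 3 + s ^ (γ - 2) * s ^ 2) := by ring
    _ ≤ d * M₀ * (C₀ ^ 2 * s ^ γ + d ^ 2 * M₀ ^ 2 * s ^ γ) + d * M₀ * R * L ^ (1 / p) * s ^ γ
          + d ^ 2 * M₀ ^ 2 * C₀ * (s ^ γ + s ^ γ) := by
        rw [hpow]
        gcongr
    _ = _ := by rw [hsγ]; ring

theorem norm_sub_le_of_norm_remainder_le (hx : IsRoughPath x A ω K p)
    (hf : IsBoundedC1Holder f M₀ β) (hp : 0 ≤ p) {Ω C₀ : ℝ} (hΩ : ω 0 K ≤ Ω)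
    (hC₀ : 1 + d * M₀ + d ^ 2 * M₀ ^ 2 * Ω ^ (1 / p) ≤ C₀) (hkl : k ≤ l) (hlK : l ≤ K)
    (hJ : ‖remainder x A f y k l‖ ≤ ω k l ^ (1 / p)) : ‖y l - y k‖ ≤ C₀ * ω k l ^ (1 / p) := by
  have hw := hx.control.nonneg k l hkl hlK
  calc ‖y l - y k‖ = ‖remainder x A f y k l + increment x A f (y k) k l‖ := by
        rw [remainder, sub_add_cancel]
    _ ≤ ω k l ^ (1 / p) + (d * M₀ + d ^ 2 * M₀ ^ 2 * Ω ^ (1 / p)) * ω k l ^ (1 / p) :=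
        norm_add_le_of_le hJ (norm_increment_le hx hf hp hkl hlK
          ((hx.control.mono (Nat.zero_le k) hkl hlK le_rfl).trans hΩ) _)
    _ ≤ C₀ * ω k l ^ (1 / p) := by
        rw [← one_add_mul, ← add_assoc]
        exact mul_le_mul_of_nonneg_right hC₀ (by positivity)

end RoughPath

/-- `C₀` bounds `‖y l - y k‖ / ω^{1/p}` on small intervals, and `L` is small enough that
`M ω^{γ/p} ≤ ω^{1/p}` there and that the defect constant of `norm_remainder_delta_le_of_small`
(with `R = M`) is absorbed by the halving in `norm_le_of_sewing`. -/
structure AdmissibleConstants (d : ℕ) (M₀ p γ Ω C₀ M L : ℝ) : Prop where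
  le_C₀ : 1 + d * M₀ + d ^ 2 * M₀ ^ 2 * Ω ^ (1 / p) ≤ C₀
  M_nonneg : 0 ≤ M
  L_pos : 0 < L
  L_le_one : L ≤ 1
  mul_rpow_L_le_one : M * L ^ ((γ - 1) / p) ≤ 1
  absorb : M * 2 ^ (1 - γ / p)
    + 2 * (d * M₀ * (C₀ ^ 2 + M * L ^ (1 / p) + d ^ 2 * M₀ ^ 2) + 2 * d ^ 2 * M₀ ^ 2 * C₀) ≤ M

theorem AdmissibleConstants.mul_rpow_le {d : ℕ} {M₀ p γ Ω C₀ M L w : ℝ}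
    (hc : AdmissibleConstants d M₀ p γ Ω C₀ M L) (hp : 0 < p) (hγ : 1 ≤ γ) (hw : 0 ≤ w)
    (hwL : w ≤ L) : M * w ^ (γ / p) ≤ w ^ (1 / p) :=
  mul_rpow_le_rpow_of_le hw hwL hc.M_nonneg (by positivity)
    (div_le_div_of_nonneg_right hγ hp.le) (by rw [← sub_div]; exact hc.mul_rpow_L_le_one)

section Estimates

variable {x : ℕ → Fin d → ℝ} {A : Fin d → Fin d → ℕ → ℕ → ℝ} {ω : ℕ → ℕ → ℝ} {K : ℕ} {p : ℝ}
  {f : Fin n → Fin d → (Fin n → ℝ) → ℝ} {M₀ γ Ω C₀ M L : ℝ} {y : ℕ → Fin n → ℝ} {k l : ℕ}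

theorem norm_remainder_le_of_small (hx : IsRoughPath x A ω K p)
    (hf : IsBoundedC1Holder f M₀ (γ - 2)) (hy : ∀ k, remainder x A f y k (k + 1) = 0)
    (hp : 0 < p) (hpγ : p < γ) (hγ2 : 2 ≤ γ) (hγ3 : γ ≤ 3) (hΩ : ω 0 K ≤ Ω)
    (hc : AdmissibleConstants d M₀ p γ Ω C₀ M L) (hkl : k ≤ l) (hlK : l ≤ K) (hL : ω k l ≤ L) :
    ‖remainder x A f y k l‖ ≤ M * ω k l ^ (γ / p) := by
  have hω := hx.control
  have hM₀ := hf.nonneg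
  have hM := hc.M_nonneg
  have hL₀ := hc.L_pos.le
  have hC₀ : 1 ≤ C₀ := by
    have : 0 ≤ Ω := (hω.nonneg 0 K (Nat.zero_le K) le_rfl).trans hΩ
    have : 0 ≤ d * M₀ + d ^ 2 * M₀ ^ 2 * Ω ^ (1 / p) := by positivity
    linarith [hc.le_C₀]
  refine hω.norm_le_of_sewing ((one_lt_div hp).mpr hpγ) (by positivity) hc.absorb
    (fun k hk => remainder_self hx hk) (fun k _ => hy k) ?_ hkl hlK hL
  intro k l m hkl hlm hmK hkmL hJ
  have hJ' : ‖remainder x A f y k l‖ ≤ ω k l ^ (1 / p) :=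
    hJ.trans (hc.mul_rpow_le hp (by linarith) (hω.nonneg k l hkl (hlm.trans hmK))
      ((hω.mono le_rfl hkl hlm hmK).trans hkmL))
  have hΔy : ‖y l - y k‖ ≤ C₀ * ω k m ^ (1 / p) :=
    (norm_sub_le_of_norm_remainder_le hx hf hp.le hΩ hc.le_C₀ hkl (hlm.trans hmK) hJ').trans
      (mul_le_mul_of_nonneg_left (hω.rpow_mono (by positivity) le_rfl hkl hlm hmK) (by linarith))
  exact norm_remainder_delta_le_of_small hx hf hp hγ2 hγ3 hC₀ hM hkl hlm hmK
    (hkmL.trans hc.L_le_one) ((hω.mono hkl hlm le_rfl hmK).trans hkmL) hΔy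
    (hJ.trans (mul_le_mul_of_nonneg_left (hω.rpow_mono (by positivity) le_rfl hkl hlm hmK) hM))

theorem norm_sub_le (hx : IsRoughPath x A ω K p) (hf : IsBoundedC1Holder f M₀ (γ - 2))
    (hy : ∀ k, remainder x A f y k (k + 1) = 0) (hp : 0 < p) (hpγ : p < γ) (hγ2 : 2 ≤ γ)
    (hγ3 : γ ≤ 3) (hΩ : ω 0 K ≤ Ω) (hc : AdmissibleConstants d M₀ p γ Ω C₀ M L)
    (hkl : k ≤ l) (hlK : l ≤ K) : ‖y l - y k‖ ≤ C₀ * (1 + 2 * Ω / L) * ω k l ^ (1 / p) := by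
  have hω := hx.control
  have hM₀ := hf.nonneg
  have hΩ₀ : 0 ≤ Ω := (hω.nonneg 0 K (Nat.zero_le K) le_rfl).trans hΩ
  have hC₀ : 0 ≤ C₀ := le_trans (by positivity) hc.le_C₀
  refine (hω.norm_sub_le_of_chaining (α := 1 / p) (by positivity) hC₀ hc.L_pos
    (fun k l hkl hlK hL => ?_) (fun k hk => ?_) hkl hlK).trans ?_
  · refine norm_sub_le_of_norm_remainder_le hx hf hp.le hΩ hc.le_C₀ hkl hlK ?_
    exact (norm_remainder_le_of_small hx hf hy hp hpγ hγ2 hγ3 hΩ hc hkl hlK hL).trans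
      (hc.mul_rpow_le hp (by linarith) (hω.nonneg k l hkl hlK) hL)
  · refine norm_sub_le_of_norm_remainder_le hx hf hp.le hΩ hc.le_C₀ k.le_succ hk ?_
    rw [hy k, norm_zero]
    exact Real.rpow_nonneg (hω.nonneg k (k + 1) k.le_succ hk) _
  · have := hω.nonneg k l hkl hlK
    have := hc.L_pos
    have := (hω.mono (Nat.zero_le k) hkl hlK le_rfl).trans hΩ
    gcongr

theorem norm_remainder_le (hx : IsRoughPath x A ω K p) (hf : IsBoundedC1Holder f M₀ (γ - 2))
    (hy : ∀ k, remainder x A f y k (k + 1) = 0) (hp : 0 < p) (hpγ : p < γ) (hγ2 : 2 ≤ γ)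
    (hγ3 : γ ≤ 3) (hΩ : ω 0 K ≤ Ω) (hc : AdmissibleConstants d M₀ p γ Ω C₀ M L)
    (hkl : k ≤ l) (hlK : l ≤ K) :
    ‖remainder x A f y k l‖ ≤
      max M (2 * C₀ * (1 + Ω / L) * L ^ ((1 - γ) / p)) * ω k l ^ (γ / p) := by
  have hw := hx.control.nonneg k l hkl hlK
  have hΩ₀ : 0 ≤ Ω := (hx.control.nonneg 0 K (Nat.zero_le K) le_rfl).trans hΩ
  have hM₀ := hf.nonneg
  have hL₀ := hc.L_pos
  by_cases hwL : ω k l ≤ L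
  · exact (norm_remainder_le_of_small hx hf hy hp hpγ hγ2 hγ3 hΩ hc hkl hlK hwL).trans
      (mul_le_mul_of_nonneg_right (le_max_left _ _) (by positivity))
  push Not at hwL
  have hB : d * M₀ + d ^ 2 * M₀ ^ 2 * Ω ^ (1 / p) ≤ C₀ := by linarith [hc.le_C₀]
  have hC₀ : 0 ≤ C₀ := le_trans (by positivity) hB
  calc ‖remainder x A f y k l‖ ≤ C₀ * (1 + 2 * Ω / L) * ω k l ^ (1 / p) + C₀ * ω k l ^ (1 / p) :=
        norm_sub_le_of_le (norm_sub_le hx hf hy hp hpγ hγ2 hγ3 hΩ hc hkl hlK)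
          ((norm_increment_le hx hf hp.le hkl hlK
            ((hx.control.mono (Nat.zero_le k) hkl hlK le_rfl).trans hΩ) _).trans
            (mul_le_mul_of_nonneg_right hB (by positivity)))
    _ = 2 * C₀ * (1 + Ω / L) * ω k l ^ (1 / p) := by ring
    _ ≤ 2 * C₀ * (1 + Ω / L) * (L ^ ((1 - γ) / p) * ω k l ^ (γ / p)) := by
        rw [sub_div]
        gcongr
        exact rpow_le_rpow_sub_mul_rpow_of_le hL₀ hwL.le
          (div_le_div_of_nonneg_right (by linarith) hp.le)
    _ ≤ _ := by
        rw [← mul_assoc]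
        gcongr
        exact le_max_right _ _

end Estimates

end Milstein

open Milstein in
/-- Lemma 2(a) of the paper: a priori estimates for the Milstein-type scheme driven by
a discrete rough path of finite `p`-variation with second-level components `A`
satisfying Chen's relation, `2 ≤ p < γ ≤ 3`. -/
theorem milstein_scheme_a_priori_estimate (n d : ℕ) (γ p Ω M₀ : ℝ)
    (hp : 2 ≤ p) (hpγ : p < γ) (hγ : γ ≤ 3) (hΩ : 0 ≤ Ω) (hM₀ : 0 < M₀) :
    ∃ C > 0, ∃ M > 0,
      ∀ (K : ℕ) (x : ℕ → Fin d → ℝ) (A : Fin d → Fin d → ℕ → ℕ → ℝ)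
        (ω : ℕ → ℕ → ℝ) (f : Fin n → Fin d → (Fin n → ℝ) → ℝ)
        (y : ℕ → Fin n → ℝ),
        (∀ k l, k ≤ l → l ≤ K → 0 ≤ ω k l) →
        (∀ k l m, k ≤ l → l ≤ m → m ≤ K → ω k l + ω l m ≤ ω k m) →
        ω 0 K ≤ Ω →
        (∀ r j k l m, k ≤ l → l ≤ m → m ≤ K →
          A r j k m = A r j k l + A r j l m + (x l r - x k r) * (x m j - x l j)) →
        (∀ k l, k ≤ l → l ≤ K → ∀ j, |x l j - x k j| ^ p ≤ ω k l) →
        (∀ k l, k ≤ l → l ≤ K → ∀ r j, |A r j k l| ≤ ω k l ^ (2 / p)) →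
        (∀ i j y', |f i j y'| ≤ M₀) →
        (∀ i j, Differentiable ℝ (f i j)) →
        (∀ i j y', ‖fderiv ℝ (f i j) y'‖ ≤ M₀) →
        (∀ i j y' z', ‖fderiv ℝ (f i j) y' - fderiv ℝ (f i j) z'‖
          ≤ M₀ * ‖y' - z'‖ ^ (γ - 2)) →
        (∀ k i, y (k + 1) i = y k i + (∑ j, f i j (y k) * (x (k + 1) j - x k j))
          + ∑ r, ∑ j, (∑ h, f h r (y k) * fderiv ℝ (f i j) (y k) (Pi.single h 1))
              * A r j k (k + 1)) →
        ∀ k l, k ≤ l → l ≤ K →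
          (∀ i, |y l i - y k i - (∑ j, f i j (y k) * (x l j - x k j))
              - ∑ r, ∑ j, (∑ h, f h r (y k) * fderiv ℝ (f i j) (y k) (Pi.single h 1))
                  * A r j k l|
            ≤ M * ω k l ^ (γ / p)) ∧
          (∀ i, |y l i - y k i| ≤ C * ω k l ^ (1 / p)) := by
  have hp₀ : 0 < p := by linarith
  set C₀ : ℝ := 1 + d * M₀ + d ^ 2 * M₀ ^ 2 * Ω ^ (1 / p)
  obtain ⟨M, hM, L, hL₀, hL₁, hML, hMc⟩ := exists_sewing_constants
    (a := d * M₀ * (C₀ ^ 2 + d ^ 2 * M₀ ^ 2) + 2 * d ^ 2 * M₀ ^ 2 * C₀) (b := d * M₀)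
    (θ := γ / p) (q := (γ - 1) / p) (r := 1 / p)
    (by positivity) ((one_lt_div hp₀).mpr hpγ) (div_pos (by linarith) hp₀) (one_div_pos.mpr hp₀)
  have hc : AdmissibleConstants d M₀ p γ Ω C₀ M L :=
    ⟨le_rfl, hM.le, hL₀, hL₁, hML, hMc.trans_eq' (by ring)⟩
  refine ⟨C₀ * (1 + 2 * Ω / L), by positivity,
    max M (2 * C₀ * (1 + Ω / L) * L ^ ((1 - γ) / p)), lt_max_of_lt_left hM, ?_⟩
  intro K x A ω f y hω₀ hω hΩK hchen hxp hA hfb hfd hfd' hfH hsch k l hkl hlK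
  have hx : IsRoughPath x A ω K p := ⟨⟨hω₀, hω⟩, hchen, fun k l h₁ h₂ j => by
    rw [one_div, Real.le_rpow_inv_iff_of_pos (abs_nonneg _) (hω₀ k l h₁ h₂) hp₀]
    exact hxp k l h₁ h₂ j, hA⟩
  have hf : IsBoundedC1Holder f M₀ (γ - 2) := ⟨hM₀.le, hfb, hfd, hfd', hfH⟩
  have hy : ∀ k, remainder x A f y k (k + 1) = 0 := fun k => funext fun i => by
    rw [remainder_apply_eq_sum, hsch k i, Pi.zero_apply]
    ring
  refine ⟨fun i => ?_, fun i => (norm_le_pi_norm (y l - y k) i).trans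
    (norm_sub_le hx hf hy hp₀ hpγ (by linarith) hγ hΩK hc hkl hlK)⟩
  rw [← remainder_apply_eq_sum, ← Real.norm_eq_abs]
  exact (norm_le_pi_norm _ i).trans
    (norm_remainder_le hx hf hy hp₀ hpγ (by linarith) hγ hΩK hc hkl hlK)
end

section
/- Let $f : \mathbb{R}^n \to \mathbb{R}^{n \times d}$ be differentiable and set $g^i_{rj}(y) = \sum_h f^h_r(y)\,\partial_h f^i_j(y)$. For indices $k \le l \le m$, points $y_k, y_l, y_m \in \mathbb{R}^n$, $x_k, x_l, x_m \in \mathbb{R}^d$, and reals $A^{rj}_{kl}, A^{rj}_{lm}, A^{rj}_{km}$ satisfying Chen's relation $A^{rj}_{km} = A^{rj}_{kl} + A^{rj}_{lm} + (x^r_l - x^r_k)(x^j_m - x^j_l)$, define $J^i_{kl} = y^i_l - y^i_k - f^i_j(y_k)(x^j_l - x^j_k) - g^i_{rj}(y_k) A^{rj}_{kl}$ (and analogously for $J_{km}, J_{lm}$), $I^i_{kl} = y^i_l - y^i_k - f^i_j(y_k)(x^j_l - x^j_k)$, and $R^i_{kl,j} = f^i_j(y_l) - f^i_j(y_k) - \partial_h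 f^i_j(y_k)(y^h_l - y^h_k)$ (summation over repeated indices). Then $J^i_{km} - J^i_{kl} - J^i_{lm} = (R^i_{kl,j} + \partial_h f^i_j(y_k) I^h_{kl})(x^j_m - x^j_l) + (g^i_{rj}(y_l) - g^i_{rj}(y_k)) A^{rj}_{lm}$. -/
/-!
Subtracting the three one-step expansions, the zeroth-order terms telescope and Chen's relation
turns `g(y_k) (A_km - A_kl)` into `g(y_k) A_lm` plus the product of first-level increments. What
remains of the first-level terms is `(f(y_l) - f(y_k) - g(y_k) (x_l - x_k)) (x_m - x_l)`, and
expanding `f(y_l) - f(y_k)` to first order at `y_k`, with `y_l - y_k = I + f(y_k) (x_l - x_k)`,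
the chain-rule term `∂f · f = g` cancels `g(y_k) (x_l - x_k)`.
-/

open Finset

section
variable {ι κ : Type*} [Fintype ι] [Fintype κ]

theorem milstein_step_defect_eq_of_chen (yk yl ym : ℝ) (Fk Fl : κ → ℝ) (Gk Gl : κ → κ → ℝ)
    (xk xl xm : κ → ℝ) (Akl Alm Akm : κ → κ → ℝ)
    (hChen : ∀ r j, Akm r j = Akl r j + Alm r j + (xl r - xk r) * (xm j - xl j)) :
    (ym - yk - ∑ j, Fk j * (xm j - xk j) - ∑ r, ∑ j, Gk r j * Akm r j)
      - (yl - yk - ∑ j, Fk j * (xl j - xk j) - ∑ r, ∑ j, Gk r j * Akl r j)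
      - (ym - yl - ∑ j, Fl j * (xm j - xl j) - ∑ r, ∑ j, Gl r j * Alm r j)
      = ∑ j, (Fl j - Fk j - ∑ r, Gk r j * (xl r - xk r)) * (xm j - xl j)
        + ∑ r, ∑ j, (Gl r j - Gk r j) * Alm r j := by
  have hA : ∑ r, ∑ j, Gk r j * Akm r j = ∑ r, ∑ j, Gk r j * Akl r j
      + ∑ r, ∑ j, Gk r j * Alm r j + ∑ j, (∑ r, Gk r j * (xl r - xk r)) * (xm j - xl j) := by
    simp only [hChen, mul_add, sum_add_distrib, sum_mul]
    rw [sum_comm (f := fun r j => Gk r j * ((xl r - xk r) * (xm j - xl j)))]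
    simp only [mul_assoc]
  simp only [hA, fun j => sub_mul (Fl j - Fk j) (∑ r, Gk r j * (xl r - xk r)), sum_sub_distrib]
  generalize ∑ j, (∑ r, Gk r j * (xl r - xk r)) * (xm j - xl j) = S
  simp only [sub_mul, mul_sub, sum_sub_distrib]
  ring

theorem sum_mul_add_sum_mul (D u : ι → ℝ) (F : ι → κ → ℝ) (v : κ → ℝ) :
    ∑ h, D h * (u h + ∑ r, F h r * v r) = ∑ h, D h * u h + ∑ r, (∑ h, F h r * D h) * v r := by
  simp only [mul_add, sum_add_distrib, mul_sum, sum_mul]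
  rw [sum_comm]
  congr 1
  exact sum_congr rfl fun _ _ => sum_congr rfl fun _ _ => by ring

end

theorem milstein_error_cocycle_identity_general {n d : ℕ}
    (f : Fin n → Fin d → (Fin n → ℝ) → ℝ)
    (yk yl ym : Fin n → ℝ) (xk xl xm : Fin d → ℝ)
    (Akl Alm Akm : Fin d → Fin d → ℝ)
    (hChen : ∀ r j, Akm r j = Akl r j + Alm r j + (xl r - xk r) * (xm j - xl j))
    (g : Fin n → Fin d → Fin d → (Fin n → ℝ) → ℝ)
    (hg : ∀ i r j y, g i r j y = ∑ h, f h r y * fderiv ℝ (f i j) y (Pi.single h 1))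
    (Jkl Jlm Jkm : Fin n → ℝ)
    (hJkl : ∀ i, Jkl i = yl i - yk i - ∑ j, f i j yk * (xl j - xk j)
      - ∑ r, ∑ j, g i r j yk * Akl r j)
    (hJlm : ∀ i, Jlm i = ym i - yl i - ∑ j, f i j yl * (xm j - xl j)
      - ∑ r, ∑ j, g i r j yl * Alm r j)
    (hJkm : ∀ i, Jkm i = ym i - yk i - ∑ j, f i j yk * (xm j - xk j)
      - ∑ r, ∑ j, g i r j yk * Akm r j)
    (I : Fin n → ℝ)
    (hI : ∀ h, I h = yl h - yk h - ∑ j, f h j yk * (xl j - xk j))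
    (R : Fin n → Fin d → ℝ)
    (hR : ∀ i j, R i j = f i j yl - f i j yk
      - ∑ h, fderiv ℝ (f i j) yk (Pi.single h 1) * (yl h - yk h)) :
    ∀ i, Jkm i - Jkl i - Jlm i
      = ∑ j, (R i j + ∑ h, fderiv ℝ (f i j) yk (Pi.single h 1) * I h) * (xm j - xl j)
        + ∑ r, ∑ j, (g i r j yl - g i r j yk) * Alm r j := by
  intro i
  rw [hJkm, hJkl, hJlm, milstein_step_defect_eq_of_chen (hChen := hChen)]
  congr 1
  refine sum_congr rfl fun j _ => congrArg (· * (xm j - xl j)) ?_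
  have hIncrement : ∀ h, yl h - yk h = I h + ∑ r, f h r yk * (xl r - xk r) := fun h => by
    rw [hI]; ring
  have hLinearTerm := sum_mul_add_sum_mul (fun h => fderiv ℝ (f i j) yk (Pi.single h 1)) I
    (fun h r => f h r yk) (fun r => xl r - xk r)
  simp only [← hIncrement, ← hg] at hLinearTerm
  rw [hR, hLinearTerm]
  ring

/-- The second-order cocycle identity (equation (12) of the paper) for the error
functional `J` of the Milstein-type scheme, using Chen's relation for the
second-level components `A`.  Here `∂ₕ f i j (y) = fderiv ℝ (f i j) y (e_h)`. -/
theorem milstein_error_cocycle_identity {n d : ℕ}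
    (f : Fin n → Fin d → (Fin n → ℝ) → ℝ)
    (hf : ∀ i j, Differentiable ℝ (f i j))
    (yk yl ym : Fin n → ℝ) (xk xl xm : Fin d → ℝ)
    (Akl Alm Akm : Fin d → Fin d → ℝ)
    (hChen : ∀ r j, Akm r j = Akl r j + Alm r j + (xl r - xk r) * (xm j - xl j))
    (g : Fin n → Fin d → Fin d → (Fin n → ℝ) → ℝ)
    (hg : ∀ i r j y, g i r j y = ∑ h, f h r y * fderiv ℝ (f i j) y (Pi.single h 1))
    (Jkl Jlm Jkm : Fin n → ℝ)
    (hJkl : ∀ i, Jkl i = yl i - yk i - ∑ j, f i j yk * (xl j - xk j)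
      - ∑ r, ∑ j, g i r j yk * Akl r j)
    (hJlm : ∀ i, Jlm i = ym i - yl i - ∑ j, f i j yl * (xm j - xl j)
      - ∑ r, ∑ j, g i r j yl * Alm r j)
    (hJkm : ∀ i, Jkm i = ym i - yk i - ∑ j, f i j yk * (xm j - xk j)
      - ∑ r, ∑ j, g i r j yk * Akm r j)
    (I : Fin n → ℝ)
    (hI : ∀ h, I h = yl h - yk h - ∑ j, f h j yk * (xl j - xk j))
    (R : Fin n → Fin d → ℝ)
    (hR : ∀ i j, R i j = f i j yl - f i j yk
      - ∑ h, fderiv ℝ (f i j) yk (Pi.single h 1) * (yl h - yk h)) :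
    ∀ i, Jkm i - Jkl i - Jlm i
      = ∑ j, (R i j + ∑ h, fderiv ℝ (f i j) yk (Pi.single h 1) * I h) * (xm j - xl j)
        + ∑ r, ∑ j, (g i r j yl - g i r j yk) * Alm r j :=
  milstein_error_cocycle_identity_general f yk yl ym xk xl xm Akl Alm Akm hChen g hg Jkl Jlm Jkm
    hJkl hJlm hJkm I hI R hR
end

section
/- Let $\gamma > p \ge 1$, $L > 0$, $B_2 > 0$, and suppose $L$ and $\delta > 0$ satisfy $(1 - 2^{1-\gamma/p})L \ge 2B_2$ and $L\delta^{(\gamma-1)/p} \le B_2$. Suppose $a : \{(k,m) : 0 \le k \le m \le K\} \to [0,\infty)$ and a superadditive control $\omega_{km}$ satisfy: $a_{kk} = a_{k,k+1} = 0$ for all $k$, and for all $k < m$ with $m - k > 1$ and $\omega_{km} \le \delta$, there exists $l$ with $k \le l < m$, $\omega_{kl} \le \frac12\omega_{km}$, $\omega_{l+1,m} \le \frac12\omega_{km}$, such that $a_{km} \le a_{kl} + a_{l+1,m} + 2B_2\,\omega_{km}^{\gamma/p}$. Then $a_{km} \le L\,\omega_{km}^{\gamma/p}$ whenever $\omega_{km}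 \le \delta$. -/
/-- Abstracted induction ('Claim') from the proof of Lemma 1 of the paper: a discrete
sewing-type bound.  A nonnegative family `a` with vanishing one-step values which is
subadditive up to an error `2·B₂·ω^{γ/p}` along halving splittings of a superadditive
control `ω` satisfies `a ≤ L·ω^{γ/p}` on all pairs with small control. -/
theorem discrete_sewing_bound (K : ℕ) (γ p L B₂ δ : ℝ)
    (hp : 1 ≤ p) (hγp : p < γ) (hL : 0 < L) (hB₂ : 0 < B₂) (hδ : 0 < δ)
    (hL2 : (1 - 2 ^ (1 - γ / p)) * L ≥ 2 * B₂)
    (hLδ : L * δ ^ ((γ - 1) / p) ≤ B₂)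
    (a : ℕ → ℕ → ℝ) (ha : ∀ k m, k ≤ m → m ≤ K → 0 ≤ a k m)
    (ω : ℕ → ℕ → ℝ)
    (hωnonneg : ∀ k m, k ≤ m → m ≤ K → 0 ≤ ω k m)
    (hωsuper : ∀ k l m, k ≤ l → l ≤ m → m ≤ K → ω k l + ω l m ≤ ω k m)
    (ha0 : ∀ k, k ≤ K → a k k = 0)
    (ha1 : ∀ k, k + 1 ≤ K → a k (k + 1) = 0)
    (hsplit : ∀ k m, k < m → m ≤ K → 1 < m - k → ω k m ≤ δ →
      ∃ l, k ≤ l ∧ l < m ∧ ω k l ≤ ω k m / 2 ∧ ω (l + 1) m ≤ ω k m / 2 ∧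
        a k m ≤ a k l + a (l + 1) m + 2 * B₂ * ω k m ^ (γ / p)) :
    ∀ k m, k ≤ m → m ≤ K → ω k m ≤ δ → a k m ≤ L * ω k m ^ (γ / p) := by
  have hp0 : 0 < p := lt_of_lt_of_le one_pos hp
  have hγ0 : 0 < γ := lt_trans hp0 hγp
  have hgp : 0 < γ / p := div_pos hγ0 hp0
  have main : ∀ n k m, m - k ≤ n → k ≤ m → m ≤ K → ω k m ≤ δ →
      a k m ≤ L * ω k m ^ (γ / p) := by
    intro n
    induction n with
    | zero =>
      intro k m hn hkm hmK hωδ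
      have hmk : m = k := le_antisymm (by omega) hkm
      subst hmk
      rw [ha0 m hmK]
      exact mul_nonneg hL.le (Real.rpow_nonneg (hωnonneg m m le_rfl hmK) _)
    | succ n ih =>
      intro k m hn hkm hmK hωδ
      have hω0 : 0 ≤ ω k m := hωnonneg k m hkm hmK
      rcases eq_or_lt_of_le hkm with h | hlt
      · subst h
        rw [ha0 k hmK]
        exact mul_nonneg hL.le (Real.rpow_nonneg hω0 _)
      rcases Nat.lt_or_ge 1 (m - k) with hone | hone
      · obtain ⟨l, hkl, hlm, hω1, hω2, hsum⟩ := hsplit k m hlt hmK hone hωδ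
        have hlK : l ≤ K := le_trans (le_of_lt hlm) hmK
        have hω1' : 0 ≤ ω k l := hωnonneg k l hkl hlK
        have hω2' : 0 ≤ ω (l+1) m := hωnonneg (l+1) m hlm hmK
        have h1 : a k l ≤ L * ω k l ^ (γ / p) :=
          ih k l (by omega) hkl hlK (le_trans hω1 (by linarith))
        have h2 : a (l+1) m ≤ L * ω (l+1) m ^ (γ / p) :=
          ih (l+1) m (by omega) hlm hmK (le_trans hω2 (by linarith))
        have hb1 : ω k l ^ (γ / p) ≤ (ω k m / 2) ^ (γ / p) :=
          Real.rpow_le_rpow hω1' hω1 (le_of_lt hgp)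
        have hb2 : ω (l+1) m ^ (γ / p) ≤ (ω k m / 2) ^ (γ / p) :=
          Real.rpow_le_rpow hω2' hω2 (le_of_lt hgp)
        have hhalf : (ω k m / 2) ^ (γ / p) = (2:ℝ) ^ (-(γ / p)) * ω k m ^ (γ / p) := by
          rw [div_eq_mul_inv, Real.mul_rpow hω0 (by norm_num),
            Real.inv_rpow (by norm_num), ← Real.rpow_neg (by norm_num)]
          ring
        have hrpow : (2:ℝ) ^ (1 - γ / p) = 2 * (2:ℝ) ^ (-(γ / p)) := by
          rw [show (1 : ℝ) - γ / p = 1 + (-(γ / p)) by ring,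
            Real.rpow_add (by norm_num), Real.rpow_one]
        have hωpow : 0 ≤ ω k m ^ (γ / p) := Real.rpow_nonneg hω0 _
        have key : 2 * L * ((2:ℝ) ^ (-(γ / p)) * ω k m ^ (γ / p)) + 2 * B₂ * ω k m ^ (γ / p)
            ≤ L * ω k m ^ (γ / p) := by
          have := mul_le_mul_of_nonneg_right hL2 hωpow
          rw [hrpow] at this
          nlinarith [hωpow]
        calc a k m ≤ a k l + a (l+1) m + 2 * B₂ * ω k m ^ (γ / p) := hsum
          _ ≤ L * ((2:ℝ) ^ (-(γ / p)) * ω k m ^ (γ / p))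
              + L * ((2:ℝ) ^ (-(γ / p)) * ω k m ^ (γ / p)) + 2 * B₂ * ω k m ^ (γ / p) := by
            have := hhalf ▸ hb1
            have := hhalf ▸ hb2
            have e1 : a k l ≤ L * ((2:ℝ) ^ (-(γ / p)) * ω k m ^ (γ / p)) :=
              le_trans h1 (mul_le_mul_of_nonneg_left (hhalf ▸ hb1) (le_of_lt hL))
            have e2 : a (l+1) m ≤ L * ((2:ℝ) ^ (-(γ / p)) * ω k m ^ (γ / p)) :=
              le_trans h2 (mul_le_mul_of_nonneg_left (hhalf ▸ hb2) (le_of_lt hL))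
            linarith
          _ ≤ L * ω k m ^ (γ / p) := by linarith [key]
      · have hm1 : m = k + 1 := by omega
        subst hm1
        rw [ha1 k hmK]
        exact mul_nonneg hL.le (Real.rpow_nonneg hω0 _)
  intro k m hkm hmK hωδ
  exact main (m - k) k m le_rfl hkm hmK hωδ
end
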